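/- arXiv:hep-th/9611053 — 6 statements merged into one kernel-verified Lean document; each statement's English description precedes it below -/
import Mathlib

section
/- Let k ≥ 3 and let L : ℤ → ℚ satisfy L_m = 0 unless 0 ≤ m ≤ k−1, Σ_{m=0}^{k−1} L_m = k^k, and L_0 = L_{k−1} = k!. Define the families L^{N,2}, L^{N,3} for all N ≥ k by the downward iteration of the Fano recursion. Then γ^{k+1,k,1}_0 = k^k and γ^{k+1,k,2}_0 = γ^{k+1,k,3}_0 = 0, where the γ's at parameters (N, k) = (k+1, k) are computed from the family (L^1 = L, L^2 = L^{k+1,2}, L^3 = L^{k+1,3}). Equivalently: for an index-one Fano hypersurface whose line constants are L^{k+1,1}_m = L_m − k! (1 ≤ m ≤ k−2) and whose conic and cubic constants are L^{k+1,2}, L^{k+1,3}, replacing the generator O_e by F := O_e + k!q (so the degree-1 constants become L̃^1_m = L^{k+1,1}_m + k! = L_m) makes the main relation F^k − k^k F^{k−1} q = 0 hold modulo q^4. -/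
/-- The closed-formula coefficient `γ^{N,k,d}_m` from the paper. -/
noncomputable def gammaCoeff (N k : ℤ) (L : ℕ → ℤ → ℚ) (d : ℕ) (m : ℤ) : ℚ :=
  ∑ l ∈ Finset.Icc 1 d,
    (-1 : ℚ) ^ (l - 1) *
      ∑ dv ∈ (Fintype.piFinset fun _ : Fin l => Finset.Icc 1 d).filter
          (fun dv => ∑ i, dv i = d),
        ∑ jv ∈ (Fintype.piFinset fun _ : Fin l => Finset.Icc m (N - 1 - (N - k) * d)).filter
            (fun jv => ∀ a b : Fin l, a ≤ b → jv a ≤ jv b),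
          ∏ i : Fin l, L (dv i) (jv i + (∑ n ∈ Finset.Iio i, (dv n : ℤ)) * (N - k))

/-- Downward iteration of the degree-2 Fano recursion, as a function of the number of
steps `t = 2k − N` below the range `N ≥ 2k` where the constants vanish. -/
def iter2 (k : ℤ) (L : ℤ → ℚ) : ℕ → ℤ → ℚ
  | 0, _ => 0
  | t + 1, m =>
      (1/2) * (iter2 k L t (m - 1) + iter2 k L t m
        + 2 * L m * L (m + ((2 * k - ((t : ℤ) + 1)) - k)))

/-- Downward iteration of the degree-3 Fano recursion. -/
def iter3 (k : ℤ) (L : ℤ → ℚ) : ℕ → ℤ → ℚ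
  | 0, _ => 0
  | t + 1, m =>
      (1/18) * (4 * iter3 k L t (m - 2) + 10 * iter3 k L t (m - 1) + 4 * iter3 k L t m
        + 12 * iter2 k L t (m - 1) * L (m + 2 * ((2 * k - ((t : ℤ) + 1)) - k))
        + 9 * iter2 k L t m * L (m + 2 * ((2 * k - ((t : ℤ) + 1)) - k))
        + 6 * iter2 k L t m * L (m + 1 + 2 * ((2 * k - ((t : ℤ) + 1)) - k))
        + 6 * L (m - 1) * iter2 k L t (m - 1 + ((2 * k - ((t : ℤ) + 1)) - k))
        + 9 * L m * iter2 k L t (m - 1 + ((2 * k - ((t : ℤ) + 1)) - k))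
        + 12 * L m * iter2 k L t (m + ((2 * k - ((t : ℤ) + 1)) - k))
        + 18 * L m * L (m + ((2 * k - ((t : ℤ) + 1)) - k))
            * L (m + 2 * ((2 * k - ((t : ℤ) + 1)) - k)))

/-- The conic constants `L^{N,2}` obtained by downward iteration of the Fano recursion. -/
def LN2 (k : ℤ) (L : ℤ → ℚ) (N : ℤ) (m : ℤ) : ℚ := iter2 k L (2 * k - N).toNat m

/-- The cubic constants `L^{N,3}` obtained by downward iteration of the Fano recursion. -/
def LN3 (k : ℤ) (L : ℤ → ℚ) (N : ℤ) (m : ℤ) : ℚ := iter3 k L (2 * k - N).toNat m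

/-- The family `(L^1 = L, L^2 = L^{N,2}, L^3 = L^{N,3})` of structural constants. -/
def famN (k : ℤ) (L : ℤ → ℚ) (N : ℤ) : ℕ → ℤ → ℚ :=
  fun d m => if d = 1 then L m else if d = 2 then LN2 k L N m
    else if d = 3 then LN3 k L N m else 0




lemma fin1_eta (g : Fin 1 → ℤ) : ![g 0] = g := by funext i; fin_cases i; rfl
lemma fin2_eta (g : Fin 2 → ℤ) : ![g 0, g 1] = g := by funext i; fin_cases i <;> rfl
lemma fin3_eta (g : Fin 3 → ℤ) : ![g 0, g 1, g 2] = g := by funext i; fin_cases i <;> rfl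
lemma fin1_etaN (g : Fin 1 → ℕ) : ![g 0] = g := by funext i; fin_cases i; rfl
lemma fin2_etaN (g : Fin 2 → ℕ) : ![g 0, g 1] = g := by funext i; fin_cases i <;> rfl
lemma fin3_etaN (g : Fin 3 → ℕ) : ![g 0, g 1, g 2] = g := by funext i; fin_cases i <;> rfl

lemma sum_piFinset_one (S : Finset ℤ) (f : (Fin 1 → ℤ) → ℚ) :
    ∑ g ∈ Fintype.piFinset (fun _ : Fin 1 => S), f g = ∑ x ∈ S, f ![x] := by
  refine Finset.sum_bij' (fun g _ => g 0) (fun x _ => ![x]) ?_ ?_ ?_ ?_ ?_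
  · intro g hg; exact (Fintype.mem_piFinset.1 hg) 0
  · intro x hx; exact Fintype.mem_piFinset.2 fun i => by fin_cases i; simpa
  · intro g hg; exact fin1_eta g
  · intro x hx; rfl
  · intro g hg; rw [fin1_eta]

lemma sum_piFinset_oneN (S : Finset ℕ) (f : (Fin 1 → ℕ) → ℚ) :
    ∑ g ∈ Fintype.piFinset (fun _ : Fin 1 => S), f g = ∑ x ∈ S, f ![x] := by
  refine Finset.sum_bij' (fun g _ => g 0) (fun x _ => ![x]) ?_ ?_ ?_ ?_ ?_
  · intro g hg; exact (Fintype.mem_piFinset.1 hg) 0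
  · intro x hx; exact Fintype.mem_piFinset.2 fun i => by fin_cases i; simpa
  · intro g hg; exact fin1_etaN g
  · intro x hx; rfl
  · intro g hg; rw [fin1_etaN]

lemma sum_piFinset_two (S : Finset ℤ) (f : (Fin 2 → ℤ) → ℚ) :
    ∑ g ∈ Fintype.piFinset (fun _ : Fin 2 => S), f g = ∑ x ∈ S, ∑ y ∈ S, f ![x, y] := by
  rw [← Finset.sum_product']
  refine Finset.sum_bij' (fun g _ => (g 0, g 1)) (fun p _ => ![p.1, p.2]) ?_ ?_ ?_ ?_ ?_
  · intro g hg
    exact Finset.mem_product.2 ⟨(Fintype.mem_piFinset.1 hg) 0, (Fintype.mem_piFinset.1 hg) 1⟩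
  · intro p hp
    have h := Finset.mem_product.1 hp
    exact Fintype.mem_piFinset.2 fun i => by fin_cases i <;> simp [h.1, h.2]
  · intro g hg; exact fin2_eta g
  · intro p hp; rfl
  · intro g hg; rw [fin2_eta]

lemma sum_piFinset_twoN (S : Finset ℕ) (f : (Fin 2 → ℕ) → ℚ) :
    ∑ g ∈ Fintype.piFinset (fun _ : Fin 2 => S), f g = ∑ x ∈ S, ∑ y ∈ S, f ![x, y] := by
  rw [← Finset.sum_product']
  refine Finset.sum_bij' (fun g _ => (g 0, g 1)) (fun p _ => ![p.1, p.2]) ?_ ?_ ?_ ?_ ?_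
  · intro g hg
    exact Finset.mem_product.2 ⟨(Fintype.mem_piFinset.1 hg) 0, (Fintype.mem_piFinset.1 hg) 1⟩
  · intro p hp
    have h := Finset.mem_product.1 hp
    exact Fintype.mem_piFinset.2 fun i => by fin_cases i <;> simp [h.1, h.2]
  · intro g hg; exact fin2_etaN g
  · intro p hp; rfl
  · intro g hg; rw [fin2_etaN]

lemma sum_piFinset_three (S : Finset ℤ) (f : (Fin 3 → ℤ) → ℚ) :
    ∑ g ∈ Fintype.piFinset (fun _ : Fin 3 => S), f g
      = ∑ x ∈ S, ∑ y ∈ S, ∑ z ∈ S, f ![x, y, z] := by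
  rw [← Finset.sum_product', ← Finset.sum_product']
  refine Finset.sum_bij' (fun g _ => ((g 0, g 1), g 2)) (fun p _ => ![p.1.1, p.1.2, p.2])
    ?_ ?_ ?_ ?_ ?_
  · intro g hg
    have h := Fintype.mem_piFinset.1 hg
    exact Finset.mem_product.2 ⟨Finset.mem_product.2 ⟨h 0, h 1⟩, h 2⟩
  · intro p hp
    have h := Finset.mem_product.1 hp
    have h1 := Finset.mem_product.1 h.1
    exact Fintype.mem_piFinset.2 fun i => by fin_cases i <;> simp [h1.1, h1.2, h.2]
  · intro g hg; exact fin3_eta g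
  · intro p hp; rfl
  · intro g hg; rw [fin3_eta]

lemma sum_piFinset_threeN (S : Finset ℕ) (f : (Fin 3 → ℕ) → ℚ) :
    ∑ g ∈ Fintype.piFinset (fun _ : Fin 3 => S), f g
      = ∑ x ∈ S, ∑ y ∈ S, ∑ z ∈ S, f ![x, y, z] := by
  rw [← Finset.sum_product', ← Finset.sum_product']
  refine Finset.sum_bij' (fun g _ => ((g 0, g 1), g 2)) (fun p _ => ![p.1.1, p.1.2, p.2])
    ?_ ?_ ?_ ?_ ?_
  · intro g hg
    have h := Fintype.mem_piFinset.1 hg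
    exact Finset.mem_product.2 ⟨Finset.mem_product.2 ⟨h 0, h 1⟩, h 2⟩
  · intro p hp
    have h := Finset.mem_product.1 hp
    have h1 := Finset.mem_product.1 h.1
    exact Fintype.mem_piFinset.2 fun i => by fin_cases i <;> simp [h1.1, h1.2, h.2]
  · intro g hg; exact fin3_etaN g
  · intro p hp; rfl
  · intro g hg; rw [fin3_etaN]

lemma mono1 (jv : Fin 1 → ℤ) : (∀ a b : Fin 1, a ≤ b → jv a ≤ jv b) := by
  intro a b _; fin_cases a <;> fin_cases b <;> exact le_rfl

lemma mono2 (jv : Fin 2 → ℤ) :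
    (∀ a b : Fin 2, a ≤ b → jv a ≤ jv b) ↔ jv 0 ≤ jv 1 := by
  constructor
  · intro h; exact h 0 1 (by decide)
  · intro h a b hab
    fin_cases a <;> fin_cases b <;> first | exact le_rfl | exact h | exact absurd hab (by decide)

lemma mono3 (jv : Fin 3 → ℤ) :
    (∀ a b : Fin 3, a ≤ b → jv a ≤ jv b) ↔ jv 0 ≤ jv 1 ∧ jv 1 ≤ jv 2 := by
  constructor
  · intro h; exact ⟨h 0 1 (by decide), h 1 2 (by decide)⟩
  · rintro ⟨h1, h2⟩ a b hab
    fin_cases a <;> fin_cases b <;>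
      first | exact le_rfl | exact h1 | exact h2 | exact le_trans h1 h2 | exact absurd hab (by decide)

lemma filter_le_Icc (lo hi x : ℤ) (h : lo ≤ x) :
    (Finset.Icc lo hi).filter (fun y => x ≤ y) = Finset.Icc x hi := by
  ext y; simp only [Finset.mem_filter, Finset.mem_Icc]; omega

lemma jv_one (Tm T : ℤ) (f : ℤ → ℚ) :
    ∑ jv ∈ (Fintype.piFinset fun _ : Fin 1 => Finset.Icc Tm T).filter
        (fun jv => ∀ a b : Fin 1, a ≤ b → jv a ≤ jv b), f (jv 0)
      = ∑ j ∈ Finset.Icc Tm T, f j := by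
  rw [Finset.filter_true_of_mem (fun jv _ => mono1 jv), sum_piFinset_one]
  simp only [Matrix.cons_val_zero]

lemma jv_two (Tm T : ℤ) (f : ℤ → ℤ → ℚ) :
    ∑ jv ∈ (Fintype.piFinset fun _ : Fin 2 => Finset.Icc Tm T).filter
        (fun jv => ∀ a b : Fin 2, a ≤ b → jv a ≤ jv b), f (jv 0) (jv 1)
      = ∑ j1 ∈ Finset.Icc Tm T, ∑ j2 ∈ Finset.Icc j1 T, f j1 j2 := by
  rw [Finset.sum_filter, sum_piFinset_two]
  refine Finset.sum_congr rfl fun x hx => ?_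
  have hx' := (Finset.mem_Icc.1 hx).1
  simp only [mono2, Matrix.cons_val_zero, Matrix.cons_val_one, Matrix.head_cons]
  rw [← Finset.sum_filter, filter_le_Icc _ _ _ hx']

lemma jv_three (Tm T : ℤ) (f : ℤ → ℤ → ℤ → ℚ) :
    ∑ jv ∈ (Fintype.piFinset fun _ : Fin 3 => Finset.Icc Tm T).filter
        (fun jv => ∀ a b : Fin 3, a ≤ b → jv a ≤ jv b), f (jv 0) (jv 1) (jv 2)
      = ∑ j1 ∈ Finset.Icc Tm T, ∑ j2 ∈ Finset.Icc j1 T, ∑ j3 ∈ Finset.Icc j2 T, f j1 j2 j3 := by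
  rw [Finset.sum_filter, sum_piFinset_three]
  refine Finset.sum_congr rfl fun x hx => ?_
  have hx' := (Finset.mem_Icc.1 hx).1
  simp only [mono3, Matrix.cons_val_zero, Matrix.cons_val_one, Matrix.head_cons,
    Matrix.cons_val_two, Matrix.tail_cons, ite_and]
  have hpull : ∀ x1 : ℤ, (∑ x2 ∈ Finset.Icc Tm T,
      if x ≤ x1 then (if x1 ≤ x2 then f x x1 x2 else 0) else 0)
      = if x ≤ x1 then (∑ x2 ∈ Finset.Icc Tm T, if x1 ≤ x2 then f x x1 x2 else 0) else 0 := by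
    intro x1; split <;> simp
  simp only [hpull]
  rw [← Finset.sum_filter, filter_le_Icc _ _ _ hx']
  refine Finset.sum_congr rfl fun y hy => ?_
  have hy' := (Finset.mem_Icc.1 hy).1
  rw [← Finset.sum_filter, filter_le_Icc _ _ _ (le_trans hx' hy')]
lemma dv_one (S : Finset ℕ) (p : (Fin 1 → ℕ) → Prop) [DecidablePred p]
    (f : (Fin 1 → ℕ) → ℚ) :
    ∑ dv ∈ (Fintype.piFinset fun _ : Fin 1 => S).filter p, f dv
      = ∑ x ∈ S, if p ![x] then f ![x] else 0 := by
  rw [Finset.sum_filter, sum_piFinset_oneN]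

lemma dv_two (S : Finset ℕ) (p : (Fin 2 → ℕ) → Prop) [DecidablePred p]
    (f : (Fin 2 → ℕ) → ℚ) :
    ∑ dv ∈ (Fintype.piFinset fun _ : Fin 2 => S).filter p, f dv
      = ∑ x ∈ S, ∑ y ∈ S, if p ![x, y] then f ![x, y] else 0 := by
  rw [Finset.sum_filter, sum_piFinset_twoN]

lemma dv_three (S : Finset ℕ) (p : (Fin 3 → ℕ) → Prop) [DecidablePred p]
    (f : (Fin 3 → ℕ) → ℚ) :
    ∑ dv ∈ (Fintype.piFinset fun _ : Fin 3 => S).filter p, f dv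
      = ∑ x ∈ S, ∑ y ∈ S, ∑ z ∈ S, if p ![x, y, z] then f ![x, y, z] else 0 := by
  rw [Finset.sum_filter, sum_piFinset_threeN]

lemma sum12 (f : ℕ → ℚ) : ∑ x ∈ Finset.Icc 1 2, f x = f 1 + f 2 := by
  rw [show Finset.Icc (1:ℕ) 2 = {1, 2} by decide, Finset.sum_insert (by decide),
    Finset.sum_singleton]

lemma sum123 (f : ℕ → ℚ) : ∑ x ∈ Finset.Icc 1 3, f x = f 1 + f 2 + f 3 := by
  rw [show Finset.Icc (1:ℕ) 3 = {1, 2, 3} by decide, Finset.sum_insert (by decide),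
    Finset.sum_insert (by decide), Finset.sum_singleton]
  ring
lemma gamma_one (N k m : ℤ) (F : ℕ → ℤ → ℚ) :
    gammaCoeff N k F 1 m = ∑ j ∈ Finset.Icc m (N - 1 - (N - k)), F 1 j := by
  unfold gammaCoeff
  rw [show Finset.Icc (1:ℕ) 1 = {1} from rfl, Finset.sum_singleton, Finset.sum_filter,
    sum_piFinset_oneN, Finset.sum_singleton,
    Finset.filter_true_of_mem (fun jv _ => mono1 jv), sum_piFinset_one]
  simp only [Fin.sum_univ_one, Matrix.cons_val_zero, Fin.prod_univ_one,
    show Finset.Iio (0 : Fin 1) = ∅ from by decide, Finset.sum_empty, zero_mul, add_zero,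
    if_pos rfl, if_true, Nat.cast_one, mul_one]
  norm_num

lemma gamma_two (N k m : ℤ) (F : ℕ → ℤ → ℚ) :
    gammaCoeff N k F 2 m
      = (∑ j ∈ Finset.Icc m (N - 1 - (N - k) * 2), F 2 j)
        - ∑ j1 ∈ Finset.Icc m (N - 1 - (N - k) * 2),
            ∑ j2 ∈ Finset.Icc j1 (N - 1 - (N - k) * 2), F 1 j1 * F 1 (j2 + (N - k)) := by
  unfold gammaCoeff
  rw [sum12, dv_one, dv_two, sum12, sum12, sum12, sum12]
  simp only [Fin.sum_univ_one, Fin.sum_univ_two, Matrix.cons_val_zero, Matrix.cons_val_one,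
    Matrix.head_cons]
  simp only [eq_false (show ¬(1:ℕ) = 2 by norm_num), eq_true (show (2:ℕ) = 2 from rfl),
    eq_true (show (1:ℕ) + 1 = 2 from rfl), eq_false (show ¬(1:ℕ) + 2 = 2 by norm_num),
    eq_false (show ¬(2:ℕ) + 1 = 2 by norm_num), eq_false (show ¬(2:ℕ) + 2 = 2 by norm_num),
    if_true, if_false, add_zero, zero_add]
  simp only [Fin.prod_univ_one, Fin.prod_univ_two, Matrix.cons_val_zero, Matrix.cons_val_one,
    Matrix.head_cons, show Finset.Iio (0 : Fin 1) = ∅ from by decide,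
    show Finset.Iio (0 : Fin 2) = ∅ from by decide,
    show Finset.Iio (1 : Fin 2) = {0} from by decide,
    Finset.sum_empty, Finset.sum_singleton, zero_mul, add_zero, Nat.cast_one, one_mul,
    Nat.cast_ofNat]
  rw [jv_one, jv_two m (N - 1 - (N - k) * 2) (fun j1 j2 => F 1 j1 * F 1 (j2 + (N - k)))]
  norm_num
  ring

lemma gamma_three (N k m : ℤ) (F : ℕ → ℤ → ℚ) :
    gammaCoeff N k F 3 m
      = (∑ j ∈ Finset.Icc m (N - 1 - (N - k) * 3), F 3 j)
        - (∑ j1 ∈ Finset.Icc m (N - 1 - (N - k) * 3),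
            ∑ j2 ∈ Finset.Icc j1 (N - 1 - (N - k) * 3), F 1 j1 * F 2 (j2 + (N - k)))
        - (∑ j1 ∈ Finset.Icc m (N - 1 - (N - k) * 3),
            ∑ j2 ∈ Finset.Icc j1 (N - 1 - (N - k) * 3), F 2 j1 * F 1 (j2 + 2 * (N - k)))
        + ∑ j1 ∈ Finset.Icc m (N - 1 - (N - k) * 3),
            ∑ j2 ∈ Finset.Icc j1 (N - 1 - (N - k) * 3),
              ∑ j3 ∈ Finset.Icc j2 (N - 1 - (N - k) * 3),
                F 1 j1 * F 1 (j2 + (N - k)) * F 1 (j3 + 2 * (N - k)) := by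
  unfold gammaCoeff
  simp only [sum123]
  rw [dv_one, dv_two, dv_three]
  simp only [sum123]
  simp only [Fin.sum_univ_one, Fin.sum_univ_two, Fin.sum_univ_three, Matrix.cons_val_zero,
    Matrix.cons_val_one, Matrix.head_cons, Matrix.cons_val_two, Matrix.tail_cons]
  simp only [eq_false (show ¬(1:ℕ) = 3 by norm_num),
    eq_false (show ¬(2:ℕ) = 3 by norm_num),
    eq_true (show (3:ℕ) = 3 from rfl),
    eq_false (show ¬(1:ℕ) + 1 = 3 by norm_num),
    eq_true (show (1:ℕ) + 2 = 3 from rfl),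
    eq_false (show ¬(1:ℕ) + 3 = 3 by norm_num),
    eq_true (show (2:ℕ) + 1 = 3 from rfl),
    eq_false (show ¬(2:ℕ) + 2 = 3 by norm_num),
    eq_false (show ¬(2:ℕ) + 3 = 3 by norm_num),
    eq_false (show ¬(3:ℕ) + 1 = 3 by norm_num),
    eq_false (show ¬(3:ℕ) + 2 = 3 by norm_num),
    eq_false (show ¬(3:ℕ) + 3 = 3 by norm_num),
    eq_true (show (1:ℕ) + 1 + 1 = 3 from rfl),
    eq_false (show ¬(1:ℕ) + 1 + 2 = 3 by norm_num),
    eq_false (show ¬(1:ℕ) + 1 + 3 = 3 by norm_num),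
    eq_false (show ¬(1:ℕ) + 2 + 1 = 3 by norm_num),
    eq_false (show ¬(1:ℕ) + 2 + 2 = 3 by norm_num),
    eq_false (show ¬(1:ℕ) + 2 + 3 = 3 by norm_num),
    eq_false (show ¬(1:ℕ) + 3 + 1 = 3 by norm_num),
    eq_false (show ¬(1:ℕ) + 3 + 2 = 3 by norm_num),
    eq_false (show ¬(1:ℕ) + 3 + 3 = 3 by norm_num),
    eq_false (show ¬(2:ℕ) + 1 + 1 = 3 by norm_num),
    eq_false (show ¬(2:ℕ) + 1 + 2 = 3 by norm_num),
    eq_false (show ¬(2:ℕ) + 1 + 3 = 3 by norm_num),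
    eq_false (show ¬(2:ℕ) + 2 + 1 = 3 by norm_num),
    eq_false (show ¬(2:ℕ) + 2 + 2 = 3 by norm_num),
    eq_false (show ¬(2:ℕ) + 2 + 3 = 3 by norm_num),
    eq_false (show ¬(2:ℕ) + 3 + 1 = 3 by norm_num),
    eq_false (show ¬(2:ℕ) + 3 + 2 = 3 by norm_num),
    eq_false (show ¬(2:ℕ) + 3 + 3 = 3 by norm_num),
    eq_false (show ¬(3:ℕ) + 1 + 1 = 3 by norm_num),
    eq_false (show ¬(3:ℕ) + 1 + 2 = 3 by norm_num),
    eq_false (show ¬(3:ℕ) + 1 + 3 = 3 by norm_num),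
    eq_false (show ¬(3:ℕ) + 2 + 1 = 3 by norm_num),
    eq_false (show ¬(3:ℕ) + 2 + 2 = 3 by norm_num),
    eq_false (show ¬(3:ℕ) + 2 + 3 = 3 by norm_num),
    eq_false (show ¬(3:ℕ) + 3 + 1 = 3 by norm_num),
    eq_false (show ¬(3:ℕ) + 3 + 2 = 3 by norm_num),
    eq_false (show ¬(3:ℕ) + 3 + 3 = 3 by norm_num),
    if_true, if_false, add_zero, zero_add]
  simp only [Fin.prod_univ_one, Fin.prod_univ_two, Fin.prod_univ_three, Matrix.cons_val_zero,
    Matrix.cons_val_one, Matrix.head_cons, Matrix.cons_val_two, Matrix.tail_cons,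
    show Finset.Iio (0 : Fin 1) = ∅ from by decide,
    show Finset.Iio (0 : Fin 2) = ∅ from by decide,
    show Finset.Iio (1 : Fin 2) = {0} from by decide,
    show Finset.Iio (0 : Fin 3) = ∅ from by decide,
    show Finset.Iio (1 : Fin 3) = {0} from by decide,
    show Finset.Iio (2 : Fin 3) = ({0, 1} : Finset (Fin 3)) from by decide,
    Finset.sum_empty, Finset.sum_singleton, Finset.sum_insert (show (0 : Fin 3) ∉ ({1} : Finset (Fin 3)) from by decide),
    zero_mul, add_zero, Nat.cast_one, one_mul, Nat.cast_ofNat]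
  rw [jv_one, jv_two m (N - 1 - (N - k) * 3) (fun j1 j2 => F 1 j1 * F 2 (j2 + (N - k))),
    jv_two m (N - 1 - (N - k) * 3) (fun j1 j2 => F 2 j1 * F 1 (j2 + 2 * (N - k))),
    jv_three m (N - 1 - (N - k) * 3)
      (fun j1 j2 j3 => F 1 j1 * F 1 (j2 + (N - k)) * F 1 (j3 + (1 + 1) * (N - k)))]
  norm_num
  norm_num
  ring

open Finset in
lemma sum_shiftQ (f : ℤ → ℚ) (a lo hi : ℤ) :
    ∑ j ∈ Finset.Icc lo hi, f (j + a) = ∑ j ∈ Finset.Icc (lo + a) (hi + a), f j := by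
  rw [← Finset.map_add_right_Icc, Finset.sum_map]
  rfl

open Finset in
lemma sum_winQ (f : ℤ → ℚ) {lo hi lo' hi' : ℤ}
    (h : ∀ j, f j ≠ 0 → (lo ≤ j ∧ j ≤ hi) ∧ (lo' ≤ j ∧ j ≤ hi')) :
    ∑ j ∈ Finset.Icc lo hi, f j = ∑ j ∈ Finset.Icc lo' hi', f j := by
  have h1 : ∑ j ∈ Finset.Icc lo hi, f j
      = ∑ j ∈ Finset.Icc (max lo lo') (min hi hi'), f j := by
    refine (Finset.sum_subset (Finset.Icc_subset_Icc (le_max_left _ _) (min_le_left _ _))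
      fun x hx hnx => ?_).symm
    by_contra hfx
    exact hnx (Finset.mem_Icc.2 ⟨max_le ((h x hfx).1.1) ((h x hfx).2.1),
      le_min ((h x hfx).1.2) ((h x hfx).2.2)⟩)
  have h2 : ∑ j ∈ Finset.Icc lo' hi', f j
      = ∑ j ∈ Finset.Icc (max lo lo') (min hi hi'), f j := by
    refine (Finset.sum_subset (Finset.Icc_subset_Icc (le_max_right _ _) (min_le_right _ _))
      fun x hx hnx => ?_).symm
    by_contra hfx
    exact hnx (Finset.mem_Icc.2 ⟨max_le ((h x hfx).1.1) ((h x hfx).2.1),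
      le_min ((h x hfx).1.2) ((h x hfx).2.2)⟩)
  rw [h1, h2]

lemma sum_Icc_consQ (f : ℤ → ℚ) {lo hi : ℤ} (h : hi < lo → f lo = 0) :
    ∑ j ∈ Finset.Icc lo hi, f j = f lo + ∑ j ∈ Finset.Icc (lo + 1) hi, f j := by
  rcases le_or_gt lo hi with h' | h'
  · have hi1 : Finset.Icc lo hi = insert lo (Finset.Icc (lo + 1) hi) := by
      ext x; simp only [Finset.mem_Icc, Finset.mem_insert]; omega
    rw [hi1, Finset.sum_insert (by simp only [Finset.mem_Icc]; omega)]
  · rw [Finset.Icc_eq_empty (by omega), Finset.Icc_eq_empty (show ¬ lo + 1 ≤ hi by omega)]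
    simp [h h']

lemma sum_Icc_snocQ (f : ℤ → ℚ) {lo hi : ℤ} (h : hi < lo → f hi = 0) :
    ∑ j ∈ Finset.Icc lo hi, f j = (∑ j ∈ Finset.Icc lo (hi - 1), f j) + f hi := by
  rcases le_or_gt lo hi with h' | h'
  · have hi1 : Finset.Icc lo hi = insert hi (Finset.Icc lo (hi - 1)) := by
      ext x; simp only [Finset.mem_Icc, Finset.mem_insert]; omega
    rw [hi1, Finset.sum_insert (by simp only [Finset.mem_Icc]; omega), add_comm]
  · rw [Finset.Icc_eq_empty (by omega), Finset.Icc_eq_empty (show ¬ lo ≤ hi - 1 by omega)]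
    simp [h h']

lemma step2 (L A A2 : ℤ → ℚ) (T e m : ℤ) (hm : m ≤ 0)
    (hA : ∀ j, A j ≠ 0 → 0 ≤ j ∧ j ≤ T - 1)
    (hA2 : ∀ j, A2 j = (1/2) * (A (j - 1) + A j + 2 * L j * L (j + e))) :
    (∑ j ∈ Finset.Icc m T, A2 j)
      - ∑ j1 ∈ Finset.Icc m T, ∑ j2 ∈ Finset.Icc j1 T, L j1 * L (j2 + e)
    = (∑ j ∈ Finset.Icc m (T - 1), A j)
      - ∑ j1 ∈ Finset.Icc m (T - 1), ∑ j2 ∈ Finset.Icc j1 (T - 1), L j1 * L (j2 + (e + 1)) := by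
  have hsplit : ∑ j ∈ Finset.Icc m T, A2 j
      = (1/2) * (∑ j ∈ Finset.Icc m T, A (j - 1)) + (1/2) * (∑ j ∈ Finset.Icc m T, A j)
        + ∑ j ∈ Finset.Icc m T, L j * L (j + e) := by
    rw [Finset.mul_sum, Finset.mul_sum, ← Finset.sum_add_distrib, ← Finset.sum_add_distrib]
    exact Finset.sum_congr rfl fun j _ => by rw [hA2 j]; ring
  have h1 : ∑ j ∈ Finset.Icc m T, A (j - 1) = ∑ j ∈ Finset.Icc m (T - 1), A j := by
    have hs : ∑ j ∈ Finset.Icc m T, A (j + (-1))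
        = ∑ j ∈ Finset.Icc (m + (-1)) (T + (-1)), A j := sum_shiftQ A (-1) m T
    rw [show (∑ j ∈ Finset.Icc m T, A (j - 1)) = ∑ j ∈ Finset.Icc m T, A (j + (-1)) from
      Finset.sum_congr rfl fun j _ => by rw [show j - 1 = j + (-1) by ring], hs]
    exact sum_winQ A fun j hj => by have := hA j hj; omega
  have h2 : ∑ j ∈ Finset.Icc m T, A j = ∑ j ∈ Finset.Icc m (T - 1), A j :=
    sum_winQ A fun j hj => by have := hA j hj; omega
  have hinner : ∀ j1 ∈ Finset.Icc m T,
      (∑ j2 ∈ Finset.Icc j1 T, L j1 * L (j2 + e))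
        = L j1 * L (j1 + e) + ∑ j2 ∈ Finset.Icc j1 (T - 1), L j1 * L (j2 + (e + 1)) := by
    intro j1 hj1
    obtain ⟨hj1l, hj1r⟩ := Finset.mem_Icc.1 hj1
    rw [sum_Icc_consQ _ (fun h => absurd hj1r (by omega))]
    congr 1
    have hs : ∑ j2 ∈ Finset.Icc j1 (T - 1), (fun x => L j1 * L (x + e)) (j2 + 1)
        = ∑ j2 ∈ Finset.Icc (j1 + 1) (T - 1 + 1), (fun x => L j1 * L (x + e)) j2 :=
      sum_shiftQ (fun x => L j1 * L (x + e)) 1 j1 (T - 1)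
    rw [show T - 1 + 1 = T by ring] at hs
    rw [← hs]
    exact Finset.sum_congr rfl fun j2 _ => by
      show L j1 * L (j2 + 1 + e) = L j1 * L (j2 + (e + 1))
      rw [show j2 + 1 + e = j2 + (e + 1) by ring]
  have hpair : (∑ j1 ∈ Finset.Icc m T, ∑ j2 ∈ Finset.Icc j1 T, L j1 * L (j2 + e))
      = (∑ j1 ∈ Finset.Icc m (T - 1), ∑ j2 ∈ Finset.Icc j1 (T - 1), L j1 * L (j2 + (e + 1)))
        + ∑ j ∈ Finset.Icc m T, L j * L (j + e) := by
    rw [Finset.sum_congr rfl hinner, Finset.sum_add_distrib]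
    have houter : (∑ j1 ∈ Finset.Icc m T, ∑ j2 ∈ Finset.Icc j1 (T - 1), L j1 * L (j2 + (e + 1)))
        = ∑ j1 ∈ Finset.Icc m (T - 1), ∑ j2 ∈ Finset.Icc j1 (T - 1), L j1 * L (j2 + (e + 1)) := by
      rw [sum_Icc_snocQ (fun j1 => ∑ j2 ∈ Finset.Icc j1 (T - 1), L j1 * L (j2 + (e + 1)))
        (fun _ => by
          show (∑ j2 ∈ Finset.Icc T (T - 1), L T * L (j2 + (e + 1))) = 0
          rw [Finset.Icc_eq_empty (show ¬ T ≤ T - 1 by omega), Finset.sum_empty]),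
        Finset.Icc_eq_empty (show ¬ T ≤ T - 1 by omega), Finset.sum_empty, add_zero]
    rw [houter]
    ring
  rw [hsplit, h1, h2, hpair]
  ring

lemma iter2_supp (k : ℤ) (L : ℤ → ℚ) (hL : ∀ j, L j ≠ 0 → 0 ≤ j ∧ j ≤ k - 1) :
    ∀ t : ℕ, ∀ m : ℤ, iter2 k L t m ≠ 0 → 0 ≤ m ∧ m ≤ (t : ℤ) - 1 := by
  intro t
  induction t with
  | zero => intro m hm; exact absurd rfl hm
  | succ t ih =>
      intro m hm
      by_contra hc
      apply hm
      show (1/2) * (iter2 k L t (m - 1) + iter2 k L t m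
        + 2 * L m * L (m + ((2 * k - ((t : ℤ) + 1)) - k))) = 0
      have h1 : iter2 k L t (m - 1) = 0 := by
        by_contra h; have := ih _ h; push_cast at hc ⊢; omega
      have h2 : iter2 k L t m = 0 := by
        by_contra h; have := ih _ h; push_cast at hc ⊢; omega
      have h3 : L m * L (m + ((2 * k - ((t : ℤ) + 1)) - k)) = 0 := by
        by_cases hLm : L m = 0
        · rw [hLm, zero_mul]
        · have hb1 := hL m hLm
          have h4 : L (m + ((2 * k - ((t : ℤ) + 1)) - k)) = 0 := by
            by_contra h
            have hb2 := hL _ h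
            push_cast at hc
            omega
          rw [h4, mul_zero]
      rw [h1, h2, mul_assoc 2 (L m) _, h3]
      norm_num

lemma chain2 (k : ℤ) (L : ℤ → ℚ) (hL : ∀ j, L j ≠ 0 → 0 ≤ j ∧ j ≤ k - 1) :
    ∀ t : ℕ, (∑ j ∈ Finset.Icc (0:ℤ) ((t:ℤ) - 1), iter2 k L t j)
      - ∑ j1 ∈ Finset.Icc (0:ℤ) ((t:ℤ) - 1), ∑ j2 ∈ Finset.Icc j1 ((t:ℤ) - 1),
          L j1 * L (j2 + (k - (t:ℤ))) = 0 := by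
  intro t
  induction t with
  | zero =>
      rw [Finset.Icc_eq_empty (show ¬ (0:ℤ) ≤ ((0:ℕ):ℤ) - 1 by norm_num)]
      simp
  | succ t ih =>
      have hA2 : ∀ j, iter2 k L (t + 1) j
          = (1/2) * (iter2 k L t (j - 1) + iter2 k L t j
              + 2 * L j * L (j + (k - (t:ℤ) - 1))) := by
        intro j
        show (1/2) * (iter2 k L t (j - 1) + iter2 k L t j
          + 2 * L j * L (j + ((2 * k - ((t : ℤ) + 1)) - k))) = _
        rw [show (2 * k - ((t:ℤ) + 1)) - k = k - (t:ℤ) - 1 from by ring]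
      have hstep := step2 L (iter2 k L t) (iter2 k L (t + 1)) (t:ℤ) (k - (t:ℤ) - 1) 0 le_rfl
        (fun j hj => by have := iter2_supp k L hL t j hj; omega) hA2
      push_cast
      simp only [show (t:ℤ) + 1 - 1 = (t:ℤ) from by ring,
        show k - ((t:ℤ) + 1) = k - (t:ℤ) - 1 from by ring]
      rw [hstep]
      simp only [show k - (t:ℤ) - 1 + 1 = k - (t:ℤ) from by ring]
      exact ih

lemma sum_ne_imp_le (f : ℤ → ℚ) (lo hi : ℤ) (h : (∑ j ∈ Finset.Icc lo hi, f j) ≠ 0) :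
    lo ≤ hi := by
  by_contra hc
  rw [Finset.Icc_eq_empty (by omega), Finset.sum_empty] at h
  exact h rfl

section step3
variable (L A B A2 B2 : ℤ → ℚ) (T e m : ℤ)

lemma stepL1 (hm : m ≤ 0)
    (hL : ∀ j, L j ≠ 0 → 0 ≤ j ∧ j ≤ T + 2 * e)
    (hA : ∀ j, A j ≠ 0 → 0 ≤ j ∧ j ≤ T + e - 1)
    (hB : ∀ j, B j ≠ 0 → 0 ≤ j ∧ j ≤ T - 2)
    (hB2 : ∀ j, B2 j = (1/18) * (4 * B (j - 2) + 10 * B (j - 1) + 4 * B j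
        + 12 * (A (j - 1) * L (j + 2 * e)) + 9 * (A j * L (j + 2 * e))
        + 6 * (A j * L (j + 2 * e + 1))
        + 6 * (L (j - 1) * A (j - 1 + e)) + 9 * (L j * A (j + e - 1))
        + 12 * (L j * A (j + e))
        + 18 * (L j * (L (j + e) * L (j + 2 * e))))) :
    (∑ j ∈ Finset.Icc m T, B2 j)
      = (∑ j ∈ Finset.Icc m (T - 2), B j)
        + (∑ j ∈ Finset.Icc m T, A j * L (j + 2 * e + 1))
        + (1/2) * (∑ j ∈ Finset.Icc m T, A j * L (j + 2 * e))
        + (∑ j ∈ Finset.Icc m T, L j * A (j + e))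
        + (1/2) * (∑ j ∈ Finset.Icc m T, L j * A (j + e - 1))
        + (∑ j ∈ Finset.Icc m T, L j * (L (j + e) * L (j + 2 * e))) := by
  have hsplit : (∑ j ∈ Finset.Icc m T, B2 j)
      = (2/9) * (∑ j ∈ Finset.Icc m T, B (j - 2))
        + (5/9) * (∑ j ∈ Finset.Icc m T, B (j - 1))
        + (2/9) * (∑ j ∈ Finset.Icc m T, B j)
        + (2/3) * (∑ j ∈ Finset.Icc m T, A (j - 1) * L (j + 2 * e))
        + (1/2) * (∑ j ∈ Finset.Icc m T, A j * L (j + 2 * e))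
        + (1/3) * (∑ j ∈ Finset.Icc m T, A j * L (j + 2 * e + 1))
        + (1/3) * (∑ j ∈ Finset.Icc m T, L (j - 1) * A (j - 1 + e))
        + (1/2) * (∑ j ∈ Finset.Icc m T, L j * A (j + e - 1))
        + (2/3) * (∑ j ∈ Finset.Icc m T, L j * A (j + e))
        + (∑ j ∈ Finset.Icc m T, L j * (L (j + e) * L (j + 2 * e))) := by
    simp only [Finset.mul_sum, ← Finset.sum_add_distrib]
    exact Finset.sum_congr rfl fun j _ => by rw [hB2 j]; ring
  have hb2 : (∑ j ∈ Finset.Icc m T, B (j - 2)) = ∑ j ∈ Finset.Icc m (T - 2), B j := by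
    rw [show (∑ j ∈ Finset.Icc m T, B (j - 2)) = ∑ j ∈ Finset.Icc m T, B (j + (-2)) from
      Finset.sum_congr rfl fun j _ => by rw [show j - 2 = j + (-2) by ring], sum_shiftQ B (-2) m T]
    exact sum_winQ B fun j hj => by have := hB j hj; omega
  have hb1 : (∑ j ∈ Finset.Icc m T, B (j - 1)) = ∑ j ∈ Finset.Icc m (T - 2), B j := by
    rw [show (∑ j ∈ Finset.Icc m T, B (j - 1)) = ∑ j ∈ Finset.Icc m T, B (j + (-1)) from
      Finset.sum_congr rfl fun j _ => by rw [show j - 1 = j + (-1) by ring], sum_shiftQ B (-1) m T]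
    exact sum_winQ B fun j hj => by have := hB j hj; omega
  have hb0 : (∑ j ∈ Finset.Icc m T, B j) = ∑ j ∈ Finset.Icc m (T - 2), B j :=
    sum_winQ B fun j hj => by have := hB j hj; omega
  have ha : (∑ j ∈ Finset.Icc m T, A (j - 1) * L (j + 2 * e))
      = ∑ j ∈ Finset.Icc m T, A j * L (j + 2 * e + 1) := by
    rw [show (∑ j ∈ Finset.Icc m T, A (j - 1) * L (j + 2 * e))
        = ∑ j ∈ Finset.Icc m T, (fun x => A x * L (x + 2 * e + 1)) (j + (-1)) from
      Finset.sum_congr rfl fun j _ => by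
        show A (j - 1) * L (j + 2 * e) = A (j + (-1)) * L (j + (-1) + 2 * e + 1)
        rw [show j + (-1) = j - 1 by ring, show j - 1 + 2 * e + 1 = j + 2 * e by ring],
      sum_shiftQ (fun x => A x * L (x + 2 * e + 1)) (-1) m T]
    refine sum_winQ _ fun j hj => ?_
    have hA' := hA j (left_ne_zero_of_mul hj)
    have hL' := hL _ (right_ne_zero_of_mul hj)
    omega
  have hl : (∑ j ∈ Finset.Icc m T, L (j - 1) * A (j - 1 + e))
      = ∑ j ∈ Finset.Icc m T, L j * A (j + e) := by
    rw [show (∑ j ∈ Finset.Icc m T, L (j - 1) * A (j - 1 + e))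
        = ∑ j ∈ Finset.Icc m T, (fun x => L x * A (x + e)) (j + (-1)) from
      Finset.sum_congr rfl fun j _ => by
        show L (j - 1) * A (j - 1 + e) = L (j + (-1)) * A (j + (-1) + e)
        rw [show j + (-1) = j - 1 by ring],
      sum_shiftQ (fun x => L x * A (x + e)) (-1) m T]
    refine sum_winQ _ fun j hj => ?_
    have hL' := hL j (left_ne_zero_of_mul hj)
    have hA' := hA _ (right_ne_zero_of_mul hj)
    omega
  rw [hsplit, hb2, hb1, hb0, ha, hl]
  ring

end step3

section step3b
variable (L A A2 : ℤ → ℚ) (T e m : ℤ)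

lemma stepL2 (hm : m ≤ 0)
    (hL : ∀ j, L j ≠ 0 → 0 ≤ j ∧ j ≤ T + 2 * e)
    (hA : ∀ j, A j ≠ 0 → 0 ≤ j ∧ j ≤ T + e - 1)
    (hA2 : ∀ j, A2 j = (1/2) * (A (j - 1) + A j + 2 * L j * L (j + e))) :
    (∑ j1 ∈ Finset.Icc m T, ∑ j2 ∈ Finset.Icc j1 T, L j1 * A2 (j2 + e))
      = (∑ j1 ∈ Finset.Icc m (T - 2), ∑ j2 ∈ Finset.Icc j1 (T - 2), L j1 * A (j2 + (e + 1)))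
        + (∑ j ∈ Finset.Icc m T, L j * A (j + e))
        + (1/2) * (∑ j ∈ Finset.Icc m T, L j * A (j + e - 1))
        + (∑ j1 ∈ Finset.Icc m T, ∑ j2 ∈ Finset.Icc j1 T,
            L j1 * (L (j2 + e) * L (j2 + 2 * e))) := by
  have hinner : ∀ j1 ∈ Finset.Icc m T,
      (∑ j2 ∈ Finset.Icc j1 T, L j1 * A2 (j2 + e))
        = L j1 * (∑ j2 ∈ Finset.Icc j1 (T - 2), A (j2 + (e + 1)))
          + L j1 * A (j1 + e) + (1/2) * (L j1 * A (j1 + e - 1))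
          + (∑ j2 ∈ Finset.Icc j1 T, L j1 * (L (j2 + e) * L (j2 + 2 * e))) := by
    intro j1 hj1
    obtain ⟨hj1l, hj1r⟩ := Finset.mem_Icc.1 hj1
    have hS1 : (∑ j2 ∈ Finset.Icc j1 T, A (j2 + e - 1))
        = A (j1 + e - 1) + A (j1 + e) + ∑ j2 ∈ Finset.Icc j1 (T - 2), A (j2 + (e + 1)) := by
      rw [show (∑ j2 ∈ Finset.Icc j1 T, A (j2 + e - 1))
          = ∑ j2 ∈ Finset.Icc j1 T, A (j2 + (e - 1)) from
        Finset.sum_congr rfl fun j2 _ => by rw [show j2 + e - 1 = j2 + (e - 1) by ring]]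
      rw [sum_shiftQ A (e - 1) j1 T]
      rw [sum_Icc_consQ A (fun h => absurd hj1r (by omega))]
      rw [show j1 + (e - 1) + 1 = j1 + e by ring]
      rw [sum_Icc_consQ A (fun h => by
        by_contra hne
        have := hA _ hne
        omega)]
      rw [show (∑ j2 ∈ Finset.Icc j1 (T - 2), A (j2 + (e + 1)))
          = ∑ j2 ∈ Finset.Icc (j1 + (e + 1)) (T - 2 + (e + 1)), A j2 from
        sum_shiftQ A (e + 1) j1 (T - 2)]
      rw [show j1 + e + 1 = j1 + (e + 1) by ring, show T + (e - 1) = T - 2 + (e + 1) by ring,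
        show j1 + (e - 1) = j1 + e - 1 by ring]
      ring
    have hS2 : (∑ j2 ∈ Finset.Icc j1 T, A (j2 + e))
        = A (j1 + e) + ∑ j2 ∈ Finset.Icc j1 (T - 2), A (j2 + (e + 1)) := by
      rw [sum_shiftQ A e j1 T]
      rw [sum_Icc_snocQ A (fun _ => by
        by_contra hne
        have := hA _ hne
        omega)]
      rw [show A (T + e) = 0 from by
        by_contra hne
        have := hA _ hne
        omega]
      rw [sum_Icc_consQ A (fun h => by
        by_contra hne
        have := hA _ hne
        omega)]
      rw [show (∑ j2 ∈ Finset.Icc j1 (T - 2), A (j2 + (e + 1)))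
          = ∑ j2 ∈ Finset.Icc (j1 + (e + 1)) (T - 2 + (e + 1)), A j2 from
        sum_shiftQ A (e + 1) j1 (T - 2)]
      rw [show T + e - 1 = T - 2 + (e + 1) by ring, show j1 + e + 1 = j1 + (e + 1) by ring]
      ring
    have expand : ∀ j2 ∈ Finset.Icc j1 T, L j1 * A2 (j2 + e)
        = L j1 * ((1/2) * A (j2 + e - 1) + (1/2) * A (j2 + e)
            + L (j2 + e) * L (j2 + 2 * e)) := by
      intro j2 _
      rw [hA2 (j2 + e), show j2 + e + e = j2 + 2 * e by ring]
      ring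
    rw [Finset.sum_congr rfl expand, ← Finset.mul_sum, Finset.sum_add_distrib,
      Finset.sum_add_distrib, ← Finset.mul_sum, ← Finset.mul_sum, hS1, hS2]
    simp only [mul_add, Finset.mul_sum]
    have hhalf : (∑ x ∈ Finset.Icc j1 (T - 2), L j1 * ((1:ℚ)/2 * A (x + (e + 1))))
        = (1/2) * ∑ x ∈ Finset.Icc j1 (T - 2), L j1 * A (x + (e + 1)) := by
      rw [Finset.mul_sum]
      exact Finset.sum_congr rfl fun x _ => by ring
    rw [hhalf]
    ring
  rw [Finset.sum_congr rfl hinner, Finset.sum_add_distrib, Finset.sum_add_distrib,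
    Finset.sum_add_distrib, ← Finset.mul_sum]
  have hw : (∑ j1 ∈ Finset.Icc m T, L j1 * (∑ j2 ∈ Finset.Icc j1 (T - 2), A (j2 + (e + 1))))
      = ∑ j1 ∈ Finset.Icc m (T - 2), ∑ j2 ∈ Finset.Icc j1 (T - 2), L j1 * A (j2 + (e + 1)) := by
    rw [sum_winQ (lo := m) (hi := T) (lo' := m) (hi' := T - 2)
      (fun j1 => L j1 * (∑ j2 ∈ Finset.Icc j1 (T - 2), A (j2 + (e + 1))))
      (fun j1 hj1 => by
        have hLj := left_ne_zero_of_mul hj1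
        have hS := right_ne_zero_of_mul hj1
        have h1 := (hL j1 hLj).1
        have h2 := sum_ne_imp_le _ _ _ hS
        omega)]
    exact Finset.sum_congr rfl fun j1 _ => Finset.mul_sum _ _ _
  rw [hw]

end step3b

section step3c
variable (L A A2 : ℤ → ℚ) (T e m : ℤ)

lemma stepL3 (hm : m ≤ 0)
    (hL : ∀ j, L j ≠ 0 → 0 ≤ j ∧ j ≤ T + 2 * e)
    (hA : ∀ j, A j ≠ 0 → 0 ≤ j ∧ j ≤ T + e - 1)
    (hA2 : ∀ j, A2 j = (1/2) * (A (j - 1) + A j + 2 * L j * L (j + e))) :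
    (∑ j1 ∈ Finset.Icc m T, ∑ j2 ∈ Finset.Icc j1 T, A2 j1 * L (j2 + 2 * e))
      = (∑ j1 ∈ Finset.Icc m (T - 2), ∑ j2 ∈ Finset.Icc j1 (T - 2), A j1 * L (j2 + 2 * (e + 1)))
        + (∑ j ∈ Finset.Icc m T, A j * L (j + 2 * e + 1))
        + (1/2) * (∑ j ∈ Finset.Icc m T, A j * L (j + 2 * e))
        + (∑ j1 ∈ Finset.Icc m T, ∑ j3 ∈ Finset.Icc j1 T,
            L j1 * L (j1 + e) * L (j3 + 2 * e)) := by
  have hWcons : ∀ x : ℤ, (∑ j2 ∈ Finset.Icc x T, L (j2 + 2 * e))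
      = L (x + 2 * e) + ∑ j2 ∈ Finset.Icc (x + 1) T, L (j2 + 2 * e) := fun x =>
    sum_Icc_consQ _ (fun h => by
      by_contra hne
      have := hL _ hne
      omega)
  have hfact : ∀ j1 ∈ Finset.Icc m T,
      (∑ j2 ∈ Finset.Icc j1 T, A2 j1 * L (j2 + 2 * e))
        = (1/2) * (A (j1 - 1) * (∑ j2 ∈ Finset.Icc j1 T, L (j2 + 2 * e)))
          + (1/2) * (A j1 * (∑ j2 ∈ Finset.Icc j1 T, L (j2 + 2 * e)))
          + L j1 * L (j1 + e) * (∑ j2 ∈ Finset.Icc j1 T, L (j2 + 2 * e)) := by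
    intro j1 _
    rw [← Finset.mul_sum, hA2 j1]
    ring
  rw [Finset.sum_congr rfl hfact, Finset.sum_add_distrib, Finset.sum_add_distrib,
    ← Finset.mul_sum, ← Finset.mul_sum]
  have hshift : (∑ j1 ∈ Finset.Icc m T, A (j1 - 1) * (∑ j2 ∈ Finset.Icc j1 T, L (j2 + 2 * e)))
      = ∑ j1 ∈ Finset.Icc m T, A j1 * (∑ j2 ∈ Finset.Icc (j1 + 1) T, L (j2 + 2 * e)) := by
    rw [show (∑ j1 ∈ Finset.Icc m T, A (j1 - 1) * (∑ j2 ∈ Finset.Icc j1 T, L (j2 + 2 * e)))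
        = ∑ j1 ∈ Finset.Icc m T,
            (fun x => A x * (∑ j2 ∈ Finset.Icc (x + 1) T, L (j2 + 2 * e))) (j1 + (-1)) from
      Finset.sum_congr rfl fun j1 _ => by
        show A (j1 - 1) * (∑ j2 ∈ Finset.Icc j1 T, L (j2 + 2 * e))
          = A (j1 + (-1)) * (∑ j2 ∈ Finset.Icc (j1 + (-1) + 1) T, L (j2 + 2 * e))
        rw [show j1 + (-1) = j1 - 1 by ring, show j1 - 1 + 1 = j1 by ring],
      sum_shiftQ (fun x => A x * (∑ j2 ∈ Finset.Icc (x + 1) T, L (j2 + 2 * e))) (-1) m T]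
    refine sum_winQ _ fun j hj => ?_
    have h1 := (hA j (left_ne_zero_of_mul hj)).1
    have h2 := sum_ne_imp_le _ _ _ (right_ne_zero_of_mul hj)
    omega
  rw [hshift]
  have hsplitW1 : (∑ j1 ∈ Finset.Icc m T, A j1 * (∑ j2 ∈ Finset.Icc (j1 + 1) T, L (j2 + 2 * e)))
      = ∑ j1 ∈ Finset.Icc m T, (A j1 * L (j1 + 2 * e + 1)
          + A j1 * (∑ j2 ∈ Finset.Icc (j1 + 2) T, L (j2 + 2 * e))) :=
    Finset.sum_congr rfl fun j1 _ => by
      rw [hWcons (j1 + 1), show j1 + 1 + 2 * e = j1 + 2 * e + 1 by ring,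
        show j1 + 1 + 1 = j1 + 2 by ring, mul_add]
  have hsplitW0 : (∑ j1 ∈ Finset.Icc m T, A j1 * (∑ j2 ∈ Finset.Icc j1 T, L (j2 + 2 * e)))
      = ∑ j1 ∈ Finset.Icc m T, (A j1 * L (j1 + 2 * e)
          + (A j1 * L (j1 + 2 * e + 1)
            + A j1 * (∑ j2 ∈ Finset.Icc (j1 + 2) T, L (j2 + 2 * e)))) :=
    Finset.sum_congr rfl fun j1 _ => by
      rw [hWcons j1, hWcons (j1 + 1), show j1 + 1 + 2 * e = j1 + 2 * e + 1 by ring,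
        show j1 + 1 + 1 = j1 + 2 by ring]
      ring
  rw [hsplitW1, hsplitW0, Finset.sum_add_distrib, Finset.sum_add_distrib,
    Finset.sum_add_distrib]
  have hD : (∑ j1 ∈ Finset.Icc m T, A j1 * (∑ j2 ∈ Finset.Icc (j1 + 2) T, L (j2 + 2 * e)))
      = ∑ j1 ∈ Finset.Icc m (T - 2), ∑ j2 ∈ Finset.Icc j1 (T - 2), A j1 * L (j2 + 2 * (e + 1)) := by
    have hre : ∀ j1 : ℤ, (∑ j2 ∈ Finset.Icc (j1 + 2) T, L (j2 + 2 * e))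
        = ∑ j2 ∈ Finset.Icc j1 (T - 2), L (j2 + 2 * (e + 1)) := fun j1 => by
      rw [show (∑ j2 ∈ Finset.Icc j1 (T - 2), L (j2 + 2 * (e + 1)))
          = ∑ j2 ∈ Finset.Icc j1 (T - 2), (fun x => L (x + 2 * e)) (j2 + 2) from
        Finset.sum_congr rfl fun j2 _ => by
          show L (j2 + 2 * (e + 1)) = L (j2 + 2 + 2 * e)
          rw [show j2 + 2 + 2 * e = j2 + 2 * (e + 1) by ring],
        sum_shiftQ (fun x => L (x + 2 * e)) 2 j1 (T - 2), show T - 2 + 2 = T by ring]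
    simp only [hre]
    rw [sum_winQ (lo := m) (hi := T) (lo' := m) (hi' := T - 2)
      (fun j1 => A j1 * (∑ j2 ∈ Finset.Icc j1 (T - 2), L (j2 + 2 * (e + 1))))
      (fun j hj => by
        have h1 := (hA j (left_ne_zero_of_mul hj)).1
        have h2 := sum_ne_imp_le _ _ _ (right_ne_zero_of_mul hj)
        omega)]
    exact Finset.sum_congr rfl fun j1 _ => Finset.mul_sum _ _ _
  rw [hD]
  have hY3 : (∑ j1 ∈ Finset.Icc m T, L j1 * L (j1 + e) * (∑ j2 ∈ Finset.Icc j1 T, L (j2 + 2 * e)))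
      = ∑ j1 ∈ Finset.Icc m T, ∑ j3 ∈ Finset.Icc j1 T, L j1 * L (j1 + e) * L (j3 + 2 * e) :=
    Finset.sum_congr rfl fun j1 _ => Finset.mul_sum _ _ _
  rw [hY3]
  ring

end step3c

section step3d
variable (L : ℤ → ℚ) (T e m : ℤ)

lemma stepL4 (hm : m ≤ 0)
    (hL : ∀ j, L j ≠ 0 → 0 ≤ j ∧ j ≤ T + 2 * e) :
    (∑ j1 ∈ Finset.Icc m T, ∑ j2 ∈ Finset.Icc j1 T, ∑ j3 ∈ Finset.Icc j2 T,
        L j1 * L (j2 + e) * L (j3 + 2 * e))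
      = (∑ j1 ∈ Finset.Icc m (T - 2), ∑ j2 ∈ Finset.Icc j1 (T - 2),
          ∑ j3 ∈ Finset.Icc j2 (T - 2), L j1 * L (j2 + (e + 1)) * L (j3 + 2 * (e + 1)))
        + (∑ j1 ∈ Finset.Icc m T, ∑ j2 ∈ Finset.Icc j1 T,
            L j1 * (L (j2 + e) * L (j2 + 2 * e)))
        + (∑ j1 ∈ Finset.Icc m T, ∑ j3 ∈ Finset.Icc j1 T,
            L j1 * L (j1 + e) * L (j3 + 2 * e))
        - (∑ j ∈ Finset.Icc m T, L j * (L (j + e) * L (j + 2 * e))) := by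
  have combined : ∀ j1 ∈ Finset.Icc m T,
      (∑ j2 ∈ Finset.Icc j1 T, ∑ j3 ∈ Finset.Icc j2 T, L j1 * L (j2 + e) * L (j3 + 2 * e))
        = (∑ j3 ∈ Finset.Icc j1 T, L j1 * L (j1 + e) * L (j3 + 2 * e))
          + ((∑ j2 ∈ Finset.Icc j1 T, L j1 * (L (j2 + e) * L (j2 + 2 * e)))
              - L j1 * (L (j1 + e) * L (j1 + 2 * e)))
          + (∑ j2 ∈ Finset.Icc j1 (T - 2), ∑ j3 ∈ Finset.Icc j2 (T - 2),
              L j1 * L (j2 + (e + 1)) * L (j3 + 2 * (e + 1))) := by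
    intro j1 hj1
    obtain ⟨hj1l, hj1r⟩ := Finset.mem_Icc.1 hj1
    -- split j2 at j1
    rw [sum_Icc_consQ (fun j2 => ∑ j3 ∈ Finset.Icc j2 T, L j1 * L (j2 + e) * L (j3 + 2 * e))
      (fun h => absurd hj1r (by omega))]
    -- split j3 at j2 in the strict part
    have hB : ∀ j2 ∈ Finset.Icc (j1 + 1) T,
        (∑ j3 ∈ Finset.Icc j2 T, L j1 * L (j2 + e) * L (j3 + 2 * e))
          = L j1 * (L (j2 + e) * L (j2 + 2 * e))
            + ∑ j3 ∈ Finset.Icc (j2 + 1) T, L j1 * L (j2 + e) * L (j3 + 2 * e) := by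
      intro j2 hj2
      obtain ⟨_, hj2r⟩ := Finset.mem_Icc.1 hj2
      rw [sum_Icc_consQ (fun j3 => L j1 * L (j2 + e) * L (j3 + 2 * e))
        (fun h => absurd hj2r (by omega))]
      rw [show L j1 * L (j2 + e) * L (j2 + 2 * e) = L j1 * (L (j2 + e) * L (j2 + 2 * e)) by ring]
    rw [Finset.sum_congr rfl hB, Finset.sum_add_distrib]
    -- Y2 piece via cons
    have hY2 : (∑ j2 ∈ Finset.Icc j1 T, L j1 * (L (j2 + e) * L (j2 + 2 * e)))
        = L j1 * (L (j1 + e) * L (j1 + 2 * e))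
          + ∑ j2 ∈ Finset.Icc (j1 + 1) T, L j1 * (L (j2 + e) * L (j2 + 2 * e)) :=
      sum_Icc_consQ (fun j2 => L j1 * (L (j2 + e) * L (j2 + 2 * e)))
        (fun h => absurd hj1r (by omega))
    rw [hY2]
    -- strict part reindex
    have hstrict : (∑ j2 ∈ Finset.Icc (j1 + 1) T,
        ∑ j3 ∈ Finset.Icc (j2 + 1) T, L j1 * L (j2 + e) * L (j3 + 2 * e))
        = ∑ j2 ∈ Finset.Icc j1 (T - 2), ∑ j3 ∈ Finset.Icc j2 (T - 2),
            L j1 * L (j2 + (e + 1)) * L (j3 + 2 * (e + 1)) := by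
      have hGT : (∑ j3 ∈ Finset.Icc (T + 1) T, L j1 * L (T + e) * L (j3 + 2 * e)) = 0 := by
        rw [Finset.Icc_eq_empty (by omega), Finset.sum_empty]
      rw [sum_Icc_snocQ (fun j2 => ∑ j3 ∈ Finset.Icc (j2 + 1) T,
          L j1 * L (j2 + e) * L (j3 + 2 * e)) (fun _ => hGT), hGT, add_zero]
      have hinner3 : ∀ j2 : ℤ, (∑ j3 ∈ Finset.Icc j2 (T - 2),
          L j1 * L (j2 + (e + 1)) * L (j3 + 2 * (e + 1)))
          = ∑ j3 ∈ Finset.Icc (j2 + 1 + 1) T, L j1 * L (j2 + 1 + e) * L (j3 + 2 * e) := by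
        intro j2
        rw [show (∑ j3 ∈ Finset.Icc j2 (T - 2), L j1 * L (j2 + (e + 1)) * L (j3 + 2 * (e + 1)))
            = ∑ j3 ∈ Finset.Icc j2 (T - 2),
                (fun x => L j1 * L (j2 + 1 + e) * L (x + 2 * e)) (j3 + 2) from
          Finset.sum_congr rfl fun j3 _ => by
            show L j1 * L (j2 + (e + 1)) * L (j3 + 2 * (e + 1))
              = L j1 * L (j2 + 1 + e) * L (j3 + 2 + 2 * e)
            rw [show j2 + 1 + e = j2 + (e + 1) by ring,
              show j3 + 2 + 2 * e = j3 + 2 * (e + 1) by ring],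
          sum_shiftQ (fun x => L j1 * L (j2 + 1 + e) * L (x + 2 * e)) 2 j2 (T - 2),
          show T - 2 + 2 = T by ring, show j2 + 2 = j2 + 1 + 1 by ring]
      rw [show (∑ j2 ∈ Finset.Icc j1 (T - 2), ∑ j3 ∈ Finset.Icc j2 (T - 2),
          L j1 * L (j2 + (e + 1)) * L (j3 + 2 * (e + 1)))
          = ∑ j2 ∈ Finset.Icc j1 (T - 2),
              (fun y => ∑ j3 ∈ Finset.Icc (y + 1) T, L j1 * L (y + e) * L (j3 + 2 * e)) (j2 + 1)
          from Finset.sum_congr rfl fun j2 _ => hinner3 j2,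
        sum_shiftQ (fun y => ∑ j3 ∈ Finset.Icc (y + 1) T, L j1 * L (y + e) * L (j3 + 2 * e))
          1 j1 (T - 2), show T - 2 + 1 = T - 1 by ring]
    rw [hstrict]
    ring
  rw [Finset.sum_congr rfl combined, Finset.sum_add_distrib, Finset.sum_add_distrib,
    Finset.sum_sub_distrib]
  have hwin : (∑ j1 ∈ Finset.Icc m T, ∑ j2 ∈ Finset.Icc j1 (T - 2),
      ∑ j3 ∈ Finset.Icc j2 (T - 2), L j1 * L (j2 + (e + 1)) * L (j3 + 2 * (e + 1)))
      = ∑ j1 ∈ Finset.Icc m (T - 2), ∑ j2 ∈ Finset.Icc j1 (T - 2),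
          ∑ j3 ∈ Finset.Icc j2 (T - 2), L j1 * L (j2 + (e + 1)) * L (j3 + 2 * (e + 1)) := by
    refine sum_winQ (lo := m) (hi := T) (lo' := m) (hi' := T - 2) _ fun j1 hj1 => ?_
    have h2 := sum_ne_imp_le _ _ _ hj1
    obtain ⟨j2, hj2mem, hj2⟩ := Finset.exists_ne_zero_of_sum_ne_zero hj1
    obtain ⟨j3, hj3mem, hj3⟩ := Finset.exists_ne_zero_of_sum_ne_zero hj2
    have hLj1 : L j1 ≠ 0 := left_ne_zero_of_mul (left_ne_zero_of_mul hj3)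
    have := (hL j1 hLj1).1
    omega
  rw [hwin]
  ring

end step3d

lemma iter3_supp (k : ℤ) (L : ℤ → ℚ) (hL : ∀ j, L j ≠ 0 → 0 ≤ j ∧ j ≤ k - 1) :
    ∀ t : ℕ, ∀ m : ℤ, iter3 k L t m ≠ 0 → 0 ≤ m ∧ m ≤ 2 * (t : ℤ) - 1 - k := by
  intro t
  induction t with
  | zero => intro m hm; exact absurd rfl hm
  | succ t ih =>
      intro m hm
      by_contra hc
      apply hm
      show (1/18) * (4 * iter3 k L t (m - 2) + 10 * iter3 k L t (m - 1) + 4 * iter3 k L t m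
        + 12 * iter2 k L t (m - 1) * L (m + 2 * ((2 * k - ((t : ℤ) + 1)) - k))
        + 9 * iter2 k L t m * L (m + 2 * ((2 * k - ((t : ℤ) + 1)) - k))
        + 6 * iter2 k L t m * L (m + 1 + 2 * ((2 * k - ((t : ℤ) + 1)) - k))
        + 6 * L (m - 1) * iter2 k L t (m - 1 + ((2 * k - ((t : ℤ) + 1)) - k))
        + 9 * L m * iter2 k L t (m - 1 + ((2 * k - ((t : ℤ) + 1)) - k))
        + 12 * L m * iter2 k L t (m + ((2 * k - ((t : ℤ) + 1)) - k))
        + 18 * L m * L (m + ((2 * k - ((t : ℤ) + 1)) - k))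
            * L (m + 2 * ((2 * k - ((t : ℤ) + 1)) - k))) = 0
      have hI3 : ∀ x : ℤ, (x < 0 ∨ 2 * (t:ℤ) - 1 - k < x) → iter3 k L t x = 0 := by
        intro x hx; by_contra h; have := ih x h; omega
      have hI2 : ∀ x : ℤ, (x < 0 ∨ (t:ℤ) - 1 < x) → iter2 k L t x = 0 := by
        intro x hx; by_contra h; have := iter2_supp k L hL t x h; omega
      have hL0 : ∀ x : ℤ, (x < 0 ∨ k - 1 < x) → L x = 0 := by
        intro x hx; by_contra h; have := hL x h; omega
      have hcm : m < 0 ∨ 2 * (t:ℤ) + 1 - k < m := by push_cast at hc; omega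
      rcases hcm with hcm | hcm
      · rw [hI3 (m - 2) (by omega), hI3 (m - 1) (by omega), hI3 m (by omega),
          hI2 (m - 1) (by omega), hI2 m (by omega), hL0 (m - 1) (by omega),
          hL0 m (by omega)]
        ring
      · rw [hI3 (m - 2) (by omega), hI3 (m - 1) (by omega), hI3 m (by omega),
          hL0 (m + 2 * ((2 * k - ((t : ℤ) + 1)) - k)) (by omega),
          hL0 (m + 1 + 2 * ((2 * k - ((t : ℤ) + 1)) - k)) (by omega),
          hI2 (m - 1 + ((2 * k - ((t : ℤ) + 1)) - k)) (by omega),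
          hI2 (m + ((2 * k - ((t : ℤ) + 1)) - k)) (by omega)]
        ring

lemma step3 (L A B A2 B2 : ℤ → ℚ) (T e m : ℤ) (hm : m ≤ 0)
    (hL : ∀ j, L j ≠ 0 → 0 ≤ j ∧ j ≤ T + 2 * e)
    (hA : ∀ j, A j ≠ 0 → 0 ≤ j ∧ j ≤ T + e - 1)
    (hB : ∀ j, B j ≠ 0 → 0 ≤ j ∧ j ≤ T - 2)
    (hA2 : ∀ j, A2 j = (1/2) * (A (j - 1) + A j + 2 * L j * L (j + e)))
    (hB2 : ∀ j, B2 j = (1/18) * (4 * B (j - 2) + 10 * B (j - 1) + 4 * B j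
        + 12 * (A (j - 1) * L (j + 2 * e)) + 9 * (A j * L (j + 2 * e))
        + 6 * (A j * L (j + 2 * e + 1))
        + 6 * (L (j - 1) * A (j - 1 + e)) + 9 * (L j * A (j + e - 1))
        + 12 * (L j * A (j + e))
        + 18 * (L j * (L (j + e) * L (j + 2 * e))))) :
    (∑ j ∈ Finset.Icc m T, B2 j)
      - (∑ j1 ∈ Finset.Icc m T, ∑ j2 ∈ Finset.Icc j1 T, L j1 * A2 (j2 + e))
      - (∑ j1 ∈ Finset.Icc m T, ∑ j2 ∈ Finset.Icc j1 T, A2 j1 * L (j2 + 2 * e))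
      + (∑ j1 ∈ Finset.Icc m T, ∑ j2 ∈ Finset.Icc j1 T, ∑ j3 ∈ Finset.Icc j2 T,
          L j1 * L (j2 + e) * L (j3 + 2 * e))
    = (∑ j ∈ Finset.Icc m (T - 2), B j)
      - (∑ j1 ∈ Finset.Icc m (T - 2), ∑ j2 ∈ Finset.Icc j1 (T - 2),
          L j1 * A (j2 + (e + 1)))
      - (∑ j1 ∈ Finset.Icc m (T - 2), ∑ j2 ∈ Finset.Icc j1 (T - 2),
          A j1 * L (j2 + 2 * (e + 1)))
      + (∑ j1 ∈ Finset.Icc m (T - 2), ∑ j2 ∈ Finset.Icc j1 (T - 2),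
          ∑ j3 ∈ Finset.Icc j2 (T - 2),
            L j1 * L (j2 + (e + 1)) * L (j3 + 2 * (e + 1))) := by
  rw [stepL1 L A B B2 T e m hm hL hA hB hB2, stepL2 L A A2 T e m hm hL hA hA2,
    stepL3 L A A2 T e m hm hL hA hA2, stepL4 L T e m hm hL]
  ring

lemma chain3 (k : ℤ) (L : ℤ → ℚ) (hk : 1 ≤ k) (hL : ∀ j, L j ≠ 0 → 0 ≤ j ∧ j ≤ k - 1) :
    ∀ t : ℕ, (∑ j ∈ Finset.Icc (0:ℤ) (2 * (t:ℤ) - 1 - k), iter3 k L t j)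
      - (∑ j1 ∈ Finset.Icc (0:ℤ) (2 * (t:ℤ) - 1 - k),
          ∑ j2 ∈ Finset.Icc j1 (2 * (t:ℤ) - 1 - k), L j1 * iter2 k L t (j2 + (k - (t:ℤ))))
      - (∑ j1 ∈ Finset.Icc (0:ℤ) (2 * (t:ℤ) - 1 - k),
          ∑ j2 ∈ Finset.Icc j1 (2 * (t:ℤ) - 1 - k),
            iter2 k L t j1 * L (j2 + 2 * (k - (t:ℤ))))
      + (∑ j1 ∈ Finset.Icc (0:ℤ) (2 * (t:ℤ) - 1 - k),
          ∑ j2 ∈ Finset.Icc j1 (2 * (t:ℤ) - 1 - k),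
            ∑ j3 ∈ Finset.Icc j2 (2 * (t:ℤ) - 1 - k),
              L j1 * L (j2 + (k - (t:ℤ))) * L (j3 + 2 * (k - (t:ℤ)))) = 0 := by
  intro t
  induction t with
  | zero =>
      rw [Finset.Icc_eq_empty (show ¬ (0:ℤ) ≤ 2 * ((0:ℕ):ℤ) - 1 - k by push_cast; omega)]
      simp
  | succ t ih =>
      have hA2 : ∀ j, iter2 k L (t + 1) j
          = (1/2) * (iter2 k L t (j - 1) + iter2 k L t j
              + 2 * L j * L (j + (k - (t:ℤ) - 1))) := by
        intro j
        show (1/2) * (iter2 k L t (j - 1) + iter2 k L t j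
          + 2 * L j * L (j + ((2 * k - ((t : ℤ) + 1)) - k))) = _
        rw [show (2 * k - ((t:ℤ) + 1)) - k = k - (t:ℤ) - 1 from by ring]
      have hB2 : ∀ j, iter3 k L (t + 1) j
          = (1/18) * (4 * iter3 k L t (j - 2) + 10 * iter3 k L t (j - 1) + 4 * iter3 k L t j
            + 12 * (iter2 k L t (j - 1) * L (j + 2 * (k - (t:ℤ) - 1)))
            + 9 * (iter2 k L t j * L (j + 2 * (k - (t:ℤ) - 1)))
            + 6 * (iter2 k L t j * L (j + 2 * (k - (t:ℤ) - 1) + 1))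
            + 6 * (L (j - 1) * iter2 k L t (j - 1 + (k - (t:ℤ) - 1)))
            + 9 * (L j * iter2 k L t (j + (k - (t:ℤ) - 1) - 1))
            + 12 * (L j * iter2 k L t (j + (k - (t:ℤ) - 1)))
            + 18 * (L j * (L (j + (k - (t:ℤ) - 1)) * L (j + 2 * (k - (t:ℤ) - 1))))) := by
        intro j
        show (1/18) * (4 * iter3 k L t (j - 2) + 10 * iter3 k L t (j - 1) + 4 * iter3 k L t j
          + 12 * iter2 k L t (j - 1) * L (j + 2 * ((2 * k - ((t : ℤ) + 1)) - k))
          + 9 * iter2 k L t j * L (j + 2 * ((2 * k - ((t : ℤ) + 1)) - k))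
          + 6 * iter2 k L t j * L (j + 1 + 2 * ((2 * k - ((t : ℤ) + 1)) - k))
          + 6 * L (j - 1) * iter2 k L t (j - 1 + ((2 * k - ((t : ℤ) + 1)) - k))
          + 9 * L j * iter2 k L t (j - 1 + ((2 * k - ((t : ℤ) + 1)) - k))
          + 12 * L j * iter2 k L t (j + ((2 * k - ((t : ℤ) + 1)) - k))
          + 18 * L j * L (j + ((2 * k - ((t : ℤ) + 1)) - k))
              * L (j + 2 * ((2 * k - ((t : ℤ) + 1)) - k))) = _
        rw [show (2 * k - ((t:ℤ) + 1)) - k = k - (t:ℤ) - 1 from by ring,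
          show j + 1 + 2 * (k - (t:ℤ) - 1) = j + 2 * (k - (t:ℤ) - 1) + 1 from by ring,
          show j + (k - (t:ℤ) - 1) - 1 = j - 1 + (k - (t:ℤ) - 1) from by ring]
        ring
      have hstep := step3 L (iter2 k L t) (iter3 k L t) (iter2 k L (t + 1)) (iter3 k L (t + 1))
        (2 * (t:ℤ) + 1 - k) (k - (t:ℤ) - 1) 0 le_rfl
        (fun j hj => by have := hL j hj; omega)
        (fun j hj => by have := iter2_supp k L hL t j hj; omega)
        (fun j hj => by have := iter3_supp k L hL t j hj; omega)
        hA2 hB2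
      push_cast
      simp only [show 2 * ((t:ℤ) + 1) - 1 - k = 2 * (t:ℤ) + 1 - k from by ring,
        show k - ((t:ℤ) + 1) = k - (t:ℤ) - 1 from by ring]
      rw [hstep]
      simp only [show 2 * (t:ℤ) + 1 - k - 2 = 2 * (t:ℤ) - 1 - k from by ring,
        show k - (t:ℤ) - 1 + 1 = k - (t:ℤ) from by ring,
        show 2 * (k - (t:ℤ) - 1 + 1) = 2 * (k - (t:ℤ)) from by ring]
      exact ih

/-- Combinatorial content of Corollary 2: for an index-one Fano hypersurface of degree
`k` (so `N = k + 1`), whose shifted degree-1 constants are the Schubert numbers `L`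
(which satisfy `L_0 = L_{k−1} = k!` and `Σ L_m = k^k`), one has
`γ^{k+1,k,1}_0 = k^k` and `γ^{k+1,k,2}_0 = γ^{k+1,k,3}_0 = 0`; i.e. with
`F := O_e + k!q` the main relation `F^k − k^k F^{k−1} q = 0` holds modulo `q⁴`. -/
theorem main_relation_index_one (k : ℕ) (hk : 3 ≤ k) (L : ℤ → ℚ)
    (hsupp : ∀ m : ℤ, L m ≠ 0 → 0 ≤ m ∧ m ≤ (k : ℤ) - 1)
    (hsum : ∑ m ∈ Finset.Icc (0 : ℤ) ((k : ℤ) - 1), L m = (k : ℚ) ^ k)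
    (hL0 : L 0 = (k.factorial : ℚ)) (hLtop : L ((k : ℤ) - 1) = (k.factorial : ℚ)) :
    gammaCoeff ((k : ℤ) + 1) k (famN k L ((k : ℤ) + 1)) 1 0 = (k : ℚ) ^ k
    ∧ gammaCoeff ((k : ℤ) + 1) k (famN k L ((k : ℤ) + 1)) 2 0 = 0
    ∧ gammaCoeff ((k : ℤ) + 1) k (famN k L ((k : ℤ) + 1)) 3 0 = 0 := by
  have hfam1 : ∀ j, famN (k:ℤ) L ((k:ℤ) + 1) 1 j = L j := fun j => rfl
  have htoNat : (2 * (k:ℤ) - ((k:ℤ) + 1)).toNat = k - 1 := by omega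
  have hfam2 : ∀ j, famN (k:ℤ) L ((k:ℤ) + 1) 2 j = iter2 (k:ℤ) L (k - 1) j := by
    intro j
    show LN2 (k:ℤ) L ((k:ℤ) + 1) j = _
    unfold LN2
    rw [htoNat]
  have hfam3 : ∀ j, famN (k:ℤ) L ((k:ℤ) + 1) 3 j = iter3 (k:ℤ) L (k - 1) j := by
    intro j
    show LN3 (k:ℤ) L ((k:ℤ) + 1) j = _
    unfold LN3
    rw [htoNat]
  have hcast : ((k - 1 : ℕ) : ℤ) = (k:ℤ) - 1 := by omega
  refine ⟨?_, ?_, ?_⟩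
  · rw [gamma_one]
    simp only [hfam1]
    rw [show (k:ℤ) + 1 - 1 - ((k:ℤ) + 1 - (k:ℤ)) = (k:ℤ) - 1 from by ring]
    exact hsum
  · rw [gamma_two]
    simp only [hfam1, hfam2]
    simp only [show (k:ℤ) + 1 - 1 - ((k:ℤ) + 1 - (k:ℤ)) * 2 = (k:ℤ) - 2 from by ring,
      show (k:ℤ) + 1 - (k:ℤ) = 1 from by ring,
      show (k:ℤ) + 1 - 1 - 1 * 2 = (k:ℤ) - 2 from by ring]
    have h2 := chain2 (k:ℤ) L hsupp (k - 1)
    rw [hcast] at h2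
    simp only [show (k:ℤ) - 1 - 1 = (k:ℤ) - 2 from by ring,
      show (k:ℤ) - ((k:ℤ) - 1) = 1 from by ring] at h2
    exact h2
  · rw [gamma_three]
    simp only [hfam1, hfam2, hfam3]
    simp only [show (k:ℤ) + 1 - 1 - ((k:ℤ) + 1 - (k:ℤ)) * 3 = (k:ℤ) - 3 from by ring,
      show (k:ℤ) + 1 - (k:ℤ) = 1 from by ring,
      show (k:ℤ) + 1 - 1 - 1 * 3 = (k:ℤ) - 3 from by ring]
    have h3 := chain3 (k:ℤ) L (by omega) hsupp (k - 1)
    rw [hcast] at h3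
    simp only [show 2 * ((k:ℤ) - 1) - 1 - (k:ℤ) = (k:ℤ) - 3 from by ring,
      show (k:ℤ) - ((k:ℤ) - 1) = 1 from by ring] at h3
    calc (∑ j ∈ Finset.Icc (0:ℤ) ((k:ℤ) - 3), iter3 (k:ℤ) L (k - 1) j)
        - (∑ j1 ∈ Finset.Icc (0:ℤ) ((k:ℤ) - 3), ∑ j2 ∈ Finset.Icc j1 ((k:ℤ) - 3),
            L j1 * iter2 (k:ℤ) L (k - 1) (j2 + 1))
        - (∑ j1 ∈ Finset.Icc (0:ℤ) ((k:ℤ) - 3), ∑ j2 ∈ Finset.Icc j1 ((k:ℤ) - 3),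
            iter2 (k:ℤ) L (k - 1) j1 * L (j2 + 2 * 1))
        + (∑ j1 ∈ Finset.Icc (0:ℤ) ((k:ℤ) - 3), ∑ j2 ∈ Finset.Icc j1 ((k:ℤ) - 3),
            ∑ j3 ∈ Finset.Icc j2 ((k:ℤ) - 3), L j1 * L (j2 + 1) * L (j3 + 2 * 1))
        = 0 := h3
end

section
/- Let k ≥ 2, d ∈ {1,2,3}, m ∈ ℤ, and let N be an integer with N − k ≥ 2. There exists a homogeneous polynomial P of degree d in k variables with rational coefficients, depending only on N, k, d and m, such that for every L : ℤ → ℚ with L_j = 0 unless 0 ≤ j ≤ k−1, the constants produced by the downward iteration of the Fano recursion satisfy L^{N,d}_m = P(L_0, …, L_{k−1}) (for d = 1 one may take P = the coordinate L_m). Moreover the same conclusion holds for N = k+1, where the degree-1 constants are L^{k+1,1}_m := L_m − k! for 1 ≤ m ≤ k−2 and 0 otherwise, provided L is additionally required to satisfy L_0 = k! (so that L^{k+1,1}_m = L_m − L_0 is again homogeneous of degree 1 in L_0, …, L_{k−1}). -/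
/-- The family of structural constants of the index-one hypersurface (`N = k + 1`):
the degree-1 constants are `L^{k+1,1}_m = L_m − k!` for `1 ≤ m ≤ k−2` and `0`
otherwise, while the degree-2 and degree-3 constants are given by the same downward
iteration of the Fano recursion. -/
def famIdx1 (k : ℕ) (L : ℤ → ℚ) : ℕ → ℤ → ℚ :=
  fun d m => if d = 1 then
      (if 1 ≤ m ∧ m ≤ (k : ℤ) - 2 then L m - (k.factorial : ℚ) else 0)
    else famN k L ((k : ℤ) + 1) d m

/-! The Fano recursions build each constant from earlier ones by sums, rational multiples and
products only. The functions of `L` that agree, on the admissible line constants, with a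
homogeneous polynomial of degree `d` in `L 0, …, L (k - 1)` are closed under the first two, and
products add degrees; so an induction on the number of downward steps shows that every iterate
of degree `d` is such a function. -/

def IsHomogeneousPolynomialOn (n d : ℕ) (S : Set (ℤ → ℚ)) (f : (ℤ → ℚ) → ℚ) : Prop :=
  ∃ P : MvPolynomial (Fin n) ℚ, P.IsHomogeneous d ∧
    ∀ L ∈ S, f L = MvPolynomial.eval (fun i : Fin n => L ((i : ℕ) : ℤ)) P

def supportedLines (n : ℕ) : Set (ℤ → ℚ) :=
  {L | ∀ j : ℤ, L j ≠ 0 → 0 ≤ j ∧ j ≤ (n : ℤ) - 1}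

namespace IsHomogeneousPolynomialOn

variable {n d e : ℕ} {S : Set (ℤ → ℚ)} {f g : (ℤ → ℚ) → ℚ}

theorem zero : IsHomogeneousPolynomialOn n d S fun _ => 0 :=
  ⟨0, MvPolynomial.isHomogeneous_zero _ _ _, fun _ _ => by simp⟩

theorem congr (hf : IsHomogeneousPolynomialOn n d S f) (hfg : ∀ L ∈ S, f L = g L) :
    IsHomogeneousPolynomialOn n d S g := by
  obtain ⟨P, hP, hfP⟩ := hf
  exact ⟨P, hP, fun L hL => (hfg L hL).symm.trans (hfP L hL)⟩

theorem add (hf : IsHomogeneousPolynomialOn n d S f) (hg : IsHomogeneousPolynomialOn n d S g) :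
    IsHomogeneousPolynomialOn n d S fun L => f L + g L := by
  obtain ⟨P, hP, hfP⟩ := hf
  obtain ⟨Q, hQ, hgQ⟩ := hg
  exact ⟨P + Q, hP.add hQ, fun L hL => by simp [hfP L hL, hgQ L hL]⟩

theorem sub (hf : IsHomogeneousPolynomialOn n d S f) (hg : IsHomogeneousPolynomialOn n d S g) :
    IsHomogeneousPolynomialOn n d S fun L => f L - g L := by
  obtain ⟨P, hP, hfP⟩ := hf
  obtain ⟨Q, hQ, hgQ⟩ := hg
  exact ⟨P - Q, hP.sub hQ, fun L hL => by simp [hfP L hL, hgQ L hL]⟩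

theorem const_mul (c : ℚ) (hf : IsHomogeneousPolynomialOn n d S f) :
    IsHomogeneousPolynomialOn n d S fun L => c * f L := by
  obtain ⟨P, hP, hfP⟩ := hf
  exact ⟨MvPolynomial.C c * P, hP.C_mul c, fun L hL => by simp [hfP L hL]⟩

theorem mul (hf : IsHomogeneousPolynomialOn n d S f) (hg : IsHomogeneousPolynomialOn n e S g) :
    IsHomogeneousPolynomialOn n (d + e) S fun L => f L * g L := by
  obtain ⟨P, hP, hfP⟩ := hf
  obtain ⟨Q, hQ, hgQ⟩ := hg
  exact ⟨P * Q, hP.mul hQ, fun L hL => by simp [hfP L hL, hgQ L hL]⟩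

theorem apply (hS : S ⊆ supportedLines n) (j : ℤ) :
    IsHomogeneousPolynomialOn n 1 S fun L => L j := by
  by_cases hj : 0 ≤ j ∧ j ≤ (n : ℤ) - 1
  · refine ⟨MvPolynomial.X ⟨j.toNat, by omega⟩, MvPolynomial.isHomogeneous_X _ _, fun L _ => ?_⟩
    simp [Int.toNat_of_nonneg hj.1]
  · refine zero.congr fun L hL => ?_
    by_contra hLj
    exact hj (hS hL j (Ne.symm hLj))

end IsHomogeneousPolynomialOn

open IsHomogeneousPolynomialOn

section FanoRecursion

variable {n : ℕ} {S : Set (ℤ → ℚ)} (hS : S ⊆ supportedLines n) (k : ℤ)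
include hS

theorem isHomogeneousPolynomialOn_iter2 (t : ℕ) (m : ℤ) :
    IsHomogeneousPolynomialOn n 2 S fun L => iter2 k L t m := by
  induction t generalizing m with
  | zero => exact zero
  | succ t ih =>
    simp only [iter2]
    exact (((ih _).add (ih _)).add (((apply hS _).const_mul 2).mul (apply hS _))).const_mul _

theorem isHomogeneousPolynomialOn_iter3 (t : ℕ) (m : ℤ) :
    IsHomogeneousPolynomialOn n 3 S fun L => iter3 k L t m := by
  induction t generalizing m with
  | zero => exact zero
  | succ t ih =>
    have h2 := isHomogeneousPolynomialOn_iter2 hS k t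
    have h1 := apply hS
    simp only [iter3]
    exact ((((((((((((ih _).const_mul 4).add ((ih _).const_mul 10)).add ((ih _).const_mul 4)).add
      (((h2 _).const_mul 12).mul (h1 _))).add (((h2 _).const_mul 9).mul (h1 _))).add
      (((h2 _).const_mul 6).mul (h1 _))).add (((h1 _).const_mul 6).mul (h2 _))).add
      (((h1 _).const_mul 9).mul (h2 _))).add (((h1 _).const_mul 12).mul (h2 _))).add
      ((((h1 _).const_mul 18).mul (h1 _)).mul (h1 _))).const_mul _)

theorem isHomogeneousPolynomialOn_famN (N : ℤ) (d : ℕ) (m : ℤ) :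
    IsHomogeneousPolynomialOn n d S fun L => famN k L N d m := by
  unfold famN
  split_ifs with h1 h2 h3
  · exact h1 ▸ apply hS m
  · exact h2 ▸ isHomogeneousPolynomialOn_iter2 hS k _ m
  · exact h3 ▸ isHomogeneousPolynomialOn_iter3 hS k _ m
  · exact zero

end FanoRecursion

/-- Under `L 0 = k!` the index-one constants `L m - k!` become `L m - L 0`. -/
theorem isHomogeneousPolynomialOn_famIdx1 (k d : ℕ) (m : ℤ) :
    IsHomogeneousPolynomialOn k d {L | L ∈ supportedLines k ∧ L 0 = (k.factorial : ℚ)}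
      fun L => famIdx1 k L d m := by
  have hS : {L | L ∈ supportedLines k ∧ L 0 = (k.factorial : ℚ)} ⊆ supportedLines k :=
    fun _ hL => hL.1
  unfold famIdx1
  split_ifs with hd hm
  · subst hd
    exact ((apply hS m).sub (apply hS 0)).congr fun L hL => by rw [hL.2]
  · exact zero
  · exact isHomogeneousPolynomialOn_famN hS _ _ _ _

theorem structure_constants_polynomial_general (k : ℕ) (d : ℕ) (m : ℤ) (N : ℤ) :
    (∃ P : MvPolynomial (Fin k) ℚ, P.IsHomogeneous d ∧
      ∀ L : ℤ → ℚ, (∀ j : ℤ, L j ≠ 0 → 0 ≤ j ∧ j ≤ (k : ℤ) - 1) →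
        famN k L N d m = MvPolynomial.eval (fun i : Fin k => L ((i : ℕ) : ℤ)) P)
    ∧ (∃ P : MvPolynomial (Fin k) ℚ, P.IsHomogeneous d ∧
      ∀ L : ℤ → ℚ, (∀ j : ℤ, L j ≠ 0 → 0 ≤ j ∧ j ≤ (k : ℤ) - 1) →
        L 0 = (k.factorial : ℚ) →
        famIdx1 k L d m = MvPolynomial.eval (fun i : Fin k => L ((i : ℕ) : ℤ)) P) := by
  obtain ⟨P, hP, hLP⟩ := isHomogeneousPolynomialOn_famIdx1 k d m
  exact ⟨isHomogeneousPolynomialOn_famN subset_rfl _ N d m,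
    P, hP, fun L hL hL0 => hLP L ⟨hL, hL0⟩⟩

/-- Combinatorial content of Corollary 3: for `d ≤ 3` the structure constants produced
by the downward iteration of the Fano recursion are homogeneous polynomials of degree
`d` in the line constants `L_0, …, L_{k−1}`, both for `N − k ≥ 2` and for the index-one
case `N = k + 1` (where the degree-1 constants are `L_m − k!` and one additionally
requires `L_0 = k!`, so that `L_m − k! = L_m − L_0` is again homogeneous of degree 1). -/
theorem structure_constants_polynomial (k : ℕ) (hk : 2 ≤ k) (d : ℕ)
    (hd : d = 1 ∨ d = 2 ∨ d = 3) (m : ℤ) (N : ℤ) (hN : 2 ≤ N - k) :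
    (∃ P : MvPolynomial (Fin k) ℚ, P.IsHomogeneous d ∧
      ∀ L : ℤ → ℚ, (∀ j : ℤ, L j ≠ 0 → 0 ≤ j ∧ j ≤ (k : ℤ) - 1) →
        famN k L N d m = MvPolynomial.eval (fun i : Fin k => L ((i : ℕ) : ℤ)) P)
    ∧ (∃ P : MvPolynomial (Fin k) ℚ, P.IsHomogeneous d ∧
      ∀ L : ℤ → ℚ, (∀ j : ℤ, L j ≠ 0 → 0 ≤ j ∧ j ≤ (k : ℤ) - 1) →
        L 0 = (k.factorial : ℚ) →
        famIdx1 k L d m = MvPolynomial.eval (fun i : Fin k => L ((i : ℕ) : ℤ)) P) :=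
  structure_constants_polynomial_general k d m N
end

section
/- Let k ≥ 2 be an integer, set a_d := (kd)!/((d!)^k k^{kd}) for d ≥ 0, and define b_0 := 0 and b_d := a_d · Σ_{i=1}^{d} Σ_{m=1}^{k−1} m / (i(ki−m)) for d ≥ 1. Then for every d ≥ 1: d^{k−1} b_d + (k−1) d^{k−2} a_d = (∏_{j=1}^{k−1}(d−1+j/k)) · b_{d−1} + (Σ_{i=1}^{k−1} ∏_{j∈{1,…,k−1}, j≠i} (d−1+j/k)) · a_{d−1} (for k = 2 read d^{k−2} = 1 and the empty product as 1). Equivalently, the series W_1(x) := Σ_{d≥1} b_d e^{dx} + x·W_0(x), where W_0(x) = Σ_{d≥0} a_d e^{dx}, satisfies the hypergeometric differential equation ((d/dx)^{k−1} − e^x (d/dx + 1/k)(d/dx + 2/k)⋯(d/dx + (k−1)/k)) W_1 = 0. -/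
/-- The hypergeometric coefficients `a_d = (kd)! / ((d!)^k k^{kd})`. -/
def hyperA (k d : ℕ) : ℚ :=
  (Nat.factorial (k * d) : ℚ) / ((Nat.factorial d : ℚ) ^ k * (k : ℚ) ^ (k * d))

/-- The coefficients `b_d = a_d Σ_{i=1}^{d} Σ_{m=1}^{k−1} m/(i(ki−m))` of the second
hypergeometric solution `W_1`; note `b_0 = 0` since the sum is empty. -/
def hyperB (k d : ℕ) : ℚ :=
  hyperA k d * ∑ i ∈ Finset.Icc 1 d, ∑ m ∈ Finset.Icc 1 (k - 1),
    (m : ℚ) / ((i : ℚ) * ((k : ℚ) * (i : ℚ) - (m : ℚ)))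

open Finset

private lemma fact_mul_prod (n m : ℕ) :
    Nat.factorial (n + m) = Nat.factorial n * ∏ j ∈ Icc 1 m, (n + j) := by
  induction m with
  | zero => simp
  | succ m ih =>
    rw [← add_assoc, Nat.factorial_succ, ih, prod_Icc_succ_top (Nat.le_add_left 1 m)]
    ring

private lemma hyperA_rec (n e : ℕ) :
    ((e:ℚ)+1)^(n+1) * hyperA (n+2) (e+1)
      = (∏ j ∈ Icc 1 (n+1), ((e:ℚ) + (j:ℚ)/((n:ℚ)+2))) * hyperA (n+2) e := by
  have hk : ((n:ℚ)+2) ≠ 0 := by positivity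
  have cast1 : ∏ j ∈ Icc 1 (n+1), (((n:ℚ)+2)*(e:ℚ) + (j:ℚ))
      = ((n:ℚ)+2)^(n+1) * ∏ j ∈ Icc 1 (n+1), ((e:ℚ) + (j:ℚ)/((n:ℚ)+2)) := by
    rw [show (((n:ℚ)+2)^(n+1) : ℚ) = ∏ _j ∈ Icc 1 (n+1), ((n:ℚ)+2) by
      rw [prod_const, Nat.card_Icc]; norm_num]
    rw [← prod_mul_distrib]
    refine prod_congr rfl fun j _ => ?_
    field_simp
  have hfact : Nat.factorial ((n+2)*(e+1))
      = Nat.factorial ((n+2)*e) * (∏ j ∈ Icc 1 (n+1), ((n+2)*e + j)) * ((n+2)*e + (n+2)) := by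
    rw [show (n+2)*(e+1) = ((n+2)*e + (n+1)) + 1 by ring, Nat.factorial_succ,
      fact_mul_prod ((n+2)*e) (n+1), show (n+2)*e+(n+1)+1 = (n+2)*e+(n+2) by ring]
    ring
  have hne : (Nat.factorial e : ℚ) ≠ 0 := Nat.cast_ne_zero.mpr (Nat.factorial_ne_zero e)
  have he1 : ((e:ℚ)+1) ≠ 0 := by positivity
  unfold hyperA
  rw [hfact, Nat.factorial_succ e, show (n+2)*(e+1) = (n+2)*e + (n+2) by ring]
  push_cast
  rw [cast1]
  set P := ∏ j ∈ Icc 1 (n+1), ((e:ℚ) + (j:ℚ)/((n:ℚ)+2)) with hP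
  rw [show ((n:ℚ)+2)*(e:ℚ) + ((n:ℚ)+2) = ((n:ℚ)+2)*((e:ℚ)+1) by ring]
  generalize hy : ((e:ℚ)+1) = y at he1 ⊢
  generalize hz : ((n:ℚ)+2) = z at hk ⊢
  field_simp
  ring

private lemma sum_inv_reindex (n e : ℕ) :
    ∑ i ∈ Icc 1 (n+1), ((e:ℚ) + (i:ℚ)/((n:ℚ)+2))⁻¹
      = ∑ m ∈ Icc 1 (n+1), ((n:ℚ)+2) / (((n:ℚ)+2)*((e:ℚ)+1) - (m:ℚ)) := by
  refine Finset.sum_nbij' (fun i => n + 2 - i) (fun m => n + 2 - m)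
    (fun a ha => ?_) (fun a ha => ?_) (fun a ha => ?_) (fun a ha => ?_) (fun a ha => ?_)
  · simp only [mem_Icc] at *; omega
  · simp only [mem_Icc] at *; omega
  · simp only [mem_Icc] at *; omega
  · simp only [mem_Icc] at *; omega
  · simp only [mem_Icc] at ha
    have hc : ((n + 2 - a : ℕ) : ℚ) = ((n:ℚ) + 2) - (a:ℚ) := by
      push_cast [Nat.cast_sub (by omega : a ≤ n + 2)]; ring
    rw [hc]
    have h1 : ((n:ℚ)+2)*((e:ℚ)+1) - (((n:ℚ)+2) - (a:ℚ)) = ((n:ℚ)+2)*(e:ℚ) + a := by ring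
    rw [h1]
    have hk : ((n:ℚ)+2) ≠ 0 := by positivity
    have ha1 : (1:ℚ) ≤ (a:ℚ) := by exact_mod_cast ha.1
    have hd : ((n:ℚ)+2)*(e:ℚ) + (a:ℚ) ≠ 0 := by positivity
    rw [eq_div_iff hd, inv_mul_eq_div, div_eq_iff (by positivity)]
    field_simp

/-- Recurrence for the coefficients of `W_1(x) = Σ_{d≥1} b_d e^{dx} + x W_0(x)`,
equivalent to `W_1` satisfying the hypergeometric differential equation
`((d/dx)^{k−1} − e^x ∏_{j=1}^{k−1}(d/dx + j/k)) W_1 = 0`: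
`d^{k−1} b_d + (k−1) d^{k−2} a_d
  = (∏_{j=1}^{k−1}(d−1+j/k)) b_{d−1} + (Σ_{i=1}^{k−1} ∏_{j≠i}(d−1+j/k)) a_{d−1}`. -/
theorem hyperB_recurrence (k : ℕ) (hk : 2 ≤ k) (d : ℕ) (hd : 1 ≤ d) :
    (d : ℚ) ^ (k - 1) * hyperB k d + ((k : ℚ) - 1) * (d : ℚ) ^ (k - 2) * hyperA k d
      = (∏ j ∈ Finset.Icc 1 (k - 1), ((d : ℚ) - 1 + (j : ℚ) / (k : ℚ))) * hyperB k (d - 1)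
        + (∑ i ∈ Finset.Icc 1 (k - 1),
            ∏ j ∈ (Finset.Icc 1 (k - 1)).erase i, ((d : ℚ) - 1 + (j : ℚ) / (k : ℚ)))
          * hyperA k (d - 1) := by
  obtain ⟨n, rfl⟩ : ∃ n, k = n + 2 := ⟨k - 2, by omega⟩
  obtain ⟨e, rfl⟩ : ∃ e, d = e + 1 := ⟨d - 1, by omega⟩
  clear hk hd
  simp only [show n+2-1 = n+1 from rfl, show n+2-2 = n from rfl, show e+1-1 = e from rfl]
  push_cast
  have hterm : ∀ j : ℕ, ((e:ℚ) + 1 - 1 + (j:ℚ)/((n:ℚ)+2)) = (e:ℚ) + (j:ℚ)/((n:ℚ)+2) :=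
    fun j => by ring
  simp only [hterm]
  -- abbreviations
  set A := hyperA (n+2) e with hA
  set A' := hyperA (n+2) (e+1) with hA'
  set P := ∏ j ∈ Icc 1 (n+1), ((e:ℚ) + (j:ℚ)/((n:ℚ)+2)) with hPdef
  set S := ∑ i ∈ Icc 1 e, ∑ m ∈ Icc 1 (n+1),
      (m : ℚ) / ((i : ℚ) * (((n:ℚ)+2) * (i : ℚ) - (m : ℚ))) with hSdef
  set T := ∑ m ∈ Icc 1 (n+1),
      (m : ℚ) / (((e:ℚ)+1) * (((n:ℚ)+2) * ((e:ℚ)+1) - (m : ℚ))) with hTdef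
  have he1 : ((e:ℚ)+1) ≠ 0 := by positivity
  have hkq : ((n:ℚ)+2) ≠ 0 := by positivity
  -- hyperB unfoldings
  have hB1 : hyperB (n+2) (e+1) = A' * (S + T) := by
    rw [hyperB, Finset.sum_Icc_succ_top (by omega : 1 ≤ e + 1)]
    push_cast
    rw [hA', hSdef, hTdef]
  have hB0 : hyperB (n+2) e = A * S := by
    rw [hyperB]
    push_cast
    rw [hA, hSdef]
  -- nonvanishing of the product factors
  have hf : ∀ i ∈ Icc 1 (n+1), ((e:ℚ) + (i:ℚ)/((n:ℚ)+2)) ≠ 0 := by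
    intro i hi
    have h1 : (1:ℚ) ≤ (i:ℚ) := by exact_mod_cast (mem_Icc.mp hi).1
    positivity
  -- h1 : a-recurrence
  have h1 : ((e:ℚ)+1)^(n+1) * A' = P * A := hyperA_rec n e
  have h1n : ((e:ℚ)+1)^n * A' = P * A / ((e:ℚ)+1) := by
    rw [eq_div_iff he1]
    linear_combination h1 - (pow_succ ((e:ℚ)+1) n) * A'
  -- h2 : sum of erased products
  have h2 : ∑ i ∈ Icc 1 (n+1), ∏ j ∈ (Icc 1 (n+1)).erase i, ((e:ℚ) + (j:ℚ)/((n:ℚ)+2))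
      = P * ∑ i ∈ Icc 1 (n+1), ((e:ℚ) + (i:ℚ)/((n:ℚ)+2))⁻¹ := by
    rw [mul_sum]
    refine sum_congr rfl fun i hi => ?_
    rw [mul_comm, inv_mul_eq_div, eq_div_iff (hf i hi), hPdef]
    exact Finset.prod_erase_mul _ _ hi
  -- h3 : the inverse sum equals T + (n+1)/(e+1)
  have h3 : ∑ i ∈ Icc 1 (n+1), ((e:ℚ) + (i:ℚ)/((n:ℚ)+2))⁻¹
      = T + ((n:ℚ)+1)/((e:ℚ)+1) := by
    rw [sum_inv_reindex]
    have : ∀ m ∈ Icc 1 (n+1),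
        ((n:ℚ)+2) / (((n:ℚ)+2)*((e:ℚ)+1) - (m:ℚ))
          = (m : ℚ) / (((e:ℚ)+1) * (((n:ℚ)+2) * ((e:ℚ)+1) - (m : ℚ))) + 1/((e:ℚ)+1) := by
      intro m hm
      have hm' := mem_Icc.mp hm
      have hm1 : (1:ℚ) ≤ (m:ℚ) := by exact_mod_cast hm'.1
      have hm2 : (m:ℚ) ≤ (n:ℚ)+1 := by exact_mod_cast hm'.2
      have hD : ((n:ℚ)+2)*((e:ℚ)+1) - (m:ℚ) ≠ 0 := by
        have : ((n:ℚ)+2) ≤ ((n:ℚ)+2)*((e:ℚ)+1) := by nlinarith [Nat.cast_nonneg (α := ℚ) e]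
        intro h; nlinarith
      field_simp
      ring
    rw [sum_congr rfl this, sum_add_distrib, sum_const, Nat.card_Icc]
    rw [hTdef]
    push_cast
    ring
  rw [hB1, hB0, h2, h3]
  linear_combination (S+T)*h1 + ((n:ℚ)+1)*h1n
end

section
/- Let F be a function assigning a rational number to every finite multiset of integers, and let G be a function assigning a rational number to every ordered pair (S, T) of finite multisets of integers, satisfying: (i) G(∅, T) = F(T) for every T, and (ii) for every integer a and all finite multisets S, T: G(S + {a}, T) = G(S, T + {a+1}) − Σ_{s ∈ S} G((S − {s}) + {s + a}, T), where the sum runs over the elements of S counted with multiplicity. Then for every list of integers a_1, …, a_n (n ≥ 1): G({a_1 − 1, …, a_n − 1}, ∅) = Σ_P (−1)^{n−|P|} (∏_{U ∈ P} (|U| − 1)!) · F({ (Σ_{i ∈ U} (a_i − 1)) + 1 : U ∈ P }), where P runs over all set partitions of {1, …, n} into nonempty blocks and |P| is the number of blocks. -/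
namespace SpecAux
open Finset

def SP (n : ℕ) : Finset (Finset (Finset (Fin n))) :=
  Finset.univ.filter (fun parts => ∅ ∉ parts ∧ ∀ i, (parts.filter (fun U => i ∈ U)).card = 1)

lemma mem_SP {n : ℕ} {p : Finset (Finset (Fin n))} :
    p ∈ SP n ↔ ∅ ∉ p ∧ ∀ i, (p.filter (fun U => i ∈ U)).card = 1 := by
  simp [SP]

lemma block_uniq {n : ℕ} {p : Finset (Finset (Fin n))} (hp : p ∈ SP n) {i : Fin n}
    {U V : Finset (Fin n)} (hU : U ∈ p) (hV : V ∈ p) (hiU : i ∈ U) (hiV : i ∈ V) : U = V := by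
  obtain ⟨-, h⟩ := mem_SP.mp hp
  obtain ⟨W, hW⟩ := Finset.card_eq_one.mp (h i)
  have h1 : U ∈ p.filter (fun U => i ∈ U) := mem_filter.mpr ⟨hU, hiU⟩
  have h2 : V ∈ p.filter (fun U => i ∈ U) := mem_filter.mpr ⟨hV, hiV⟩
  rw [hW, mem_singleton] at h1 h2
  rw [h1, h2]

lemma exists_block {n : ℕ} {p : Finset (Finset (Fin n))} (hp : p ∈ SP n) (i : Fin n) :
    ∃ U ∈ p, i ∈ U := by
  obtain ⟨-, h⟩ := mem_SP.mp hp
  obtain ⟨W, hW⟩ := Finset.card_eq_one.mp (h i)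
  have hW' : W ∈ p.filter (fun U => i ∈ U) := hW ▸ mem_singleton_self W
  exact ⟨W, (mem_filter.mp hW').1, (mem_filter.mp hW').2⟩

lemma card_SP_le {n : ℕ} {p : Finset (Finset (Fin n))} (hp : p ∈ SP n) : p.card ≤ n := by
  obtain ⟨h0, h⟩ := mem_SP.mp hp
  have key : ∑ U ∈ p, U.card = n := by
    have h1 : ∀ U : Finset (Fin n), U.card = ∑ i : Fin n, if i ∈ U then 1 else 0 := by
      intro U
      rw [← Finset.card_filter, Finset.filter_univ_mem]
    calc ∑ U ∈ p, U.card = ∑ U ∈ p, ∑ i : Fin n, if i ∈ U then 1 else 0 :=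
          Finset.sum_congr rfl fun U _ => h1 U
      _ = ∑ i : Fin n, ∑ U ∈ p, if i ∈ U then 1 else 0 := Finset.sum_comm
      _ = ∑ i : Fin n, (p.filter (fun U => i ∈ U)).card :=
          Finset.sum_congr rfl fun i _ => (Finset.card_filter _ _).symm
      _ = ∑ _i : Fin n, 1 := Finset.sum_congr rfl fun i _ => h i
      _ = n := by simp
  calc p.card = ∑ _U ∈ p, 1 := by simp
    _ ≤ ∑ U ∈ p, U.card := Finset.sum_le_sum fun U hU => by
        rcases Finset.eq_empty_or_nonempty U with rfl | hne
        · exact absurd hU h0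
        · exact hne.card_pos
    _ = n := key

section Maps
variable {n : ℕ}

def sh (U : Finset (Fin n)) : Finset (Fin (n + 1)) := U.image Fin.succ

noncomputable def rr (V : Finset (Fin (n + 1))) : Finset (Fin n) :=
  V.preimage Fin.succ ((Fin.succ_injective n).injOn)

lemma mem_rr {V : Finset (Fin (n + 1))} {k : Fin n} : k ∈ rr V ↔ k.succ ∈ V :=
  Finset.mem_preimage

lemma succ_mem_sh {U : Finset (Fin n)} {k : Fin n} : k.succ ∈ sh U ↔ k ∈ U := by
  constructor
  · intro h
    obtain ⟨m, hm, hmk⟩ := Finset.mem_image.mp h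
    rwa [← Fin.succ_injective n hmk]
  · exact fun h => Finset.mem_image_of_mem _ h

lemma zero_not_mem_sh {U : Finset (Fin n)} : (0 : Fin (n + 1)) ∉ sh U := by
  intro h
  obtain ⟨m, _, hmk⟩ := Finset.mem_image.mp h
  exact Fin.succ_ne_zero m hmk

lemma rr_sh {U : Finset (Fin n)} : rr (sh U) = U :=
  Finset.ext fun k => by rw [mem_rr, succ_mem_sh]

lemma sh_rr {V : Finset (Fin (n + 1))} : sh (rr V) = V.erase 0 := by
  ext i
  refine Fin.cases ?_ (fun k => ?_) i
  · simp [zero_not_mem_sh]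
  · rw [succ_mem_sh, mem_rr, Finset.mem_erase]
    simp [Fin.succ_ne_zero]

lemma sh_injective : Function.Injective (sh (n := n)) := fun U V h => by
  rw [← rr_sh (U := U), h, rr_sh]

lemma card_sh {U : Finset (Fin n)} : (sh U).card = U.card :=
  Finset.card_image_of_injective _ (Fin.succ_injective n)

lemma card_rr {V : Finset (Fin (n + 1))} : (rr V).card = (V.erase 0).card := by
  rw [← sh_rr, card_sh]

lemma sum_sh (v : Fin (n + 1) → ℤ) {U : Finset (Fin n)} :
    ∑ i ∈ sh U, v i = ∑ k ∈ U, v k.succ :=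
  Finset.sum_image fun x _ y _ h => Fin.succ_injective n h

lemma sum_rr (v : Fin (n + 1) → ℤ) {V : Finset (Fin (n + 1))} :
    ∑ k ∈ rr V, v k.succ = ∑ i ∈ V.erase 0, v i := by
  rw [← sum_sh v, sh_rr]

def gg (j : Fin n) (U : Finset (Fin n)) : Finset (Fin (n + 1)) :=
  if j ∈ U then insert 0 (sh U) else sh U

lemma zero_mem_gg {j : Fin n} {U : Finset (Fin n)} : (0 : Fin (n + 1)) ∈ gg j U ↔ j ∈ U := by
  unfold gg; split <;> simp [zero_not_mem_sh, *]

lemma succ_mem_gg {j : Fin n} {U : Finset (Fin n)} {k : Fin n} : k.succ ∈ gg j U ↔ k ∈ U := by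
  unfold gg; split <;> simp [succ_mem_sh, Fin.succ_ne_zero]

lemma rr_gg {j : Fin n} {U : Finset (Fin n)} : rr (gg j U) = U :=
  Finset.ext fun k => by rw [mem_rr, succ_mem_gg]

lemma gg_injective (j : Fin n) : Function.Injective (gg (n := n) j) := fun U V h => by
  rw [← rr_gg (j := j) (U := U), h, rr_gg]

lemma rr_empty : rr (n := n) ∅ = ∅ := Finset.ext fun k => by simp [mem_rr]

lemma rr_singleton_zero : rr (n := n) {0} = ∅ :=
  Finset.ext fun k => by simp [mem_rr, Fin.succ_ne_zero]

lemma gg_ne_empty {j : Fin n} {U : Finset (Fin n)} (h : U ≠ ∅) : gg j U ≠ ∅ := by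
  intro hc
  apply h
  rw [← rr_gg (j := j) (U := U), hc, rr_empty]

lemma gg_ne_singleton_zero {j : Fin n} {U : Finset (Fin n)} (h : U ≠ ∅) : gg j U ≠ {0} := by
  intro hc
  apply h
  rw [← rr_gg (j := j) (U := U), hc, rr_singleton_zero]

lemma rr_erase_succ {V : Finset (Fin (n + 1))} {j : Fin n} :
    (rr V).erase j = rr (V.erase j.succ) := by
  ext k
  simp only [Finset.mem_erase, mem_rr]
  rw [← (Fin.succ_injective n).ne_iff]

end Maps

section Parts
variable {n : ℕ}

def insA (q : Finset (Finset (Fin n))) : Finset (Finset (Fin (n + 1))) :=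
  insert {0} (q.image sh)

noncomputable def pullA (p : Finset (Finset (Fin (n + 1)))) : Finset (Finset (Fin n)) :=
  (p.erase {0}).image rr

def phi (j : Fin n) (q : Finset (Finset (Fin n))) : Finset (Finset (Fin (n + 1))) :=
  q.image (gg j)

noncomputable def pl (p : Finset (Finset (Fin (n + 1)))) : Finset (Finset (Fin n)) :=
  p.image rr

lemma singleton_zero_not_mem_image_sh {q : Finset (Finset (Fin n))} :
    ({0} : Finset (Fin (n + 1))) ∉ q.image sh := by
  simp only [Finset.mem_image, not_exists, not_and]
  rintro U - h
  have : (0 : Fin (n + 1)) ∈ sh U := h ▸ Finset.mem_singleton_self 0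
  exact zero_not_mem_sh this

lemma sh_ne_empty {U : Finset (Fin n)} (h : U ≠ ∅) : sh U ≠ ∅ := by
  intro hc; apply h; rw [← rr_sh (U := U), hc, rr_empty]

lemma insA_mem {q : Finset (Finset (Fin n))} (hq : q ∈ SP n) : insA q ∈ SP (n + 1) := by
  obtain ⟨h0, hcard⟩ := mem_SP.mp hq
  rw [mem_SP]
  constructor
  · intro h
    rcases Finset.mem_insert.mp h with h | h
    · exact (Finset.singleton_ne_empty (0 : Fin (n + 1))) h.symm
    · obtain ⟨U, hU, hshU⟩ := Finset.mem_image.mp h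
      have hUne : U ≠ ∅ := fun hc => h0 (hc ▸ hU)
      exact sh_ne_empty hUne hshU
  · intro i
    refine Fin.cases ?_ (fun k => ?_) i
    · have : (insA q).filter (fun U => (0 : Fin (n + 1)) ∈ U) = {({0} : Finset (Fin (n + 1)))} := by
        rw [insA, Finset.filter_insert, if_pos (Finset.mem_singleton_self 0),
          Finset.filter_image]
        have : q.filter (fun U => (0 : Fin (n + 1)) ∈ sh U) = ∅ := by
          apply Finset.filter_false_of_mem
          intro U _
          exact zero_not_mem_sh
        rw [this, Finset.image_empty]; rfl
      rw [this, Finset.card_singleton]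
    · have h1 : (insA q).filter (fun U => k.succ ∈ U)
          = (q.filter (fun U => k ∈ U)).image sh := by
        rw [insA, Finset.filter_insert, if_neg (by simp [Fin.succ_ne_zero]),
          Finset.filter_image]
        congr 1
        apply Finset.filter_congr
        intro U _
        simp [succ_mem_sh]
      rw [h1, Finset.card_image_of_injective _ sh_injective]
      exact hcard k

lemma zero_mem_of_block {p : Finset (Finset (Fin (n + 1)))} (hp : p ∈ SP (n + 1))
    {V : Finset (Fin (n + 1))} (hV : V ∈ p) (h : rr V = ∅) : V = {0} := by
  have hVne : V ≠ ∅ := fun hc => (mem_SP.mp hp).1 (hc ▸ hV)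
  have h2 : V.erase 0 = ∅ := by rw [← sh_rr, h, sh, Finset.image_empty]
  have hsub : V ⊆ {0} := by
    intro i hi
    rcases eq_or_ne i 0 with rfl | hne
    · exact Finset.mem_singleton_self 0
    · exact absurd (Finset.mem_erase.mpr ⟨hne, hi⟩) (by rw [h2]; exact Finset.notMem_empty i)
  obtain ⟨i, hi⟩ := Finset.nonempty_iff_ne_empty.mpr hVne
  have : i = 0 := Finset.mem_singleton.mp (hsub hi)
  rw [Finset.eq_singleton_iff_unique_mem]
  exact ⟨this ▸ hi, fun j hj => Finset.mem_singleton.mp (hsub hj)⟩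

lemma rr_injOn {p : Finset (Finset (Fin (n + 1)))} (hp : p ∈ SP (n + 1)) :
    Set.InjOn rr (↑p : Set (Finset (Fin (n + 1)))) := by
  intro V hV V' hV' h
  have hVp : V ∈ p := hV
  have hV'p : V' ∈ p := hV'
  have he : V.erase 0 = V'.erase 0 := by rw [← sh_rr, h, sh_rr]
  rcases Finset.eq_empty_or_nonempty (V.erase 0) with h1 | ⟨i, hi⟩
  · have h1' : rr V = ∅ := Finset.card_eq_zero.mp (by rw [card_rr, h1, Finset.card_empty])
    have hV0 := zero_mem_of_block hp hVp h1'
    have hV'0 := zero_mem_of_block hp hV'p (by rw [← h]; exact h1')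
    rw [hV0, hV'0]
  · have hi' : i ∈ V'.erase 0 := he ▸ hi
    exact block_uniq hp hVp hV'p (Finset.mem_of_mem_erase hi) (Finset.mem_of_mem_erase hi')

lemma rr_injOn_erase {p : Finset (Finset (Fin (n + 1)))} (hp : p ∈ SP (n + 1)) :
    Set.InjOn rr (↑(p.erase {0}) : Set (Finset (Fin (n + 1)))) :=
  (rr_injOn hp).mono (by exact_mod_cast Finset.erase_subset _ _)

lemma filter_succ_no_zero {p : Finset (Finset (Fin (n + 1)))} (k : Fin n) :
    ({0} : Finset (Fin (n + 1))) ∉ p.filter (fun V => k.succ ∈ V) := by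
  intro h
  have := (Finset.mem_filter.mp h).2
  exact Fin.succ_ne_zero k (Finset.mem_singleton.mp this)

lemma filter_card_succ_erase {p : Finset (Finset (Fin (n + 1)))} (hp : p ∈ SP (n + 1)) (k : Fin n) :
    ((p.erase {0}).filter (fun V => k.succ ∈ V)).card = 1 := by
  have h1 : (p.erase {0}).filter (fun V => k.succ ∈ V)
      = (p.filter (fun V => k.succ ∈ V)).erase {0} := by
    ext V
    simp only [Finset.mem_filter, Finset.mem_erase]
    tauto
  rw [h1, Finset.erase_eq_of_notMem (filter_succ_no_zero k)]
  exact (mem_SP.mp hp).2 k.succ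

lemma pullA_mem {p : Finset (Finset (Fin (n + 1)))} (hp : p ∈ SP (n + 1)) :
    pullA p ∈ SP n := by
  rw [mem_SP]
  constructor
  · intro h
    obtain ⟨V, hV, hrV⟩ := Finset.mem_image.mp h
    have hVp : V ∈ p := Finset.mem_of_mem_erase hV
    have : V = {0} := zero_mem_of_block hp hVp hrV
    exact (Finset.mem_erase.mp hV).1 this
  · intro k
    have h1 : (pullA p).filter (fun U => k ∈ U)
        = ((p.erase {0}).filter (fun V => k.succ ∈ V)).image rr := by
      rw [pullA, Finset.filter_image]
      congr 1
      exact Finset.filter_congr fun V _ => by rw [mem_rr]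
    rw [h1, Finset.card_image_of_injOn
      ((rr_injOn_erase hp).mono (by exact_mod_cast Finset.filter_subset _ _))]
    exact filter_card_succ_erase hp k

lemma pl_mem {p : Finset (Finset (Fin (n + 1)))} (hp : p ∈ SP (n + 1))
    (h0 : ({0} : Finset (Fin (n + 1))) ∉ p) : pl p ∈ SP n := by
  have hpl : pl p = pullA p := by
    rw [pl, pullA, Finset.erase_eq_of_notMem h0]
  rw [hpl]
  exact pullA_mem hp

lemma card_pl {p : Finset (Finset (Fin (n + 1)))} (hp : p ∈ SP (n + 1)) :
    (pl p).card = p.card :=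
  Finset.card_image_of_injOn (rr_injOn hp)

lemma pullA_insA {q : Finset (Finset (Fin n))} : pullA (insA q) = q := by
  rw [insA, pullA, Finset.erase_insert singleton_zero_not_mem_image_sh,
    Finset.image_image]
  calc q.image (rr ∘ sh) = q.image id := Finset.image_congr fun U _ => rr_sh
    _ = q := Finset.image_id

lemma insA_pullA {p : Finset (Finset (Fin (n + 1)))} (hp : p ∈ SP (n + 1))
    (h0 : ({0} : Finset (Fin (n + 1))) ∈ p) : insA (pullA p) = p := by
  rw [insA, pullA, Finset.image_image]
  have h1 : (p.erase {0}).image (sh ∘ rr) = p.erase {0} := by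
    have := Finset.image_congr (f := sh ∘ rr) (g := id) (s := p.erase {0}) ?_
    · rw [this, Finset.image_id]
    · intro V hV
      have hVp : V ∈ p := Finset.mem_of_mem_erase hV
      have hVne : V ≠ {0} := (Finset.mem_erase.mp hV).1
      have h0V : (0 : Fin (n + 1)) ∉ V := by
        intro hc
        exact hVne (block_uniq hp hVp h0 hc (Finset.mem_singleton_self 0))
      show sh (rr V) = V
      rw [sh_rr, Finset.erase_eq_of_notMem h0V]
  rw [h1, Finset.insert_erase h0]

lemma phi_mem {q : Finset (Finset (Fin n))} (hq : q ∈ SP n) (j : Fin n) :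
    phi j q ∈ SP (n + 1) ∧ ({0} : Finset (Fin (n + 1))) ∉ phi j q := by
  obtain ⟨h0, hcard⟩ := mem_SP.mp hq
  have hmemne : ∀ U ∈ q, U ≠ ∅ := fun U hU hc => h0 (hc ▸ hU)
  constructor
  · rw [mem_SP]
    constructor
    · intro h
      obtain ⟨U, hU, hgU⟩ := Finset.mem_image.mp h
      exact gg_ne_empty (hmemne U hU) hgU
    · intro i
      refine Fin.cases ?_ (fun k => ?_) i
      · have h1 : (phi j q).filter (fun U => (0 : Fin (n + 1)) ∈ U)
            = (q.filter (fun U => j ∈ U)).image (gg j) := by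
          rw [phi, Finset.filter_image]
          congr 1
          exact Finset.filter_congr fun U _ => by rw [zero_mem_gg]
        rw [h1, Finset.card_image_of_injective _ (gg_injective j)]
        exact hcard j
      · have h1 : (phi j q).filter (fun U => k.succ ∈ U)
            = (q.filter (fun U => k ∈ U)).image (gg j) := by
          rw [phi, Finset.filter_image]
          congr 1
          exact Finset.filter_congr fun U _ => by rw [succ_mem_gg]
        rw [h1, Finset.card_image_of_injective _ (gg_injective j)]
        exact hcard k
  · intro h
    obtain ⟨U, hU, hgU⟩ := Finset.mem_image.mp h
    exact gg_ne_singleton_zero (hmemne U hU) hgU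

lemma pl_phi {q : Finset (Finset (Fin n))} (j : Fin n) : pl (phi j q) = q := by
  rw [pl, phi, Finset.image_image]
  calc q.image (rr ∘ gg j) = q.image id := Finset.image_congr fun U _ => rr_gg
    _ = q := Finset.image_id

lemma phi_eq_iff {p : Finset (Finset (Fin (n + 1)))} {q : Finset (Finset (Fin n))}
    {j : Fin n} (hp : p ∈ SP (n + 1)) (h0 : ({0} : Finset (Fin (n + 1))) ∉ p)
    (hq : q ∈ SP n) {U0 : Finset (Fin (n + 1))} (hU0 : U0 ∈ p) (h00 : (0 : Fin (n + 1)) ∈ U0) :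
    phi j q = p ↔ (j.succ ∈ U0 ∧ q = pl p) := by
  constructor
  · intro h
    obtain ⟨U, hU, hjU⟩ := exists_block hq j
    have hgU : gg j U ∈ p := h ▸ Finset.mem_image_of_mem _ hU
    have hzero : (0 : Fin (n + 1)) ∈ gg j U := zero_mem_gg.mpr hjU
    have : gg j U = U0 := block_uniq hp hgU hU0 hzero h00
    refine ⟨this ▸ succ_mem_gg.mpr hjU, ?_⟩
    rw [← h, pl_phi]
  · rintro ⟨hj, rfl⟩
    rw [phi, pl, Finset.image_image]
    have h1 : ∀ V ∈ p, (gg j ∘ rr) V = id V := by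
      intro V hV
      show gg j (rr V) = V
      by_cases hVU0 : V = U0
      · subst hVU0
        have hjrr : j ∈ rr V := mem_rr.mpr hj
        rw [gg, if_pos hjrr, sh_rr, Finset.insert_erase h00]
      · have h0V : (0 : Fin (n + 1)) ∉ V := fun hc =>
          hVU0 (block_uniq hp hV hU0 hc h00)
        have hjV : j ∉ rr V := by
          rw [mem_rr]
          intro hc
          exact hVU0 (block_uniq hp hV hU0 hc hj)
        rw [gg, if_neg hjV, sh_rr, Finset.erase_eq_of_notMem h0V]
    rw [Finset.image_congr h1, Finset.image_id]

lemma two_le_card_U0 {p : Finset (Finset (Fin (n + 1)))} (hp : p ∈ SP (n + 1))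
    (h0 : ({0} : Finset (Fin (n + 1))) ∉ p) {U0 : Finset (Fin (n + 1))} (hU0 : U0 ∈ p)
    (h00 : (0 : Fin (n + 1)) ∈ U0) : 2 ≤ U0.card := by
  have hne : U0 ≠ {0} := fun hc => h0 (hc ▸ hU0)
  have : ∃ b ∈ U0, b ≠ 0 := by
    by_contra hc
    push_neg at hc
    apply hne
    rw [Finset.eq_singleton_iff_unique_mem]
    exact ⟨h00, hc⟩
  obtain ⟨b, hb, hbne⟩ := this
  exact Finset.one_lt_card.mpr ⟨b, hb, 0, h00, hbne⟩

lemma B_block_sum (v : Fin (n + 1) → ℤ) {p : Finset (Finset (Fin (n + 1)))}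
    (hp : p ∈ SP (n + 1)) {U0 : Finset (Fin (n + 1))} (hU0 : U0 ∈ p)
    (h00 : (0 : Fin (n + 1)) ∈ U0) {j : Fin n} (hj : j.succ ∈ U0)
    {V : Finset (Fin (n + 1))} (hV : V ∈ p) :
    ∑ k ∈ rr V, Function.update (fun k => v k.succ) j (v j.succ + v 0) k
      = ∑ i ∈ V, v i := by
  set w : Fin n → ℤ := Function.update (fun k => v k.succ) j (v j.succ + v 0) with hw
  by_cases hVU0 : V = U0
  · subst hVU0
    have hjrr : j ∈ rr V := mem_rr.mpr hj
    rw [← Finset.add_sum_erase _ w hjrr]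
    have h1 : w j = v j.succ + v 0 := Function.update_self _ _ _
    have h2 : ∑ k ∈ (rr V).erase j, w k = ∑ k ∈ (rr V).erase j, v k.succ :=
      Finset.sum_congr rfl fun k hk =>
        Function.update_of_ne (Finset.mem_erase.mp hk).1 _ _
    rw [h1, h2, rr_erase_succ, sum_rr]
    have h3 : (V.erase j.succ).erase 0 = (V.erase 0).erase j.succ := by
      ext i; simp only [Finset.mem_erase]; tauto
    rw [h3]
    have hjs : j.succ ∈ V.erase 0 := Finset.mem_erase.mpr ⟨Fin.succ_ne_zero j, hj⟩
    have h4 : v j.succ + ∑ i ∈ (V.erase 0).erase j.succ, v i = ∑ i ∈ V.erase 0, v i :=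
      Finset.add_sum_erase _ v hjs
    have h5 : v 0 + ∑ i ∈ V.erase 0, v i = ∑ i ∈ V, v i :=
      Finset.add_sum_erase _ v h00
    linarith [h4, h5]
  · have h0V : (0 : Fin (n + 1)) ∉ V := fun hc => hVU0 (block_uniq hp hV hU0 hc h00)
    have hjV : j ∉ rr V := by
      rw [mem_rr]; intro hc; exact hVU0 (block_uniq hp hV hU0 hc hj)
    have h2 : ∑ k ∈ rr V, w k = ∑ k ∈ rr V, v k.succ :=
      Finset.sum_congr rfl fun k hk =>
        Function.update_of_ne (fun hc : k = j => hjV (hc ▸ hk)) _ _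
    rw [h2, sum_rr, Finset.erase_eq_of_notMem h0V]

lemma B_map_eq (v : Fin (n + 1) → ℤ) {p : Finset (Finset (Fin (n + 1)))}
    (hp : p ∈ SP (n + 1)) {U0 : Finset (Fin (n + 1))} (hU0 : U0 ∈ p)
    (h00 : (0 : Fin (n + 1)) ∈ U0) {j : Fin n} (hj : j.succ ∈ U0) :
    (pl p).val.map
        (fun U => (∑ k ∈ U, Function.update (fun k => v k.succ) j (v j.succ + v 0) k) + 1)
      = p.val.map (fun V => (∑ i ∈ V, v i) + 1) := by
  rw [pl, Finset.image_val_of_injOn (rr_injOn hp), Multiset.map_map]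
  refine Multiset.map_congr rfl fun V hV => ?_
  have hVp : V ∈ p := hV
  show (∑ k ∈ rr V, _) + 1 = _
  rw [B_block_sum v hp hU0 h00 hj hVp]

lemma B_prod (hq : True) {p : Finset (Finset (Fin (n + 1)))}
    (hp : p ∈ SP (n + 1)) (h0 : ({0} : Finset (Fin (n + 1))) ∉ p)
    {U0 : Finset (Fin (n + 1))} (hU0 : U0 ∈ p) (h00 : (0 : Fin (n + 1)) ∈ U0) :
    ((U0.card - 1 : ℕ) : ℚ) * ∏ U ∈ pl p, ((U.card - 1).factorial : ℚ)
      = ∏ V ∈ p, ((V.card - 1).factorial : ℚ) := by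
  have h2card := two_le_card_U0 hp h0 hU0 h00
  have hprod : ∏ U ∈ pl p, ((U.card - 1).factorial : ℚ)
      = ∏ V ∈ p, (((rr V).card - 1).factorial : ℚ) := by
    rw [pl]
    exact Finset.prod_image fun V hV V' hV' h => rr_injOn hp hV hV' h
  rw [hprod, ← Finset.mul_prod_erase p _ hU0, ← Finset.mul_prod_erase p _ hU0]
  have hrest : ∏ V ∈ p.erase U0, (((rr V).card - 1).factorial : ℚ)
      = ∏ V ∈ p.erase U0, ((V.card - 1).factorial : ℚ) := by
    refine Finset.prod_congr rfl fun V hV => ?_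
    have hVp : V ∈ p := Finset.mem_of_mem_erase hV
    have h0V : (0 : Fin (n + 1)) ∉ V := fun hc =>
      (Finset.mem_erase.mp hV).1 (block_uniq hp hVp hU0 hc h00)
    rw [card_rr, Finset.erase_eq_of_notMem h0V]
  rw [hrest]
  have hcardU0 : (rr U0).card = U0.card - 1 := by
    rw [card_rr, Finset.card_erase_of_mem h00]
  rw [hcardU0, ← mul_assoc]
  congr 1
  have h1 : U0.card - 1 = (U0.card - 2) + 1 := by omega
  have h2 : U0.card - 1 - 1 = U0.card - 2 := by omega
  rw [h2, h1, Nat.factorial_succ]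
  push_cast
  ring

end Parts

lemma main (F : Multiset ℤ → ℚ) (G : Multiset ℤ → Multiset ℤ → ℚ)
    (hG0 : ∀ T : Multiset ℤ, G 0 T = F T)
    (hGrec : ∀ (a : ℤ) (S T : Multiset ℤ),
      G (a ::ₘ S) T
        = G S ((a + 1) ::ₘ T) - (S.map (fun s => G ((s + a) ::ₘ S.erase s) T)).sum) :
    ∀ (n : ℕ) (v : Fin n → ℤ) (T : Multiset ℤ),
      G (Multiset.map v Finset.univ.val) T
        = ∑ p ∈ SP n, (-1 : ℚ) ^ (n - p.card) * (∏ U ∈ p, ((U.card - 1).factorial : ℚ))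
            * F (T + p.val.map (fun U => (∑ i ∈ U, v i) + 1)) := by
  intro n
  induction n with
  | zero =>
      intro v T
      have h1 : SP 0 = {∅} := by decide
      rw [h1, Finset.sum_singleton]
      have h2 : Multiset.map v (Finset.univ : Finset (Fin 0)).val = 0 := rfl
      rw [h2, hG0]
      simp
  | succ n IH =>
      intro v T
      have hvs : ∀ j : Fin n, (fun k : Fin n => v k.succ) j = v j.succ := fun j => rfl
      have hsplit : Multiset.map v (Finset.univ : Finset (Fin (n + 1))).val
          = v 0 ::ₘ Multiset.map (fun k : Fin n => v k.succ)
              (Finset.univ : Finset (Fin n)).val := by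
        rw [Fin.univ_succ, Finset.cons_val, Multiset.map_cons, Finset.map_val,
          Multiset.map_map]
        rfl
      have herase : ∀ j : Fin n,
          ((fun k : Fin n => v k.succ) j + v 0) ::ₘ
              (Multiset.map (fun k : Fin n => v k.succ)
                (Finset.univ : Finset (Fin n)).val).erase ((fun k : Fin n => v k.succ) j)
            = Multiset.map (Function.update (fun k : Fin n => v k.succ) j (v j.succ + v 0))
                (Finset.univ : Finset (Fin n)).val := by
        intro j
        have hjv : j ∈ (Finset.univ : Finset (Fin n)).val :=
          Finset.mem_val.mpr (Finset.mem_univ j)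
        have hM' : Multiset.map (fun k : Fin n => v k.succ) (Finset.univ : Finset (Fin n)).val
            = v j.succ ::ₘ Multiset.map (fun k : Fin n => v k.succ)
                ((Finset.univ : Finset (Fin n)).val.erase j) := by
          conv_lhs => rw [← Multiset.cons_erase hjv]
          rw [Multiset.map_cons]
        rw [hM', Multiset.erase_cons_head]
        conv_rhs => rw [← Multiset.cons_erase hjv, Multiset.map_cons]
        rw [Function.update_self]
        congr 1
        refine (Multiset.map_congr rfl ?_).symm
        intro k hk
        have hkj : k ≠ j :=
          ((Finset.univ : Finset (Fin n)).nodup.mem_erase_iff.mp hk).1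
        exact Function.update_of_ne hkj _ _
      rw [hsplit, hGrec]
      have hsum : ((Multiset.map (fun k : Fin n => v k.succ) (Finset.univ : Finset (Fin n)).val).map
            (fun s => G ((s + v 0) ::ₘ
              (Multiset.map (fun k : Fin n => v k.succ)
                (Finset.univ : Finset (Fin n)).val).erase s) T)).sum
          = ∑ j : Fin n,
              G (Multiset.map (Function.update (fun k : Fin n => v k.succ) j (v j.succ + v 0))
                (Finset.univ : Finset (Fin n)).val) T := by
        rw [Multiset.map_map]
        show (Multiset.map _ (Finset.univ : Finset (Fin n)).val).sum
          = (Multiset.map _ (Finset.univ : Finset (Fin n)).val).sum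
        refine congrArg Multiset.sum (Multiset.map_congr rfl ?_)
        intro j _
        show G (((fun k : Fin n => v k.succ) j + v 0) ::ₘ _) T = _
        rw [herase j]
      rw [hsum, IH (fun k : Fin n => v k.succ) ((v 0 + 1) ::ₘ T)]
      have hIHj : (∑ j : Fin n,
            G (Multiset.map (Function.update (fun k : Fin n => v k.succ) j (v j.succ + v 0))
              (Finset.univ : Finset (Fin n)).val) T)
          = ∑ j : Fin n, ∑ q ∈ SP n,
              (-1 : ℚ) ^ (n - q.card) * (∏ U ∈ q, ((U.card - 1).factorial : ℚ))
                * F (T + q.val.map (fun U =>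
                    (∑ k ∈ U, Function.update (fun k : Fin n => v k.succ) j (v j.succ + v 0) k)
                      + 1)) :=
        Finset.sum_congr rfl fun j _ => IH _ T
      rw [hIHj]
      rw [← Finset.sum_filter_add_sum_filter_not (SP (n + 1))
        (fun p => ({0} : Finset (Fin (n + 1))) ∈ p)]
      have hA : (∑ q ∈ SP n,
            (-1 : ℚ) ^ (n - q.card) * (∏ U ∈ q, ((U.card - 1).factorial : ℚ))
              * F ((v 0 + 1) ::ₘ T + q.val.map (fun U => (∑ i ∈ U, v i.succ) + 1)))
          = ∑ p ∈ (SP (n + 1)).filter (fun p => ({0} : Finset (Fin (n + 1))) ∈ p),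
              (-1 : ℚ) ^ (n + 1 - p.card) * (∏ V ∈ p, ((V.card - 1).factorial : ℚ))
                * F (T + p.val.map (fun V => (∑ i ∈ V, v i) + 1)) := by
        refine Finset.sum_nbij' insA pullA ?_ ?_ ?_ ?_ ?_
        · intro q hq
          exact Finset.mem_filter.mpr ⟨insA_mem hq, Finset.mem_insert_self _ _⟩
        · intro p hp
          exact pullA_mem (Finset.mem_filter.mp hp).1
        · intro q _
          exact pullA_insA
        · intro p hp
          exact insA_pullA (Finset.mem_filter.mp hp).1 (Finset.mem_filter.mp hp).2
        · intro q _
          have hcard : (insA q).card = q.card + 1 := by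
            rw [insA, Finset.card_insert_of_notMem singleton_zero_not_mem_image_sh,
              Finset.card_image_of_injective _ sh_injective]
          have hexp : n + 1 - (insA q).card = n - q.card := by rw [hcard]; omega
          have hprod : (∏ V ∈ insA q, ((V.card - 1).factorial : ℚ))
              = ∏ U ∈ q, ((U.card - 1).factorial : ℚ) := by
            rw [insA, Finset.prod_insert singleton_zero_not_mem_image_sh,
              Finset.prod_image (fun U _ U' _ h => sh_injective h)]
            simp [card_sh]
          have hmap : (insA q).val.map (fun V => (∑ i ∈ V, v i) + 1)
              = (v 0 + 1) ::ₘ q.val.map (fun U => (∑ i ∈ U, v i.succ) + 1) := by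
            rw [insA, Finset.insert_val_of_notMem singleton_zero_not_mem_image_sh,
              Multiset.map_cons, Finset.image_val_of_injOn sh_injective.injOn,
              Multiset.map_map]
            congr 1
            · simp
            · refine Multiset.map_congr rfl fun U _ => ?_
              show (∑ i ∈ sh U, v i) + 1 = _
              rw [sum_sh]
          rw [hexp, hprod, hmap]
          congr 2
          rw [Multiset.cons_add, Multiset.add_cons]
      have hB : (∑ j : Fin n, ∑ q ∈ SP n,
            (-1 : ℚ) ^ (n - q.card) * (∏ U ∈ q, ((U.card - 1).factorial : ℚ))
              * F (T + q.val.map (fun U =>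
                  (∑ k ∈ U, Function.update (fun k : Fin n => v k.succ) j (v j.succ + v 0) k)
                    + 1)))
          = ∑ p ∈ (SP (n + 1)).filter (fun p => ({0} : Finset (Fin (n + 1))) ∉ p),
              (-1 : ℚ) ^ (n - p.card) * (∏ V ∈ p, ((V.card - 1).factorial : ℚ))
                * F (T + p.val.map (fun V => (∑ i ∈ V, v i) + 1)) := by
        rw [← Finset.sum_product']
        have hmaps : ∀ x ∈ (Finset.univ : Finset (Fin n)) ×ˢ SP n,
            phi x.1 x.2 ∈ (SP (n + 1)).filter
              (fun p => ({0} : Finset (Fin (n + 1))) ∉ p) := by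
          rintro ⟨j, q⟩ hx
          have hq : q ∈ SP n := (Finset.mem_product.mp hx).2
          obtain ⟨h1, h2⟩ := phi_mem hq j
          exact Finset.mem_filter.mpr ⟨h1, h2⟩
        rw [← Finset.sum_fiberwise_of_maps_to hmaps]
        refine Finset.sum_congr rfl fun p hpf => ?_
        have hp : p ∈ SP (n + 1) := (Finset.mem_filter.mp hpf).1
        have h0 : ({0} : Finset (Fin (n + 1))) ∉ p := (Finset.mem_filter.mp hpf).2
        obtain ⟨U0, hU0, h00⟩ := exists_block hp 0
        have hfiber : ((Finset.univ : Finset (Fin n)) ×ˢ SP n).filter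
              (fun x => phi x.1 x.2 = p)
            = (rr U0) ×ˢ ({pl p} : Finset (Finset (Finset (Fin n)))) := by
          ext x
          obtain ⟨j, q⟩ := x
          simp only [Finset.mem_filter, Finset.mem_product, Finset.mem_univ, true_and,
            Finset.mem_singleton, mem_rr]
          constructor
          · rintro ⟨hq, hphi⟩
            exact (phi_eq_iff hp h0 hq hU0 h00).mp hphi
          · rintro ⟨hj, rfl⟩
            have hq : pl p ∈ SP n := pl_mem hp h0
            exact ⟨hq, (phi_eq_iff hp h0 hq hU0 h00).mpr ⟨hj, rfl⟩⟩
        rw [hfiber, Finset.sum_product]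
        have hsing : ∀ j ∈ rr U0,
            (∑ q ∈ ({pl p} : Finset (Finset (Finset (Fin n)))),
              (-1 : ℚ) ^ (n - q.card) * (∏ U ∈ q, ((U.card - 1).factorial : ℚ))
                * F (T + q.val.map (fun U =>
                    (∑ k ∈ U, Function.update (fun k : Fin n => v k.succ) j (v j.succ + v 0) k)
                      + 1)))
            = (-1 : ℚ) ^ (n - p.card) * (∏ U ∈ pl p, ((U.card - 1).factorial : ℚ))
                * F (T + p.val.map (fun V => (∑ i ∈ V, v i) + 1)) := by
          intro j hj
          rw [Finset.sum_singleton, card_pl hp, B_map_eq v hp hU0 h00 (mem_rr.mp hj)]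
        rw [Finset.sum_congr rfl hsing, Finset.sum_const, nsmul_eq_mul]
        have hcardrr : ((rr U0).card : ℚ) = ((U0.card - 1 : ℕ) : ℚ) := by
          rw [card_rr, Finset.card_erase_of_mem h00]
        rw [hcardrr, ← B_prod trivial hp h0 hU0 h00]
        ring
      have hple : ∀ p ∈ (SP (n + 1)).filter (fun p => ({0} : Finset (Fin (n + 1))) ∉ p),
          p.card ≤ n := by
        intro p hpf
        have hp : p ∈ SP (n + 1) := (Finset.mem_filter.mp hpf).1
        have h0 : ({0} : Finset (Fin (n + 1))) ∉ p := (Finset.mem_filter.mp hpf).2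
        have := card_SP_le (pl_mem hp h0)
        rwa [card_pl hp] at this
      have hBneg : (∑ p ∈ (SP (n + 1)).filter (fun p => ({0} : Finset (Fin (n + 1))) ∉ p),
            (-1 : ℚ) ^ (n + 1 - p.card) * (∏ V ∈ p, ((V.card - 1).factorial : ℚ))
              * F (T + p.val.map (fun V => (∑ i ∈ V, v i) + 1)))
          = - ∑ p ∈ (SP (n + 1)).filter (fun p => ({0} : Finset (Fin (n + 1))) ∉ p),
              (-1 : ℚ) ^ (n - p.card) * (∏ V ∈ p, ((V.card - 1).factorial : ℚ))
                * F (T + p.val.map (fun V => (∑ i ∈ V, v i) + 1)) := by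
        rw [← Finset.sum_neg_distrib]
        refine Finset.sum_congr rfl fun p hpf => ?_
        have h1 : n + 1 - p.card = (n - p.card) + 1 := by
          have := hple p hpf
          omega
        rw [h1, pow_succ]
        ring
      linarith [hA, hB, hBneg]

end SpecAux



/-- Abstract form of the paper's systematic specialization formula: if `F` assigns a
rational number to every finite multiset of integers (a general-position invariant),
`G` assigns one to every pair of multisets (a special-position invariant), with
`G(∅, T) = F(T)` and the specialization recursion
`G(S + {a}, T) = G(S, T + {a+1}) − Σ_{s ∈ S} G((S − {s}) + {s+a}, T)`, then
`G({a₁−1, …, aₙ−1}, ∅)` is given by the inclusion–exclusion expansion over set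
partitions `P` of `{1, …, n}`:
`Σ_P (−1)^{n−|P|} (∏_{U∈P} (|U|−1)!) F({(Σ_{i∈U}(a_i−1)) + 1 : U ∈ P})`. -/
theorem specialization_partition_expansion
    (F : Multiset ℤ → ℚ) (G : Multiset ℤ → Multiset ℤ → ℚ)
    (hG0 : ∀ T : Multiset ℤ, G 0 T = F T)
    (hGrec : ∀ (a : ℤ) (S T : Multiset ℤ),
      G (a ::ₘ S) T
        = G S ((a + 1) ::ₘ T) - (S.map (fun s => G ((s + a) ::ₘ S.erase s) T)).sum) :
    ∀ a : List ℤ, a ≠ [] →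
      G (↑(a.map (fun x => x - 1)) : Multiset ℤ) 0
        = ∑ parts ∈ Finset.univ.filter
            (fun parts : Finset (Finset (Fin a.length)) =>
              ∅ ∉ parts ∧ ∀ i : Fin a.length, (parts.filter (fun U => i ∈ U)).card = 1),
            (-1 : ℚ) ^ (a.length - parts.card)
              * (∏ U ∈ parts, ((U.card - 1).factorial : ℚ))
              * F (parts.val.map (fun U => (∑ i ∈ U, (a.get i - 1)) + 1)) := by
  intro a _
  have hbridge : (↑(a.map (fun x => x - 1)) : Multiset ℤ)
      = Multiset.map (fun i : Fin a.length => a.get i - 1)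
          (Finset.univ : Finset (Fin a.length)).val := by
    have h1 : (Finset.univ : Finset (Fin a.length)).val
        = (↑(List.finRange a.length) : Multiset (Fin a.length)) := rfl
    rw [h1]
    show (↑(a.map (fun x => x - 1)) : Multiset ℤ)
      = ↑((List.finRange a.length).map (fun i : Fin a.length => a.get i - 1))
    congr 1
    conv_lhs => rw [← List.map_get_finRange a]
    rw [List.map_map]
    rfl
  rw [hbridge, SpecAux.main F G hG0 hGrec a.length (fun i => a.get i - 1) 0]
  show (∑ p ∈ SpecAux.SP a.length, _) = _
  rw [SpecAux.SP]
  refine Finset.sum_congr rfl fun p _ => ?_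
  rw [zero_add]
end

section
/- Let k ≥ 2 and let L : ℤ → ℚ satisfy L_m = 0 unless 0 ≤ m ≤ k−1, L_m = L_{k−1−m} for 0 ≤ m ≤ k−1, and Σ_{m=0}^{k−1} L_m = k^k. Define the families L^{N,2}, L^{N,3} for all N ≥ k by the downward iteration of the Fano recursion, and set the virtual structural constants of the Calabi–Yau level to be L̃^{k,k,1}_i := L_i, L̃^{k,k,2}_i := L^{k,2}_i, L̃^{k,k,3}_i := L^{k,3}_i. Then in the formal power series ring ℚ[[q]]: ∏_{i=0}^{k−1} (1 + L̃^{k,k,1}_i q + L̃^{k,k,2}_i q² + L̃^{k,k,3}_i q³) ≡ 1 + k^k q + k^{2k} q² + k^{3k} q³ (mod q⁴); that is, the product of the virtual generating functions agrees with (1 − k^k q)^{−1} up to order q³. -/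
namespace VGF

variable (k : ℕ) (L : ℤ → ℚ)

/-- box sum -/
noncomputable def SB (f : ℤ → ℚ) : ℚ := ∑ m ∈ Finset.Icc (-(9*(k:ℤ))) (9*(k:ℤ)), f m

variable (hsupp : ∀ m : ℤ, L m ≠ 0 → 0 ≤ m ∧ m ≤ (k : ℤ) - 1)

lemma sum_Icc_of_supp (f : ℤ → ℚ) (hf : ∀ m, f m ≠ 0 → 0 ≤ m ∧ m ≤ (k:ℤ)-1)
    {A B : ℤ} (hA : A ≤ 0) (hB : (k:ℤ)-1 ≤ B) :
    ∑ m ∈ Finset.Icc A B, f m = ∑ m ∈ Finset.Icc (0:ℤ) ((k:ℤ)-1), f m := by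
  refine (Finset.sum_subset (Finset.Icc_subset_Icc hA hB) ?_).symm
  intro x hx hnx
  by_contra h
  rcases hf x h with ⟨h1, h2⟩
  simp only [Finset.mem_Icc] at hnx
  exact hnx ⟨h1, h2⟩

lemma SB_eq_Icc (f : ℤ → ℚ) (hf : ∀ m, f m ≠ 0 → 0 ≤ m ∧ m ≤ (k:ℤ)-1) :
    SB k f = ∑ m ∈ Finset.Icc (0:ℤ) ((k:ℤ)-1), f m :=
  sum_Icc_of_supp k f hf (by omega) (by omega)

lemma SB_shift (f : ℤ → ℚ) (hf : ∀ m, f m ≠ 0 → 0 ≤ m ∧ m ≤ (k:ℤ)-1)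
    (c : ℤ) (hc1 : -(8*(k:ℤ)) ≤ c) (hc2 : c ≤ 8*(k:ℤ)) :
    SB k (fun m => f (m + c)) = SB k f := by
  have h1 : SB k (fun m => f (m + c))
      = ∑ m ∈ Finset.Icc (-(9*(k:ℤ)) + c) (9*(k:ℤ) + c), f m := by
    rw [SB, ← Finset.map_add_right_Icc, Finset.sum_map]
    rfl
  rw [h1, sum_Icc_of_supp k f hf (by omega) (by push_cast; omega),
    SB_eq_Icc k f hf]

lemma SB_add (f g : ℤ → ℚ) : SB k (fun m => f m + g m) = SB k f + SB k g :=
  Finset.sum_add_distrib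

lemma SB_sub (f g : ℤ → ℚ) : SB k (fun m => f m - g m) = SB k f - SB k g :=
  Finset.sum_sub_distrib _ _

lemma SB_cmul (c : ℚ) (f : ℤ → ℚ) : SB k (fun m => c * f m) = c * SB k f :=
  (Finset.mul_sum _ _ _).symm

lemma SB_congr (f g : ℤ → ℚ) (h : ∀ m, f m = g m) : SB k f = SB k g := by
  simp only [SB]; exact Finset.sum_congr rfl (fun m _ => h m)

include hsupp in
/-- support of iter2 -/
lemma iter2_supp : ∀ t m, iter2 k L t m ≠ 0 → 0 ≤ m ∧ m ≤ (t:ℤ) - 1 := by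
  intro t
  induction t with
  | zero => intro m h; simp [iter2] at h
  | succ t ih =>
    intro m h
    rw [iter2] at h
    have h' : iter2 k L t (m-1) ≠ 0 ∨ iter2 k L t m ≠ 0
        ∨ L m * L (m + ((2 * k - ((t : ℤ) + 1)) - k)) ≠ 0 := by
      by_contra hc
      push_neg at hc
      rw [hc.1, hc.2.1] at h
      apply h
      rw [show (2:ℚ) * L m * L (m + ((2 * k - ((t : ℤ) + 1)) - k))
        = 2 * (L m * L (m + ((2 * k - ((t : ℤ) + 1)) - k))) by ring, hc.2.2]
      ring
    rcases h' with h'|h'|h'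
    · rcases ih _ h' with ⟨h1,h2⟩; constructor <;> push_cast <;> omega
    · rcases ih _ h' with ⟨h1,h2⟩; constructor <;> push_cast <;> omega
    · rcases hsupp m (left_ne_zero_of_mul h') with ⟨h1,h2⟩
      rcases hsupp _ (right_ne_zero_of_mul h') with ⟨h3,h4⟩
      constructor <;> push_cast at * <;> omega



lemma iter2_succ (t : ℕ) (m : ℤ) :
    iter2 k L (t+1) m = (1/2) * iter2 k L t (m-1) + (1/2) * iter2 k L t m
      + L m * L (m + ((k:ℤ) - t - 1)) := by
  have h1 : (2 * (k:ℤ) - ((t:ℤ) + 1)) - k = (k:ℤ) - t - 1 := by ring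
  rw [iter2, h1]; ring

lemma iter3_succ (t : ℕ) (m : ℤ) :
    iter3 k L (t+1) m = (1/18) * (4 * iter3 k L t (m - 2) + 10 * iter3 k L t (m - 1)
        + 4 * iter3 k L t m
        + 12 * iter2 k L t (m - 1) * L (m + 2 * ((k:ℤ) - t - 1))
        + 9 * iter2 k L t m * L (m + 2 * ((k:ℤ) - t - 1))
        + 6 * iter2 k L t m * L (m + 1 + 2 * ((k:ℤ) - t - 1))
        + 6 * L (m - 1) * iter2 k L t (m - 1 + ((k:ℤ) - t - 1))
        + 9 * L m * iter2 k L t (m - 1 + ((k:ℤ) - t - 1))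
        + 12 * L m * iter2 k L t (m + ((k:ℤ) - t - 1))
        + 18 * L m * L (m + ((k:ℤ) - t - 1)) * L (m + 2 * ((k:ℤ) - t - 1))) := by
  have h1 : (2 * (k:ℤ) - ((t:ℤ) + 1)) - k = (k:ℤ) - t - 1 := by ring
  rw [iter3, h1]

include hsupp in
lemma iter3_supp : ∀ t m, iter3 k L t m ≠ 0 → 0 ≤ m ∧ m ≤ 2*(t:ℤ) - 1 - k := by
  intro t
  induction t with
  | zero => intro m h; simp [iter3] at h
  | succ t ih =>
    intro m h
    rw [iter3_succ] at h
    set ρ : ℤ := (k:ℤ) - t - 1 with hρ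
    have h' : iter3 k L t (m-2) ≠ 0 ∨ iter3 k L t (m-1) ≠ 0 ∨ iter3 k L t m ≠ 0
        ∨ iter2 k L t (m-1) * L (m + 2*ρ) ≠ 0
        ∨ iter2 k L t m * L (m + 2*ρ) ≠ 0
        ∨ iter2 k L t m * L (m + 1 + 2*ρ) ≠ 0
        ∨ L (m-1) * iter2 k L t (m-1+ρ) ≠ 0
        ∨ L m * iter2 k L t (m-1+ρ) ≠ 0
        ∨ L m * iter2 k L t (m+ρ) ≠ 0
        ∨ L m * L (m+ρ) * L (m+2*ρ) ≠ 0 := by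
      by_contra hc
      push_neg at hc
      obtain ⟨c1,c2,c3,c4,c5,c6,c7,c8,c9,c10⟩ := hc
      apply h
      linear_combination (1/18) * (4*c1 + 10*c2 + 4*c3 + 12*c4 + 9*c5 + 6*c6
        + 6*c7 + 9*c8 + 12*c9 + 18*c10)
    have hk2 : iter2 k L t (m-1) ≠ 0 → 0 ≤ m-1 ∧ m-1 ≤ (t:ℤ)-1 := iter2_supp k L hsupp t _
    rcases h' with h'|h'|h'|h'|h'|h'|h'|h'|h'|h'
    · rcases ih _ h' with ⟨h1,h2⟩; omega
    · rcases ih _ h' with ⟨h1,h2⟩; omega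
    · rcases ih _ h' with ⟨h1,h2⟩; omega
    · rcases iter2_supp k L hsupp t _ (left_ne_zero_of_mul h') with ⟨h1,h2⟩
      rcases hsupp _ (right_ne_zero_of_mul h') with ⟨h3,h4⟩; omega
    · rcases iter2_supp k L hsupp t _ (left_ne_zero_of_mul h') with ⟨h1,h2⟩
      rcases hsupp _ (right_ne_zero_of_mul h') with ⟨h3,h4⟩; omega
    · rcases iter2_supp k L hsupp t _ (left_ne_zero_of_mul h') with ⟨h1,h2⟩
      rcases hsupp _ (right_ne_zero_of_mul h') with ⟨h3,h4⟩; omega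
    · rcases hsupp _ (left_ne_zero_of_mul h') with ⟨h1,h2⟩
      rcases iter2_supp k L hsupp t _ (right_ne_zero_of_mul h') with ⟨h3,h4⟩; omega
    · rcases hsupp _ (left_ne_zero_of_mul h') with ⟨h1,h2⟩
      rcases iter2_supp k L hsupp t _ (right_ne_zero_of_mul h') with ⟨h3,h4⟩; omega
    · rcases hsupp _ (left_ne_zero_of_mul h') with ⟨h1,h2⟩
      rcases iter2_supp k L hsupp t _ (right_ne_zero_of_mul h') with ⟨h3,h4⟩; omega
    · rcases hsupp _ (left_ne_zero_of_mul (left_ne_zero_of_mul h')) with ⟨h1,h2⟩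
      rcases hsupp _ (right_ne_zero_of_mul h') with ⟨h3,h4⟩; omega



/-- correlation sums -/
noncomputable def cc (a : ℤ) : ℚ := SB k (fun m => L m * L (m+a))
noncomputable def TT3 (a b : ℤ) : ℚ := SB k (fun m => L m * L (m+a) * L (m+b))
noncomputable def DD (t : ℕ) (j : ℤ) : ℚ := SB k (fun m => iter2 k L t m * L (m+j))
noncomputable def Lam (_k : ℕ) (L : ℤ → ℚ) (r m : ℤ) : ℚ := ∑ c ∈ Finset.Icc (-r) (2*r+1), L (m+c)

lemma sum_Icc_top (f : ℤ → ℚ) (a b : ℤ) (h : a ≤ b) :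
    ∑ m ∈ Finset.Icc a b, f m = (∑ m ∈ Finset.Icc a (b-1), f m) + f b := by
  have : Finset.Icc a b = insert b (Finset.Icc a (b-1)) := by
    ext x; simp only [Finset.mem_Icc, Finset.mem_insert]; omega
  rw [this, Finset.sum_insert (by simp only [Finset.mem_Icc]; omega)]; ring

lemma sum_Icc_bot (f : ℤ → ℚ) (a b : ℤ) (h : a ≤ b) :
    ∑ m ∈ Finset.Icc a b, f m = f a + ∑ m ∈ Finset.Icc (a+1) b, f m := by
  have : Finset.Icc a b = insert a (Finset.Icc (a+1) b) := by
    ext x; simp only [Finset.mem_Icc, Finset.mem_insert]; omega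
  rw [this, Finset.sum_insert (by simp only [Finset.mem_Icc]; omega)]

include hsupp

lemma supp2 (t : ℕ) (ht : t ≤ k) : ∀ m, iter2 k L t m ≠ 0 → 0 ≤ m ∧ m ≤ (k:ℤ)-1 := by
  intro m hm
  rcases iter2_supp k L hsupp t m hm with ⟨h1, h2⟩
  have : (t:ℤ) ≤ (k:ℤ) := by exact_mod_cast ht
  omega

lemma supp3 (t : ℕ) (ht : t ≤ k) : ∀ m, iter3 k L t m ≠ 0 → 0 ≤ m ∧ m ≤ (k:ℤ)-1 := by
  intro m hm
  rcases iter3_supp k L hsupp t m hm with ⟨h1, h2⟩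
  have : (t:ℤ) ≤ (k:ℤ) := by exact_mod_cast ht
  omega

/-- shift-normalization: `∑ S2(m-1)·L(m+j) = DD t (j+1)` -/
lemma N1 (hk : 1 ≤ k) (t : ℕ) (ht : t ≤ k) (j : ℤ) (hj1 : -(4*(k:ℤ)) ≤ j) (hj2 : j ≤ 4*(k:ℤ)) :
    SB k (fun m => iter2 k L t (m-1) * L (m+j)) = DD k L t (j+1) := by
  have hk' : (1:ℤ) ≤ (k:ℤ) := by exact_mod_cast hk
  have := SB_shift k (fun x => iter2 k L t x * L (x + (j+1)))
    (fun m hm => supp2 k L hsupp t ht m (left_ne_zero_of_mul hm)) (-1)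
    (by omega) (by omega)
  rw [DD, ← this]
  exact SB_congr k _ _ (fun m =>
    show _ = iter2 (k:ℤ) L t (m + -1) * L (m + -1 + (j+1)) by
      rw [show m + -1 = m - 1 by ring, show (m:ℤ) - 1 + (j+1) = m + j by ring])

/-- `∑ L m · S2 (m+c) = DD t (-c)` -/
lemma N2 (t : ℕ) (ht : t ≤ k) (c : ℤ) (hc1 : -(4*(k:ℤ)) ≤ c) (hc2 : c ≤ 4*(k:ℤ)) :
    SB k (fun m => L m * iter2 k L t (m+c)) = DD k L t (-c) := by
  have := SB_shift k (fun x => iter2 k L t x * L (x + (-c)))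
    (fun m hm => supp2 k L hsupp t ht m (left_ne_zero_of_mul hm)) c
    (by omega) (by omega)
  rw [DD, ← this]
  exact SB_congr k _ _ (fun m =>
    show _ = iter2 (k:ℤ) L t (m + c) * L (m + c + -c) by
      rw [show m + c + -c = m by ring, mul_comm])

/-- `∑ L (m-1) · S2 (m-1+c) = DD t (-c)` -/
lemma N4 (hk : 1 ≤ k) (t : ℕ) (ht : t ≤ k) (c : ℤ) (hc1 : -(4*(k:ℤ)) ≤ c) (hc2 : c ≤ 4*(k:ℤ)) :
    SB k (fun m => L (m-1) * iter2 k L t (m-1+c)) = DD k L t (-c) := by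
  have hk' : (1:ℤ) ≤ (k:ℤ) := by exact_mod_cast hk
  have h2 := SB_shift k (fun x => L x * iter2 k L t (x+c))
    (fun m hm => hsupp m (left_ne_zero_of_mul hm)) (-1) (by omega) (by omega)
  have h3 : SB k (fun m => L (m-1) * iter2 k L t (m-1+c))
      = SB k (fun m => (fun x => L x * iter2 k L t (x+c)) (m + -1)) := by
    exact SB_congr k _ _ (fun m =>
      show _ = L (m + -1) * iter2 (k:ℤ) L t (m + -1 + c) by
        rw [show m + -1 = m - 1 by ring])
  rw [h3, h2]
  exact N2 k L hsupp t ht c hc1 hc2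

lemma N3 (t : ℕ) (ht : t ≤ k) (d : ℤ) (hd1 : -(8*(k:ℤ)) ≤ d) (hd2 : d ≤ 8*(k:ℤ)) :
    SB k (fun m => iter3 k L t (m - d)) = SB k (iter3 k L t) := by
  have := SB_shift k (iter3 k L t) (supp3 k L hsupp t ht) (-d) (by omega) (by omega)
  rw [← this]
  exact SB_congr k _ _ (fun m =>
    show _ = iter3 (k:ℤ) L t (m + -d) by rw [show m + -d = m - d by ring])

lemma cc_neg (a : ℤ) (ha1 : -(8*(k:ℤ)) ≤ a) (ha2 : a ≤ 8*(k:ℤ)) :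
    cc k L a = cc k L (-a) := by
  have := SB_shift k (fun x => L x * L (x + -a))
    (fun m hm => hsupp m (left_ne_zero_of_mul hm)) a ha1 ha2
  rw [cc, cc, ← this]
  exact SB_congr k _ _ (fun m =>
    show _ = L (m + a) * L (m + a + -a) by
      rw [show m + a + -a = m by ring, mul_comm])

lemma cc_vanish (a : ℤ) (ha : (k:ℤ) ≤ |a|) : cc k L a = 0 := by
  simp only [cc, SB]
  refine Finset.sum_eq_zero (fun m _ => ?_)
  by_cases h1 : L m = 0
  · rw [h1]; ring
  · have h2 : L (m+a) = 0 := by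
      by_contra h2
      rcases hsupp m h1 with ⟨a1, a2⟩
      rcases hsupp _ h2 with ⟨b1, b2⟩
      rcases le_abs.mp ha with h|h <;> omega
    rw [h2]; ring

/-- window sum equals total sum -/
lemma window (m A B : ℤ) (hA : m + A ≤ 0) (hB : (k:ℤ)-1 ≤ m+B) :
    ∑ c ∈ Finset.Icc A B, L (m+c) = SB k L := by
  have h1 : ∑ c ∈ Finset.Icc A B, L (m+c) = ∑ x ∈ Finset.Icc (A+m) (B+m), L x := by
    rw [← Finset.map_add_right_Icc, Finset.sum_map]
    exact Finset.sum_congr rfl (fun c _ => by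
      show L (m + c) = L (c + m); rw [add_comm])
  rw [h1, sum_Icc_of_supp k L hsupp (by omega) (by omega), SB_eq_Icc k L hsupp]

lemma SB_iter2_succ (hk : 1 ≤ k) (t : ℕ) (ht : t ≤ k) :
    SB k (iter2 k L (t+1)) = SB k (iter2 k L t) + cc k L ((k:ℤ)-t-1) := by
  have hk' : (1:ℤ) ≤ (k:ℤ) := by exact_mod_cast hk
  have h0 : SB k (iter2 k L (t+1)) = SB k (fun m => (1/2) * iter2 k L t (m-1)
      + ((1/2) * iter2 k L t m + L m * L (m + ((k:ℤ)-t-1)))) :=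
    SB_congr k _ _ (fun m => by rw [iter2_succ]; ring)
  rw [h0, SB_add, SB_add, SB_cmul, SB_cmul]
  have h1 : SB k (fun m => iter2 k L t (m-1)) = SB k (iter2 k L t) := by
    have := SB_shift k (iter2 k L t) (supp2 k L hsupp t ht) (-1) (by omega) (by omega)
    rw [← this]
    exact SB_congr k _ _ (fun m =>
      show _ = iter2 (k:ℤ) L t (m + -1) by rw [show m + -1 = m - 1 by ring])
  rw [h1, cc]
  ring

lemma SB_iter2_eq (hk : 1 ≤ k) (t : ℕ) (ht : t ≤ k) :
    SB k (iter2 k L t) = ∑ a ∈ Finset.Icc ((k:ℤ)-t) ((k:ℤ)-1), cc k L a := by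
  induction t with
  | zero =>
    have : Finset.Icc ((k:ℤ)-0) ((k:ℤ)-1) = ∅ := by
      apply Finset.Icc_eq_empty; omega
    simp [this, SB, iter2]
  | succ t ih =>
    rw [SB_iter2_succ k L hsupp hk t (by omega), ih (by omega),
      show ((k:ℤ) - (t+1 : ℕ)) = ((k:ℤ)-t-1) by push_cast; ring,
      sum_Icc_bot (cc k L) ((k:ℤ)-t-1) ((k:ℤ)-1) (by omega),
      show ((k:ℤ)-t-1+1) = ((k:ℤ)-t) by ring]
    ring

lemma cc_square_gen (A B : ℤ) (hA : A ≤ -((k:ℤ)-1)) (hB : (k:ℤ)-1 ≤ B) :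
    ∑ a ∈ Finset.Icc A B, cc k L a = (SB k L)^2 := by
  simp only [cc, SB]
  rw [Finset.sum_comm]
  have h1 : ∀ m ∈ Finset.Icc (-(9*(k:ℤ))) (9*(k:ℤ)),
      ∑ a ∈ Finset.Icc A B, L m * L (m+a) = L m * SB k L := by
    intro m _
    rw [← Finset.mul_sum]
    by_cases h : L m = 0
    · rw [h]; ring
    · rcases hsupp m h with ⟨h1, h2⟩
      rw [window k L hsupp m _ _ (by omega) (by omega)]
  rw [Finset.sum_congr rfl h1, ← Finset.sum_mul, sq]
  rfl

lemma cc_half (hk : 1 ≤ k) :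
    ∑ a ∈ Finset.Icc (0:ℤ) ((k:ℤ)-1), cc k L a = ((SB k L)^2 + cc k L 0)/2 := by
  have hsplit : Finset.Icc (-((k:ℤ)-1)) ((k:ℤ)-1)
      = Finset.Icc (-((k:ℤ)-1)) (-1) ∪ Finset.Icc (0:ℤ) ((k:ℤ)-1) := by
    ext x; simp only [Finset.mem_Icc, Finset.mem_union]
    have : (1:ℤ) ≤ (k:ℤ) := by exact_mod_cast hk
    omega
  have hdisj : Disjoint (Finset.Icc (-((k:ℤ)-1)) (-1)) (Finset.Icc (0:ℤ) ((k:ℤ)-1)) := by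
    rw [Finset.disjoint_left]
    intro x hx1 hx2
    simp only [Finset.mem_Icc] at hx1 hx2
    omega
  have hneg : ∑ a ∈ Finset.Icc (-((k:ℤ)-1)) (-1), cc k L a
      = ∑ a ∈ Finset.Icc (1:ℤ) ((k:ℤ)-1), cc k L a := by
    refine Finset.sum_nbij' (fun a => -a) (fun a => -a) ?_ ?_ ?_ ?_ ?_ <;>
      intro a ha <;> simp only [Finset.mem_Icc] at ha ⊢
    · omega
    · omega
    · ring
    · ring
    · have hkk : (1:ℤ) ≤ (k:ℤ) := by exact_mod_cast hk
      exact cc_neg k L hsupp a (by omega) (by omega)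
  have hbot : ∑ a ∈ Finset.Icc (0:ℤ) ((k:ℤ)-1), cc k L a
      = cc k L 0 + ∑ a ∈ Finset.Icc (1:ℤ) ((k:ℤ)-1), cc k L a := by
    rw [sum_Icc_bot (cc k L) 0 ((k:ℤ)-1) (by omega)]
    norm_num
  have := cc_square_gen k L hsupp (-((k:ℤ)-1)) ((k:ℤ)-1) (by omega) (by omega)
  rw [hsplit, Finset.sum_union hdisj, hneg] at this
  linarith


omit hsupp in
lemma Lam_expand (r m : ℤ) (hr : 1 ≤ r) :
    Lam k L r m = Lam k L (r-1) m + L (m-r) + L (m+2*r) + L (m+2*r+1) := by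
  have h1 : Lam k L r m = L (m + -r) + ∑ c ∈ Finset.Icc (-r+1) (2*r+1), L (m+c) := by
    rw [Lam, sum_Icc_bot (fun c => L (m+c)) _ _ (by omega)]
  have h2 : ∑ c ∈ Finset.Icc (-r+1) (2*r+1), L (m+c)
      = (∑ c ∈ Finset.Icc (-r+1) (2*r), L (m+c)) + L (m+(2*r+1)) := by
    rw [sum_Icc_top (fun c => L (m+c)) _ _ (by omega), show (2*r+1-1) = 2*r by ring]
  have h3 : ∑ c ∈ Finset.Icc (-r+1) (2*r), L (m+c)
      = (∑ c ∈ Finset.Icc (-r+1) (2*r-1), L (m+c)) + L (m+(2*r)) := by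
    rw [sum_Icc_top (fun c => L (m+c)) _ _ (by omega)]
  have h4 : Finset.Icc (-r+1) (2*r-1) = Finset.Icc (-(r-1)) (2*(r-1)+1) := by
    congr 1 <;> ring
  rw [h1, h2, h3, h4, show m + -r = m - r by ring,
    show m + (2*r+1) = m + 2*r+1 by ring, show m + (2*r) = m + 2*r by ring, Lam]
  ring

omit hsupp in
lemma Lam_trans (r m : ℤ) (hr : 1 ≤ r) :
    Lam k L (r-1) (m+1) = Lam k L (r-1) m - L (m+1-r) + L (m+2*r) := by
  have h1 : Lam k L (r-1) (m+1) = ∑ c ∈ Finset.Icc (-(r-1)+1) (2*(r-1)+1+1), L (m+c) := by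
    rw [Lam, ← Finset.map_add_right_Icc _ _ 1, Finset.sum_map]
    refine Finset.sum_congr rfl (fun c _ => ?_)
    show L (m + 1 + c) = L (m + (c+1))
    rw [show m + 1 + c = m + (c+1) by ring]
  have h2 : ∑ c ∈ Finset.Icc (-(r-1)+1) (2*(r-1)+1+1), L (m+c)
      = (∑ c ∈ Finset.Icc (-(r-1)+1) (2*(r-1)+1), L (m+c)) + L (m+2*r) := by
    rw [sum_Icc_top (fun c => L (m+c)) _ _ (by omega)]
    rw [show (2*(r-1)+1+1-1) = 2*(r-1)+1 by ring, show m + (2*(r-1)+1+1) = m+2*r by ring]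
  have h3 : Lam k L (r-1) m
      = L (m+(-(r-1))) + ∑ c ∈ Finset.Icc (-(r-1)+1) (2*(r-1)+1), L (m+c) := by
    rw [Lam, sum_Icc_bot (fun c => L (m+c)) _ _ (by omega)]
  rw [h1, h2, h3, show m + (-(r-1)) = m+1-r by ring]
  ring

omit hsupp in
lemma Lam_step (r m : ℤ) (hr : 1 ≤ r) :
    (1/2) * (Lam k L (r-1) (m+1) + Lam k L (r-1) m)
      = Lam k L r m - L (m-r) - (1/2)*L (m+1-r) - (1/2)*L (m+2*r) - L (m+2*r+1) := by
  rw [Lam_trans k L r m hr, Lam_expand k L r m hr]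
  ring

include hsupp in
lemma step3_general (hk : 1 ≤ k) (t : ℕ) (ht : t ≤ k) (ρ : ℤ)
    (hρ1 : -(k:ℤ) ≤ ρ) (hρ2 : ρ ≤ (k:ℤ)) :
    SB k (fun m => (1/18) * (4 * iter3 k L t (m - 2) + 10 * iter3 k L t (m - 1)
        + 4 * iter3 k L t m
        + 12 * iter2 k L t (m - 1) * L (m + 2 * ρ)
        + 9 * iter2 k L t m * L (m + 2 * ρ)
        + 6 * iter2 k L t m * L (m + 1 + 2 * ρ)
        + 6 * L (m - 1) * iter2 k L t (m - 1 + ρ)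
        + 9 * L m * iter2 k L t (m - 1 + ρ)
        + 12 * L m * iter2 k L t (m + ρ)
        + 18 * L m * L (m + ρ) * L (m + 2 * ρ)))
    = SB k (iter3 k L t) + DD k L t (2*ρ+1) + (1/2)*DD k L t (2*ρ) + DD k L t (-ρ)
      + (1/2)*DD k L t (1-ρ) + TT3 k L ρ (2*ρ) := by
  have hpt : ∀ m : ℤ, (1/18) * (4 * iter3 k L t (m - 2) + 10 * iter3 k L t (m - 1)
        + 4 * iter3 k L t m
        + 12 * iter2 k L t (m - 1) * L (m + 2 * ρ)
        + 9 * iter2 k L t m * L (m + 2 * ρ)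
        + 6 * iter2 k L t m * L (m + 1 + 2 * ρ)
        + 6 * L (m - 1) * iter2 k L t (m - 1 + ρ)
        + 9 * L m * iter2 k L t (m - 1 + ρ)
        + 12 * L m * iter2 k L t (m + ρ)
        + 18 * L m * L (m + ρ) * L (m + 2 * ρ))
      = (2/9) * iter3 k L t (m-2) + ((5/9) * iter3 k L t (m-1) + ((2/9) * iter3 k L t m
        + ((2/3) * (iter2 k L t (m-1) * L (m + 2*ρ))
        + ((1/2) * (iter2 k L t m * L (m + 2*ρ))
        + ((1/3) * (iter2 k L t m * L (m + 1 + 2*ρ))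
        + ((1/3) * (L (m-1) * iter2 k L t (m - 1 + ρ))
        + ((1/2) * (L m * iter2 k L t (m - 1 + ρ))
        + ((2/3) * (L m * iter2 k L t (m + ρ))
        + (L m * L (m + ρ) * L (m + 2*ρ)))))))))) := by
    intro m; ring
  rw [SB_congr k _ _ hpt]
  simp only [SB_add, SB_cmul]
  have h1 : SB k (fun m => iter3 k L t (m - 2)) = SB k (iter3 k L t) :=
    N3 k L hsupp t ht 2 (by omega) (by omega)
  have h2 : SB k (fun m => iter3 k L t (m - 1)) = SB k (iter3 k L t) :=
    N3 k L hsupp t ht 1 (by omega) (by omega)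
  have h3 : SB k (fun m => iter2 k L t (m-1) * L (m + 2*ρ)) = DD k L t (2*ρ+1) :=
    N1 k L hsupp hk t ht (2*ρ) (by omega) (by omega)
  have h4 : SB k (fun m => iter2 k L t m * L (m + 2*ρ)) = DD k L t (2*ρ) := rfl
  have h5 : SB k (fun m => iter2 k L t m * L (m + 1 + 2*ρ)) = DD k L t (2*ρ+1) := by
    rw [DD]
    exact SB_congr k _ _ (fun m => by
      rw [show m + 1 + 2*ρ = m + (2*ρ+1) by ring])
  have h6 : SB k (fun m => L (m-1) * iter2 k L t (m - 1 + ρ)) = DD k L t (-ρ) :=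
    N4 k L hsupp hk t ht ρ (by omega) (by omega)
  have h7 : SB k (fun m => L m * iter2 k L t (m - 1 + ρ)) = DD k L t (1-ρ) := by
    have e1 : SB k (fun m => L m * iter2 k L t (m - 1 + ρ))
        = SB k (fun m => L m * iter2 k L t (m + (ρ-1))) :=
      SB_congr k _ _ (fun m => by rw [show m - 1 + ρ = m + (ρ-1) by ring])
    have e2 := N2 k L hsupp t ht (ρ-1) (by omega) (by omega)
    rw [e1, e2, show -(ρ-1) = 1-ρ by ring]
  have h8 : SB k (fun m => L m * iter2 k L t (m + ρ)) = DD k L t (-ρ) :=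
    N2 k L hsupp t ht ρ (by omega) (by omega)
  have h9 : SB k (fun m => L m * L (m + ρ) * L (m + 2*ρ)) = TT3 k L ρ (2*ρ) := rfl
  rw [h1, h2, h3, h4, h5, h6, h7, h8, h9]
  ring

include hsupp in
lemma SB_iter3_succ (hk : 1 ≤ k) (t : ℕ) (ht : t + 1 ≤ k) :
    SB k (iter3 k L (t+1))
    = SB k (iter3 k L t) + DD k L t (2*((k:ℤ)-t-1)+1) + (1/2)*DD k L t (2*((k:ℤ)-t-1))
      + DD k L t (-((k:ℤ)-t-1)) + (1/2)*DD k L t (1-((k:ℤ)-t-1))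
      + TT3 k L ((k:ℤ)-t-1) (2*((k:ℤ)-t-1)) := by
  have h0 : SB k (iter3 k L (t+1)) = SB k (fun m => (1/18) * (4 * iter3 k L t (m - 2)
      + 10 * iter3 k L t (m - 1) + 4 * iter3 k L t m
      + 12 * iter2 k L t (m - 1) * L (m + 2 * ((k:ℤ)-t-1))
      + 9 * iter2 k L t m * L (m + 2 * ((k:ℤ)-t-1))
      + 6 * iter2 k L t m * L (m + 1 + 2 * ((k:ℤ)-t-1))
      + 6 * L (m - 1) * iter2 k L t (m - 1 + ((k:ℤ)-t-1))
      + 9 * L m * iter2 k L t (m - 1 + ((k:ℤ)-t-1))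
      + 12 * L m * iter2 k L t (m + ((k:ℤ)-t-1))
      + 18 * L m * L (m + ((k:ℤ)-t-1)) * L (m + 2 * ((k:ℤ)-t-1)))) :=
    SB_congr k _ _ (fun m => iter3_succ k L t m)
  rw [h0]
  exact step3_general k L hsupp hk t (by omega) ((k:ℤ)-t-1) (by omega) (by omega)

include hsupp in
lemma Wstep_gen (hk : 1 ≤ k) (t : ℕ) (ht : t ≤ k) (ρ : ℤ) (hρ1 : 1 ≤ ρ) (hρ2 : ρ ≤ (k:ℤ)) :
    SB k (fun m => ((1/2) * iter2 k L t (m-1) + (1/2) * iter2 k L t m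
        + L m * L (m + ρ)) * Lam k L (ρ-1) m)
    = SB k (fun m => iter2 k L t m * Lam k L ρ m)
      - DD k L t (-ρ) - (1/2)*DD k L t (1-ρ) - (1/2)*DD k L t (2*ρ) - DD k L t (2*ρ+1)
      + ∑ c ∈ Finset.Icc (1-ρ) (2*ρ-1), TT3 k L ρ c := by
  have hk' : (1:ℤ) ≤ (k:ℤ) := by exact_mod_cast hk
  have hpt : ∀ m : ℤ, ((1/2) * iter2 k L t (m-1) + (1/2) * iter2 k L t m
        + L m * L (m + ρ)) * Lam k L (ρ-1) m
      = (1/2) * (iter2 k L t (m-1) * Lam k L (ρ-1) m)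
        + ((1/2) * (iter2 k L t m * Lam k L (ρ-1) m)
        + (L m * L (m + ρ) * Lam k L (ρ-1) m)) := by
    intro m; ring
  rw [SB_congr k _ _ hpt]
  simp only [SB_add, SB_cmul]
  -- shift the first term
  have e1 : SB k (fun m => iter2 k L t (m-1) * Lam k L (ρ-1) m)
      = SB k (fun m => iter2 k L t m * Lam k L (ρ-1) (m+1)) := by
    have hs := SB_shift k (fun x => iter2 k L t x * Lam k L (ρ-1) (x+1))
      (fun m hm => supp2 k L hsupp t ht m (left_ne_zero_of_mul hm)) (-1)
      (by omega) (by omega)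
    rw [← hs]
    exact SB_congr k _ _ (fun m =>
      show _ = iter2 (k:ℤ) L t (m + -1) * Lam k L (ρ-1) (m + -1 + 1) by
        rw [show m + -1 = m - 1 by ring, show m - 1 + 1 = m by ring])
  -- combine the two averaged terms using Lam_step
  have e2 : (1/2) * SB k (fun m => iter2 k L t m * Lam k L (ρ-1) (m+1))
        + (1/2) * SB k (fun m => iter2 k L t m * Lam k L (ρ-1) m)
      = SB k (fun m => iter2 k L t m * Lam k L ρ m)
        - DD k L t (-ρ) - (1/2)*DD k L t (1-ρ) - (1/2)*DD k L t (2*ρ)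
        - DD k L t (2*ρ+1) := by
    have hpt2 : ∀ m : ℤ, (1/2) * (iter2 k L t m * Lam k L (ρ-1) (m+1))
          + (1/2) * (iter2 k L t m * Lam k L (ρ-1) m)
        = iter2 k L t m * Lam k L ρ m - (iter2 k L t m * L (m + -ρ))
          - (1/2) * (iter2 k L t m * L (m + (1-ρ)))
          - (1/2) * (iter2 k L t m * L (m + 2*ρ))
          - (iter2 k L t m * L (m + (2*ρ+1))) := by
      intro m
      have hls := Lam_step k L ρ m hρ1
      have h1 : iter2 k L t m * ((1/2) * (Lam k L (ρ-1) (m+1) + Lam k L (ρ-1) m))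
          = iter2 k L t m * (Lam k L ρ m - L (m-ρ) - (1/2)*L (m+1-ρ)
            - (1/2)*L (m+2*ρ) - L (m+2*ρ+1)) := by rw [hls]
      rw [show m + -ρ = m - ρ by ring, show m + (1-ρ) = m+1-ρ by ring,
        show m + (2*ρ+1) = m+2*ρ+1 by ring]
      nlinarith [h1]
    have hb : SB k (fun m => (1/2) * (iter2 k L t m * Lam k L (ρ-1) (m+1))
          + (1/2) * (iter2 k L t m * Lam k L (ρ-1) m))
        = SB k (fun m => iter2 k L t m * Lam k L ρ m - (iter2 k L t m * L (m + -ρ))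
          - (1/2) * (iter2 k L t m * L (m + (1-ρ)))
          - (1/2) * (iter2 k L t m * L (m + 2*ρ))
          - (iter2 k L t m * L (m + (2*ρ+1)))) := SB_congr k _ _ hpt2
    simp only [SB_add, SB_sub, SB_cmul] at hb
    have d1 : SB k (fun m => iter2 k L t m * L (m + -ρ)) = DD k L t (-ρ) := rfl
    have d2 : SB k (fun m => iter2 k L t m * L (m + (1-ρ))) = DD k L t (1-ρ) := rfl
    have d3 : SB k (fun m => iter2 k L t m * L (m + 2*ρ)) = DD k L t (2*ρ) := rfl
    have d4 : SB k (fun m => iter2 k L t m * L (m + (2*ρ+1))) = DD k L t (2*ρ+1) := rfl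
    rw [d1, d2, d3, d4] at hb
    linarith [hb]
  -- the source term against the window
  have e3 : SB k (fun m => L m * L (m + ρ) * Lam k L (ρ-1) m)
      = ∑ c ∈ Finset.Icc (1-ρ) (2*ρ-1), TT3 k L ρ c := by
    have hIcc : Finset.Icc (-(ρ-1)) (2*(ρ-1)+1) = Finset.Icc (1-ρ) (2*ρ-1) := by
      congr 1 <;> ring
    have hpt3 : ∀ m : ℤ, L m * L (m + ρ) * Lam k L (ρ-1) m
        = ∑ c ∈ Finset.Icc (1-ρ) (2*ρ-1), L m * L (m + ρ) * L (m+c) := by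
      intro m
      rw [Lam, hIcc, Finset.mul_sum]
    rw [SB_congr k _ _ hpt3]
    simp only [SB]
    rw [Finset.sum_comm]
    exact Finset.sum_congr rfl (fun c _ => rfl)
  rw [e1, e3]
  linarith [e2]

/-- partial triangle sums -/
noncomputable def TTs (t : ℕ) : ℚ :=
  ∑ a ∈ Finset.Icc ((k:ℤ)-t) ((k:ℤ)-1), ∑ b ∈ Finset.Icc (1-a) (2*a), TT3 k L a b

omit hsupp in
lemma TTs_succ (t : ℕ) (ht : t + 1 ≤ k) :
    TTs k L (t+1) = TTs k L t
      + ∑ b ∈ Finset.Icc (1-((k:ℤ)-t-1)) (2*((k:ℤ)-t-1)), TT3 k L ((k:ℤ)-t-1) b := by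
  rw [TTs, TTs, show ((k:ℤ)-((t+1:ℕ):ℤ)) = ((k:ℤ)-t-1) by push_cast; ring,
    sum_Icc_bot _ _ _ (by omega), show ((k:ℤ)-t-1+1) = (k:ℤ)-t by ring]
  ring

include hsupp in
lemma main_inv (hk : 1 ≤ k) (t : ℕ) (ht : t + 1 ≤ k) :
    SB k (iter3 k L t)
      = TTs k L t - SB k (fun m => iter2 k L t m * Lam k L ((k:ℤ)-t-1) m) := by
  induction t with
  | zero =>
    have h1 : SB k (iter3 k L 0) = 0 := Finset.sum_eq_zero (fun m _ => by simp [iter3])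
    have h2 : SB k (fun m => iter2 k L 0 m * Lam k L ((k:ℤ)-(0:ℕ)-1) m) = 0 :=
      Finset.sum_eq_zero (fun m _ => by simp [iter2])
    have h3 : TTs k L 0 = 0 := by
      rw [TTs, show ((k:ℤ)-((0:ℕ):ℤ)) = (k:ℤ) by push_cast; ring,
        Finset.Icc_eq_empty (by omega), Finset.sum_empty]
    rw [h1, h2, h3]; ring
  | succ t ih =>
    have ht' : t + 1 ≤ k := by omega
    have hIH := ih ht'
    have hA := SB_iter3_succ k L hsupp hk t (by omega)
    have hc : ((k:ℤ)-((t+1:ℕ):ℤ)-1) = ((k:ℤ)-t-1)-1 := by push_cast; ring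
    have hW0 : SB k (fun m => iter2 k L (t+1) m * Lam k L (((k:ℤ)-t-1)-1) m)
        = SB k (fun m => ((1/2) * iter2 k L t (m-1) + (1/2) * iter2 k L t m
            + L m * L (m + ((k:ℤ)-t-1))) * Lam k L (((k:ℤ)-t-1)-1) m) :=
      SB_congr k _ _ (fun m => by rw [iter2_succ])
    have hWG := Wstep_gen k L hsupp hk t (by omega) ((k:ℤ)-t-1) (by omega) (by omega)
    have hT := TTs_succ k L t (by omega)
    have hsplit := sum_Icc_top (fun b => TT3 k L ((k:ℤ)-t-1) b)
      (1-((k:ℤ)-t-1)) (2*((k:ℤ)-t-1)) (by omega)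
    rw [hA, hIH, hT, hc, hW0, hWG, hsplit]
    ring

include hsupp in
lemma P_expand (hk : 1 ≤ k) (t : ℕ) (ht : t + 1 = k) :
    SB k (fun m => L m * iter2 k L (t+1) m)
      = (1/2) * DD k L t 1 + (1/2) * DD k L t 0 + TT3 k L 0 0 := by
  have hρ : (k:ℤ) - t - 1 = 0 := by omega
  have hpt : ∀ m : ℤ, L m * iter2 k L (t+1) m
      = (1/2) * (L m * iter2 k L t (m-1))
        + ((1/2) * (L m * iter2 k L t m) + (L m * L m * L m)) := by
    intro m
    rw [iter2_succ k L t m, hρ, show m + (0:ℤ) = m by ring]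
    ring
  rw [SB_congr k _ _ hpt]
  simp only [SB_add, SB_cmul]
  have d1 : SB k (fun m => L m * iter2 k L t (m-1)) = DD k L t 1 := by
    have e1 : SB k (fun m => L m * iter2 k L t (m-1))
        = SB k (fun m => L m * iter2 k L t (m + (-1))) :=
      SB_congr k _ _ (fun m => by rw [show m + (-1:ℤ) = m - 1 by ring])
    have e2 := N2 k L hsupp t (by omega) (-1) (by omega) (by omega)
    rw [e1, e2]
    norm_num
  have d2 : SB k (fun m => L m * iter2 k L t m) = DD k L t 0 := by
    rw [DD]
    exact SB_congr k _ _ (fun m => by rw [show m + (0:ℤ) = m by ring]; ring)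
  have d3 : SB k (fun m => L m * L m * L m) = TT3 k L 0 0 := by
    rw [TT3]
    exact SB_congr k _ _ (fun m => by rw [show m + (0:ℤ) = m by ring])
  rw [d1, d2, d3]
  ring

include hsupp in
lemma QP (hk : 2 ≤ k) :
    SB k (iter3 k L k) - SB k (fun m => L m * iter2 k L k m) = TTs k L (k-1) := by
  obtain ⟨u, rfl⟩ : ∃ u, k = u + 1 := ⟨k-1, by omega⟩
  have hk1 : 1 ≤ u + 1 := by omega
  have hρ0 : (((u+1:ℕ)):ℤ) - (u:ℤ) - 1 = 0 := by push_cast; ring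
  -- step identity at the last step
  have hA := SB_iter3_succ (u+1) L hsupp hk1 u (by omega)
  rw [hρ0] at hA
  norm_num at hA
  -- invariant at t = u
  have hB := main_inv (u+1) L hsupp hk1 u (by omega)
  rw [hρ0] at hB
  -- the window at r = 0
  have hLam0 : ∀ m : ℤ, Lam (u+1) L 0 m = L (m+0) + L (m+1) := by
    intro m
    rw [Lam, show (-(0:ℤ)) = 0 by ring, show (2*(0:ℤ)+1) = 1 by ring,
      sum_Icc_bot (fun c => L (m+c)) 0 1 (by omega), show (0:ℤ)+1 = 1 by ring,
      Finset.Icc_self, Finset.sum_singleton]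
  have hD : SB (u+1) (fun m => iter2 (u+1) L u m * Lam (u+1) L 0 m)
      = DD (u+1) L u 0 + DD (u+1) L u 1 := by
    have h1 : SB (u+1) (fun m => iter2 (u+1) L u m * Lam (u+1) L 0 m)
        = SB (u+1) (fun m => iter2 (u+1) L u m * L (m+0) + iter2 (u+1) L u m * L (m+1)) :=
      SB_congr (u+1) _ _ (fun m => by rw [hLam0]; ring)
    rw [h1, SB_add]
    rfl
  push_cast at hB hD
  rw [hD] at hB
  have hE := P_expand (u+1) L hsupp (by omega) u (by omega)
  rw [show (u+1) - 1 = u by omega]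
  push_cast at hA hE ⊢
  linarith [hA, hB, hE]

include hsupp in
lemma TT3_shift (a b : ℤ) (ha1 : -(4*(k:ℤ)) ≤ a) (ha2 : a ≤ 4*(k:ℤ))
    (hb1 : -(4*(k:ℤ)) ≤ b) (hb2 : b ≤ 4*(k:ℤ)) :
    TT3 k L a b = TT3 k L (b-a) (-a) := by
  have hs := SB_shift k (fun x => L x * L (x + (b-a)) * L (x + -a))
    (fun m hm => hsupp m (left_ne_zero_of_mul (left_ne_zero_of_mul hm))) a
    (by omega) (by omega)
  rw [TT3, TT3, ← hs]
  exact SB_congr k _ _ (fun m =>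
    show _ = L (m+a) * L (m + a + (b-a)) * L (m + a + -a) by
      rw [show m + a + (b-a) = m + b by ring, show m + a + -a = m by ring]
      ring)

include hsupp in
lemma TT3_vanish_a (a b : ℤ) (ha : (k:ℤ) ≤ |a|) : TT3 k L a b = 0 := by
  simp only [TT3, SB]
  refine Finset.sum_eq_zero (fun m _ => ?_)
  by_cases h1 : L m = 0
  · rw [h1]; ring
  · have h2 : L (m+a) = 0 := by
      by_contra h2
      rcases hsupp m h1 with ⟨a1, a2⟩
      rcases hsupp _ h2 with ⟨b1, b2⟩
      rcases le_abs.mp ha with h|h <;> omega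
    rw [h2]; ring

include hsupp in
lemma TT3_vanish_b (a b : ℤ) (hb : (k:ℤ) ≤ |b|) : TT3 k L a b = 0 := by
  simp only [TT3, SB]
  refine Finset.sum_eq_zero (fun m _ => ?_)
  by_cases h1 : L m = 0
  · rw [h1]; ring
  · have h2 : L (m+b) = 0 := by
      by_contra h2
      rcases hsupp m h1 with ⟨a1, a2⟩
      rcases hsupp _ h2 with ⟨b1, b2⟩
      rcases le_abs.mp hb with h|h <;> omega
    rw [h2]; ring

include hsupp in
lemma TT3_vanish_ab (a b : ℤ) (hab : (k:ℤ) ≤ |a - b|) : TT3 k L a b = 0 := by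
  simp only [TT3, SB]
  refine Finset.sum_eq_zero (fun m _ => ?_)
  by_cases h1 : L (m+a) = 0
  · rw [h1]; ring
  · have h2 : L (m+b) = 0 := by
      by_contra h2
      rcases hsupp _ h1 with ⟨a1, a2⟩
      rcases hsupp _ h2 with ⟨b1, b2⟩
      rcases le_abs.mp hab with h|h <;> omega
    rw [h2]; ring

/-- the big square of correlations -/
noncomputable def Fsq : Finset (ℤ×ℤ) :=
  Finset.Icc (-(3*(k:ℤ))) (3*(k:ℤ)) ×ˢ Finset.Icc (-(3*(k:ℤ))) (3*(k:ℤ))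

include hsupp in
lemma square_total : ∑ p ∈ Fsq k, TT3 k L p.1 p.2 = (SB k L)^3 := by
  rw [Fsq, Finset.sum_product]
  have hinner : ∀ a ∈ Finset.Icc (-(3*(k:ℤ))) (3*(k:ℤ)),
      ∑ b ∈ Finset.Icc (-(3*(k:ℤ))) (3*(k:ℤ)), TT3 k L a b = cc k L a * SB k L := by
    intro a _
    simp only [TT3, SB]
    rw [Finset.sum_comm]
    have h1 : ∀ m ∈ Finset.Icc (-(9*(k:ℤ))) (9*(k:ℤ)),
        ∑ b ∈ Finset.Icc (-(3*(k:ℤ))) (3*(k:ℤ)), L m * L (m+a) * L (m+b)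
          = L m * L (m+a) * SB k L := by
      intro m _
      rw [← Finset.mul_sum]
      by_cases h : L m = 0
      · rw [h]; ring
      · rcases hsupp m h with ⟨h1, h2⟩
        rw [window k L hsupp m _ _ (by omega) (by omega)]
    rw [Finset.sum_congr rfl h1, ← Finset.sum_mul]
    rfl
  rw [Finset.sum_congr rfl hinner, ← Finset.sum_mul,
    cc_square_gen k L hsupp _ _ (by omega) (by omega)]
  ring

noncomputable def G1 : Finset (ℤ×ℤ) := (Fsq k).filter
  (fun p => 1 ≤ p.1 ∧ p.1 ≤ (k:ℤ)-1 ∧ 1-p.1 ≤ p.2 ∧ p.2 ≤ 2*p.1)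
noncomputable def G2 : Finset (ℤ×ℤ) := (Fsq k).filter
  (fun p => p.2 ≤ -1 ∧ 2*p.2+1 ≤ p.1 ∧ p.1 ≤ -p.2 ∧ -p.2 ≤ (k:ℤ)-1)
noncomputable def G3 : Finset (ℤ×ℤ) := (Fsq k).filter
  (fun p => p.1+1 ≤ p.2 ∧ 2*p.1+1 ≤ p.2 ∧ p.1 ≤ 2*p.2 ∧ p.2-p.1 ≤ (k:ℤ)-1)

include hsupp in
lemma TTs_eq_G1 (hk : 2 ≤ k) : TTs k L (k-1) = ∑ p ∈ G1 k, TT3 k L p.1 p.2 := by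
  have hcast : ((k:ℤ) - ((k-1:ℕ):ℤ)) = 1 := by omega
  rw [TTs, hcast, G1, Fsq, Finset.sum_filter, Finset.sum_product]
  have houter : ∀ a ∈ Finset.Icc (-(3*(k:ℤ))) (3*(k:ℤ)),
      (∑ b ∈ Finset.Icc (-(3*(k:ℤ))) (3*(k:ℤ)),
        if 1 ≤ a ∧ a ≤ (k:ℤ)-1 ∧ 1-a ≤ b ∧ b ≤ 2*a then TT3 k L a b else 0)
      = if 1 ≤ a ∧ a ≤ (k:ℤ)-1 then ∑ b ∈ Finset.Icc (1-a) (2*a), TT3 k L a b else 0 := by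
    intro a ha
    simp only [Finset.mem_Icc] at ha
    by_cases h : 1 ≤ a ∧ a ≤ (k:ℤ)-1
    · rw [if_pos h]
      have h1 : ∀ b ∈ Finset.Icc (-(3*(k:ℤ))) (3*(k:ℤ)),
          (if 1 ≤ a ∧ a ≤ (k:ℤ)-1 ∧ 1-a ≤ b ∧ b ≤ 2*a then TT3 k L a b else 0)
          = if 1-a ≤ b ∧ b ≤ 2*a then TT3 k L a b else 0 := by
        intro b _
        by_cases hb : 1-a ≤ b ∧ b ≤ 2*a
        · rw [if_pos ⟨h.1, h.2, hb⟩, if_pos hb]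
        · rw [if_neg (fun hc => hb ⟨hc.2.2.1, hc.2.2.2⟩), if_neg hb]
      rw [Finset.sum_congr rfl h1, ← Finset.sum_filter]
      apply Finset.sum_congr _ (fun _ _ => rfl)
      ext b
      simp only [Finset.mem_filter, Finset.mem_Icc]
      omega
    · rw [if_neg h]
      refine Finset.sum_eq_zero (fun b _ => ?_)
      rw [if_neg (fun hc => h ⟨hc.1, hc.2.1⟩)]
  rw [Finset.sum_congr rfl houter, ← Finset.sum_filter]
  apply Finset.sum_congr _ (fun _ _ => rfl)
  ext a
  simp only [Finset.mem_filter, Finset.mem_Icc]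
  omega

include hsupp in
lemma G1_eq_G2 : ∑ p ∈ G1 k, TT3 k L p.1 p.2 = ∑ p ∈ G2 k, TT3 k L p.1 p.2 := by
  refine Finset.sum_nbij' (fun p => (p.2 - p.1, -p.1)) (fun q => (-q.2, q.1 - q.2))
    ?_ ?_ ?_ ?_ ?_ <;>
    intro p hp <;>
    simp only [G1, G2, Fsq, Finset.mem_filter, Finset.mem_product, Finset.mem_Icc] at hp ⊢
  · omega
  · omega
  · obtain ⟨⟨⟨_,_⟩,_⟩,_⟩ := hp; simp
  · obtain ⟨⟨⟨_,_⟩,_⟩,_⟩ := hp; simp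
  · exact TT3_shift k L hsupp p.1 p.2 (by omega) (by omega) (by omega) (by omega)

include hsupp in
lemma G1_eq_G3 : ∑ p ∈ G1 k, TT3 k L p.1 p.2 = ∑ p ∈ G3 k, TT3 k L p.1 p.2 := by
  refine Finset.sum_nbij' (fun p => (-p.2, p.1 - p.2)) (fun q => (q.2 - q.1, -q.1))
    ?_ ?_ ?_ ?_ ?_ <;>
    intro p hp <;>
    simp only [G1, G3, Fsq, Finset.mem_filter, Finset.mem_product, Finset.mem_Icc] at hp ⊢
  · omega
  · omega
  · obtain ⟨⟨⟨_,_⟩,_⟩,_⟩ := hp; simp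
  · obtain ⟨⟨⟨_,_⟩,_⟩,_⟩ := hp; simp
  · have e1 := TT3_shift k L hsupp p.1 p.2 (by omega) (by omega) (by omega) (by omega)
    have e2 := TT3_shift k L hsupp (p.2 - p.1) (-p.1) (by omega) (by omega) (by omega) (by omega)
    rw [show (-p.1 - (p.2 - p.1)) = -p.2 by ring] at e2
    rw [show (-(p.2 - p.1)) = p.1 - p.2 by ring] at e2
    rw [e1, e2]

include hsupp in
lemma orbit_decomp (hk : 2 ≤ k) :
    3 * TTs k L (k-1) = (SB k L)^3 - TT3 k L 0 0 := by
  have hk' : (1:ℤ) ≤ (k:ℤ) := by omega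
  have hmem0 : ((0,0) : ℤ×ℤ) ∈ Fsq k := by
    simp only [Fsq, Finset.mem_product, Finset.mem_Icc]; omega
  have htot : ∑ p ∈ (Fsq k).erase (0,0), TT3 k L p.1 p.2 + TT3 k L 0 0
      = (SB k L)^3 := by
    rw [← square_total k L hsupp]
    exact Finset.sum_erase_add _ _ hmem0
  have hdisj12 : Disjoint (G1 k) (G2 k) := by
    rw [Finset.disjoint_left]
    intro p h1 h2
    simp only [G1, G2, Finset.mem_filter] at h1 h2
    omega
  have hdisj13 : Disjoint (G1 k) (G3 k) := by
    rw [Finset.disjoint_left]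
    intro p h1 h2
    simp only [G1, G3, Finset.mem_filter] at h1 h2
    omega
  have hdisj23 : Disjoint (G2 k) (G3 k) := by
    rw [Finset.disjoint_left]
    intro p h1 h2
    simp only [G2, G3, Finset.mem_filter] at h1 h2
    omega
  have hcover : ∑ p ∈ (G1 k ∪ G2 k ∪ G3 k), TT3 k L p.1 p.2
      = ∑ p ∈ (Fsq k).erase (0,0), TT3 k L p.1 p.2 := by
    refine Finset.sum_subset ?_ ?_
    · intro p hp
      simp only [Finset.mem_union, G1, G2, G3, Finset.mem_filter] at hp
      simp only [Finset.mem_erase]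
      constructor
      · rcases hp with (⟨_,h⟩|⟨_,h⟩)|⟨_,h⟩ <;> intro hzero <;> rw [hzero] at h <;>
          simp at h
      · rcases hp with (⟨h,_⟩|⟨h,_⟩)|⟨h,_⟩ <;> exact h
    · intro p hp hnp
      simp only [Finset.mem_erase, Fsq, Finset.mem_product, Finset.mem_Icc] at hp
      simp only [Finset.mem_union, G1, G2, G3, Finset.mem_filter, Fsq,
        Finset.mem_product, Finset.mem_Icc, not_or] at hnp
      have hne : ¬(p.1 = 0 ∧ p.2 = 0) := by
        intro h
        exact hp.1 (Prod.ext_iff.mpr ⟨h.1, h.2⟩)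
      obtain ⟨hne', ⟨hp1, hp2⟩, hp3, hp4⟩ := hp
      rcases show (1 ≤ p.1 ∧ 1-p.1 ≤ p.2 ∧ p.2 ≤ 2*p.1)
          ∨ (p.2 ≤ -1 ∧ 2*p.2+1 ≤ p.1 ∧ p.1 ≤ -p.2)
          ∨ (p.1+1 ≤ p.2 ∧ 2*p.1+1 ≤ p.2 ∧ p.1 ≤ 2*p.2) by omega with h|h|h
      · exact TT3_vanish_a k L hsupp p.1 p.2 (le_abs.mpr (Or.inl (by omega)))
      · exact TT3_vanish_b k L hsupp p.1 p.2 (le_abs.mpr (Or.inr (by omega)))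
      · exact TT3_vanish_ab k L hsupp p.1 p.2 (le_abs.mpr (Or.inr (by omega)))
  rw [TTs_eq_G1 k L hsupp hk]
  have hsum : ∑ p ∈ (G1 k ∪ G2 k ∪ G3 k), TT3 k L p.1 p.2
      = 3 * ∑ p ∈ G1 k, TT3 k L p.1 p.2 := by
    rw [Finset.sum_union (Finset.disjoint_union_left.mpr ⟨hdisj13, hdisj23⟩),
      Finset.sum_union hdisj12, ← G1_eq_G2 k L hsupp, ← G1_eq_G3 k L hsupp]
    ring
  linarith [htot, hcover, hsum]

omit hsupp in
lemma range_Icc (f : ℤ → ℚ) :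
    ∑ i ∈ Finset.range k, f (i:ℤ) = ∑ m ∈ Finset.Icc (0:ℤ) ((k:ℤ)-1), f m := by
  refine Finset.sum_nbij' (fun n => (n:ℤ)) (fun m => m.toNat) ?_ ?_ ?_ ?_ ?_
  · intro a ha
    simp only [Finset.mem_range] at ha
    simp only [Finset.mem_Icc]
    omega
  · intro m hm
    simp only [Finset.mem_Icc] at hm
    simp only [Finset.mem_range]
    omega
  · intro a _
    show (((a:ℕ):ℤ)).toNat = a
    omega
  · intro m hm
    simp only [Finset.mem_Icc] at hm
    show ((m.toNat : ℕ) : ℤ) = m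
    omega
  · intro a _
    rfl

omit hsupp in
lemma esym2 (f : ℕ → ℚ) (s : ℕ) :
    2 * (∑ i ∈ Finset.range s, ∑ j ∈ Finset.range i, f j * f i)
      = (∑ i ∈ Finset.range s, f i)^2 - ∑ i ∈ Finset.range s, f i * f i := by
  induction s with
  | zero => simp
  | succ s ih =>
    rw [Finset.sum_range_succ, Finset.sum_range_succ (f := f),
      Finset.sum_range_succ (f := fun i => f i * f i), ← Finset.sum_mul]
    linear_combination ih

omit hsupp in
lemma esym3 (f : ℕ → ℚ) (s : ℕ) :
    6 * (∑ i ∈ Finset.range s, ∑ j ∈ Finset.range i, ∑ l ∈ Finset.range j,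
          f l * f j * f i)
      = (∑ i ∈ Finset.range s, f i)^3
        - 3 * (∑ i ∈ Finset.range s, f i) * (∑ i ∈ Finset.range s, f i * f i)
        + 2 * ∑ i ∈ Finset.range s, f i * f i * f i := by
  induction s with
  | zero => simp
  | succ s ih =>
    rw [Finset.sum_range_succ, Finset.sum_range_succ (f := f),
      Finset.sum_range_succ (f := fun i => f i * f i),
      Finset.sum_range_succ (f := fun i => f i * f i * f i)]
    have hnew : ∑ j ∈ Finset.range s, ∑ l ∈ Finset.range j, f l * f j * f s
        = (∑ j ∈ Finset.range s, ∑ l ∈ Finset.range j, f l * f j) * f s := by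
      rw [Finset.sum_mul]
      exact Finset.sum_congr rfl (fun j _ => by rw [Finset.sum_mul])
    rw [hnew]
    linear_combination ih + 3 * f s * esym2 f s

omit hsupp in
lemma coeff_cubic (x y z : ℚ) :
    (PowerSeries.coeff (R := ℚ) 0 (1 + PowerSeries.C (R := ℚ) x * PowerSeries.X
      + PowerSeries.C (R := ℚ) y * PowerSeries.X ^ 2
      + PowerSeries.C (R := ℚ) z * PowerSeries.X ^ 3) = 1)
    ∧ (PowerSeries.coeff (R := ℚ) 1 (1 + PowerSeries.C (R := ℚ) x * PowerSeries.X
      + PowerSeries.C (R := ℚ) y * PowerSeries.X ^ 2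
      + PowerSeries.C (R := ℚ) z * PowerSeries.X ^ 3) = x)
    ∧ (PowerSeries.coeff (R := ℚ) 2 (1 + PowerSeries.C (R := ℚ) x * PowerSeries.X
      + PowerSeries.C (R := ℚ) y * PowerSeries.X ^ 2
      + PowerSeries.C (R := ℚ) z * PowerSeries.X ^ 3) = y)
    ∧ (PowerSeries.coeff (R := ℚ) 3 (1 + PowerSeries.C (R := ℚ) x * PowerSeries.X
      + PowerSeries.C (R := ℚ) y * PowerSeries.X ^ 2
      + PowerSeries.C (R := ℚ) z * PowerSeries.X ^ 3) = z) := by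
  refine ⟨?_, ?_, ?_, ?_⟩ <;>
    simp [PowerSeries.coeff_one, PowerSeries.coeff_X, PowerSeries.coeff_X_pow,
      PowerSeries.coeff_C_mul]

omit hsupp in
lemma prod_coeffs (a b c : ℕ → ℚ) (s : ℕ) :
    (PowerSeries.coeff (R := ℚ) 0 (∏ i ∈ Finset.range s,
      (1 + PowerSeries.C (R := ℚ) (a i) * PowerSeries.X
        + PowerSeries.C (R := ℚ) (b i) * PowerSeries.X ^ 2
        + PowerSeries.C (R := ℚ) (c i) * PowerSeries.X ^ 3)) = 1)
    ∧ (PowerSeries.coeff (R := ℚ) 1 (∏ i ∈ Finset.range s,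
      (1 + PowerSeries.C (R := ℚ) (a i) * PowerSeries.X
        + PowerSeries.C (R := ℚ) (b i) * PowerSeries.X ^ 2
        + PowerSeries.C (R := ℚ) (c i) * PowerSeries.X ^ 3)) = ∑ i ∈ Finset.range s, a i)
    ∧ (PowerSeries.coeff (R := ℚ) 2 (∏ i ∈ Finset.range s,
      (1 + PowerSeries.C (R := ℚ) (a i) * PowerSeries.X
        + PowerSeries.C (R := ℚ) (b i) * PowerSeries.X ^ 2
        + PowerSeries.C (R := ℚ) (c i) * PowerSeries.X ^ 3))
      = (∑ i ∈ Finset.range s, b i)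
        + ∑ i ∈ Finset.range s, ∑ j ∈ Finset.range i, a j * a i)
    ∧ (PowerSeries.coeff (R := ℚ) 3 (∏ i ∈ Finset.range s,
      (1 + PowerSeries.C (R := ℚ) (a i) * PowerSeries.X
        + PowerSeries.C (R := ℚ) (b i) * PowerSeries.X ^ 2
        + PowerSeries.C (R := ℚ) (c i) * PowerSeries.X ^ 3))
      = (∑ i ∈ Finset.range s, c i)
        + (∑ i ∈ Finset.range s, a i) * (∑ i ∈ Finset.range s, b i)
        - (∑ i ∈ Finset.range s, a i * b i)
        + ∑ i ∈ Finset.range s, ∑ j ∈ Finset.range i, ∑ l ∈ Finset.range j,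
            a l * a j * a i) := by
  induction s with
  | zero => simp
  | succ s ih =>
    obtain ⟨h0, h1, h2, h3⟩ := ih
    obtain ⟨f0, f1, f2, f3⟩ := coeff_cubic (a s) (b s) (c s)
    have hmul : ∀ n : ℕ, PowerSeries.coeff (R := ℚ) n ((∏ i ∈ Finset.range s,
        (1 + PowerSeries.C (R := ℚ) (a i) * PowerSeries.X
          + PowerSeries.C (R := ℚ) (b i) * PowerSeries.X ^ 2
          + PowerSeries.C (R := ℚ) (c i) * PowerSeries.X ^ 3))
        * (1 + PowerSeries.C (R := ℚ) (a s) * PowerSeries.X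
          + PowerSeries.C (R := ℚ) (b s) * PowerSeries.X ^ 2
          + PowerSeries.C (R := ℚ) (c s) * PowerSeries.X ^ 3))
        = ∑ i ∈ Finset.range (n+1), PowerSeries.coeff (R := ℚ) i (∏ i ∈ Finset.range s,
        (1 + PowerSeries.C (R := ℚ) (a i) * PowerSeries.X
          + PowerSeries.C (R := ℚ) (b i) * PowerSeries.X ^ 2
          + PowerSeries.C (R := ℚ) (c i) * PowerSeries.X ^ 3))
          * PowerSeries.coeff (R := ℚ) (n - i)
            (1 + PowerSeries.C (R := ℚ) (a s) * PowerSeries.X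
          + PowerSeries.C (R := ℚ) (b s) * PowerSeries.X ^ 2
          + PowerSeries.C (R := ℚ) (c s) * PowerSeries.X ^ 3) := by
      intro n
      rw [PowerSeries.coeff_mul, Finset.Nat.sum_antidiagonal_eq_sum_range_succ_mk]
    have hnew2 : ∑ j ∈ Finset.range s, a j * a s
        = (∑ j ∈ Finset.range s, a j) * a s := by
      rw [Finset.sum_mul]
    have hnew2b : ∑ j ∈ Finset.range s, a j * b s
        = (∑ j ∈ Finset.range s, a j) * b s := by
      rw [Finset.sum_mul]
    have hnew2c : ∑ j ∈ Finset.range s, b j * a s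
        = (∑ j ∈ Finset.range s, b j) * a s := by
      rw [Finset.sum_mul]
    have hnew3 : ∑ j ∈ Finset.range s, ∑ l ∈ Finset.range j, a l * a j * a s
        = (∑ j ∈ Finset.range s, ∑ l ∈ Finset.range j, a l * a j) * a s := by
      rw [Finset.sum_mul]
      exact Finset.sum_congr rfl (fun j _ => by rw [Finset.sum_mul])
    refine ⟨?_, ?_, ?_, ?_⟩ <;>
      rw [Finset.prod_range_succ, hmul] <;>
      simp only [Finset.sum_range_succ, Finset.sum_range_zero] <;>
      norm_num [h0, h1, h2, h3, f0, f1, f2, f3, hnew2, hnew2b, hnew2c, hnew3] <;>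
      ring

end VGF


/-- Property (\ref{prop1}) of the paper, up to order `q³`: the product over
`i = 0, …, k−1` of the virtual generating functions
`L̃^{k,k}_i(q) = 1 + L̃^{k,k,1}_i q + L̃^{k,k,2}_i q² + L̃^{k,k,3}_i q³ + ⋯` of the
Calabi–Yau level `N = k` of the downward Fano iteration agrees with
`(1 − k^k q)^{−1} = 1 + k^k q + k^{2k} q² + k^{3k} q³ + ⋯` modulo `q⁴` in `ℚ[[q]]`. -/
theorem virtual_generating_function_product (k : ℕ) (hk : 2 ≤ k) (L : ℤ → ℚ)
    (hsupp : ∀ m : ℤ, L m ≠ 0 → 0 ≤ m ∧ m ≤ (k : ℤ) - 1)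
    (hsym : ∀ m : ℤ, 0 ≤ m → m ≤ (k : ℤ) - 1 → L m = L ((k : ℤ) - 1 - m))
    (hsum : ∑ m ∈ Finset.Icc (0 : ℤ) ((k : ℤ) - 1), L m = (k : ℚ) ^ k) :
    ∀ n : ℕ, n < 4 →
      PowerSeries.coeff (R := ℚ) n
        (∏ i ∈ Finset.range k,
          (1 + PowerSeries.C (R := ℚ) (L (i : ℤ)) * PowerSeries.X
            + PowerSeries.C (R := ℚ) (LN2 k L k (i : ℤ)) * PowerSeries.X ^ 2
            + PowerSeries.C (R := ℚ) (LN3 k L k (i : ℤ)) * PowerSeries.X ^ 3))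
      = PowerSeries.coeff (R := ℚ) n
          (1 + PowerSeries.C (R := ℚ) ((k : ℚ) ^ k) * PowerSeries.X
            + PowerSeries.C (R := ℚ) ((k : ℚ) ^ (2 * k)) * PowerSeries.X ^ 2
            + PowerSeries.C (R := ℚ) ((k : ℚ) ^ (3 * k)) * PowerSeries.X ^ 3) := by
  have hk1 : 1 ≤ k := by omega
  obtain ⟨H0, H1, H2, H3⟩ := VGF.prod_coeffs (fun i : ℕ => L (i:ℤ))
    (fun i : ℕ => LN2 k L k (i:ℤ)) (fun i : ℕ => LN3 k L k (i:ℤ)) k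
  obtain ⟨R0, R1, R2, R3⟩ := VGF.coeff_cubic ((k:ℚ)^k) ((k:ℚ)^(2*k)) ((k:ℚ)^(3*k))
  have hton : ((2*(k:ℤ) - (k:ℤ)).toNat) = k := by omega
  have hb : ∀ m : ℤ, LN2 k L k m = iter2 k L k m := fun m => by rw [LN2, hton]
  have hc : ∀ m : ℤ, LN3 k L k m = iter3 k L k m := fun m => by rw [LN3, hton]
  have hsL : ∑ i ∈ Finset.range k, L (i:ℤ) = (k:ℚ)^k := by
    rw [VGF.range_Icc k L]; exact hsum
  have hsbL : VGF.SB k L = (k:ℚ)^k := by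
    rw [VGF.SB_eq_Icc k L hsupp]; exact hsum
  have hcc0 : VGF.cc k L 0 = ∑ i ∈ Finset.range k, L (i:ℤ) * L (i:ℤ) := by
    have e : VGF.cc k L 0 = VGF.SB k (fun m => L m * L m) :=
      VGF.SB_congr k _ _ (fun m => by rw [add_zero])
    rw [e, VGF.SB_eq_Icc k _ (fun m hm => hsupp m (left_ne_zero_of_mul hm)),
      ← VGF.range_Icc k (fun m => L m * L m)]
  have hp3 : VGF.TT3 k L 0 0 = ∑ i ∈ Finset.range k, L (i:ℤ) * L (i:ℤ) * L (i:ℤ) := by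
    have e : VGF.TT3 k L 0 0 = VGF.SB k (fun m => L m * L m * L m) :=
      VGF.SB_congr k _ _ (fun m => by simp only [add_zero])
    rw [e, VGF.SB_eq_Icc k _
        (fun m hm => hsupp m (left_ne_zero_of_mul (left_ne_zero_of_mul hm))),
      ← VGF.range_Icc k (fun m => L m * L m * L m)]
  have hB : ∑ i ∈ Finset.range k, LN2 k L k (i:ℤ)
      = (((k:ℚ)^k)^2 + ∑ i ∈ Finset.range k, L (i:ℤ) * L (i:ℤ))/2 := by
    have e0 : ∑ i ∈ Finset.range k, LN2 k L k (i:ℤ)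
        = ∑ i ∈ Finset.range k, iter2 k L k (i:ℤ) :=
      Finset.sum_congr rfl (fun i _ => hb i)
    have e1 : ∑ i ∈ Finset.range k, iter2 k L k (i:ℤ) = VGF.SB k (iter2 k L k) := by
      rw [VGF.range_Icc k (iter2 k L k),
        VGF.SB_eq_Icc k _ (VGF.supp2 k L hsupp k le_rfl)]
    have e2 := VGF.SB_iter2_eq k L hsupp hk1 k le_rfl
    rw [sub_self] at e2
    have e4 := VGF.cc_half k L hsupp hk1
    rw [hsbL, hcc0] at e4
    rw [e0, e1, e2, e4]
  have hQsum : ∑ i ∈ Finset.range k, LN3 k L k (i:ℤ) = VGF.SB k (iter3 k L k) := by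
    have e0 : ∑ i ∈ Finset.range k, LN3 k L k (i:ℤ)
        = ∑ i ∈ Finset.range k, iter3 k L k (i:ℤ) :=
      Finset.sum_congr rfl (fun i _ => hc i)
    rw [e0, VGF.range_Icc k (iter3 k L k),
      VGF.SB_eq_Icc k _ (VGF.supp3 k L hsupp k le_rfl)]
  have hPsum : ∑ i ∈ Finset.range k, L (i:ℤ) * LN2 k L k (i:ℤ)
      = VGF.SB k (fun m => L m * iter2 k L k m) := by
    have e0 : ∑ i ∈ Finset.range k, L (i:ℤ) * LN2 k L k (i:ℤ)
        = ∑ i ∈ Finset.range k, L (i:ℤ) * iter2 k L k (i:ℤ) :=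
      Finset.sum_congr rfl (fun i _ => by rw [hb (i:ℤ)])
    rw [e0, VGF.range_Icc k (fun m => L m * iter2 k L k m),
      VGF.SB_eq_Icc k _ (fun m hm => hsupp m (left_ne_zero_of_mul hm))]
  have hQP := VGF.QP k L hsupp hk
  have horb := VGF.orbit_decomp k L hsupp hk
  rw [hsbL, hp3] at horb
  have hes2 := VGF.esym2 (fun i : ℕ => L (i:ℤ)) k
  have hes3 := VGF.esym3 (fun i : ℕ => L (i:ℤ)) k
  rw [hsL] at hes2 hes3
  have hpow2 : (k:ℚ)^(2*k) = ((k:ℚ)^k)^2 := by rw [show 2*k = k*2 by ring, pow_mul]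
  have hpow3 : (k:ℚ)^(3*k) = ((k:ℚ)^k)^3 := by rw [show 3*k = k*3 by ring, pow_mul]
  intro n hn
  interval_cases n
  · rw [H0, R0]
  · rw [H1, R1]; exact hsL
  · rw [H2, R2, hB]
    linarith [hes2, hpow2]
  · rw [H3, R3, hQsum, hPsum, hsL, hB]
    linear_combination hQP + (1/3)*horb + (1/6)*hes3 - hpow3
end

section
/- Let k ≥ 2 and let L : ℤ → ℚ satisfy L_m = 0 unless 0 ≤ m ≤ k−1 and L_m = L_{k−1−m} for all m ∈ ℤ with 0 ≤ m ≤ k−1. Define the families L^{N,2}, L^{N,3} for all N ≥ k by the downward iteration of the Fano recursion. Then the virtual structural constants at the Calabi–Yau level N = k are symmetric: L^{k,2}_i = L^{k,2}_{k−1−i} and L^{k,3}_i = L^{k,3}_{k−1−i} for all i ∈ ℤ. -/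
/-!
Reflection `m ↦ c - m` commutes with both recursions up to a shift of the centre: if `L` is
symmetric about `(k-1)/2`, then after `t` downward steps `L^{·,2}` is symmetric about `(t-1)/2`
and `L^{·,3}` about `(2t-k-1)/2`, because the reflection permutes the terms of each recursion
among themselves. At the Calabi–Yau level `t = k` both centres are `(k-1)/2`.
-/

theorem apply_eq_of_add_eq_of_support {α : Type*} [Zero α] {c : ℤ} (f : ℤ → α)
    (hsupp : ∀ m, f m ≠ 0 → 0 ≤ m ∧ m ≤ c)
    (hsym : ∀ m, 0 ≤ m → m ≤ c → f m = f (c - m)) :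
    ∀ a b, a + b = c → f a = f b := by
  intro a b hab
  obtain rfl : b = c - a := by omega
  by_cases ha : 0 ≤ a ∧ a ≤ c
  · exact hsym a ha.1 ha.2
  · have hfa : f a = 0 := by_contra fun h => ha (hsupp a h)
    have hfb : f (c - a) = 0 := by_contra fun h => ha (by have := hsupp _ h; omega)
    rw [hfa, hfb]

section Reflection

variable {k : ℤ} {L : ℤ → ℚ} (hL : ∀ a b, a + b = k - 1 → L a = L b)
include hL

theorem iter2_eq_of_add_eq (t : ℕ) :
    ∀ a b, a + b = (t : ℤ) - 1 → iter2 k L t a = iter2 k L t b := by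
  induction t with
  | zero => intro a b _; rfl
  | succ t ih =>
    intro a b hab
    rw [iter2, iter2]
    set s := 2 * k - ((t : ℤ) + 1) - k
    push_cast at hab
    rw [ih (a - 1) b (by omega), ih a (b - 1) (by omega), hL a (b + s) (by omega),
      hL (a + s) b (by omega)]
    ring

theorem iter3_eq_of_add_eq (t : ℕ) :
    ∀ a b, a + b = 2 * (t : ℤ) - k - 1 → iter3 k L t a = iter3 k L t b := by
  induction t with
  | zero => intro a b _; rfl
  | succ t ih =>
    intro a b hab
    rw [iter3, iter3]
    set s := 2 * k - ((t : ℤ) + 1) - k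
    push_cast at hab
    have h2 := iter2_eq_of_add_eq hL t
    rw [ih (a - 2) b (by omega), ih (a - 1) (b - 1) (by omega), ih a (b - 2) (by omega),
      h2 (a - 1) (b + s) (by omega), h2 a (b - 1 + s) (by omega),
      h2 (a - 1 + s) b (by omega), h2 (a + s) (b - 1) (by omega),
      hL (a + 2 * s) b (by omega), hL (a + 1 + 2 * s) (b - 1) (by omega),
      hL (a - 1) (b + 1 + 2 * s) (by omega), hL a (b + 2 * s) (by omega),
      hL (a + s) (b + s) (by omega)]
    ring

end Reflection

theorem virtual_constants_symmetric_general (k : ℕ) (L : ℤ → ℚ)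
    (hsupp : ∀ m : ℤ, L m ≠ 0 → 0 ≤ m ∧ m ≤ (k : ℤ) - 1)
    (hsym : ∀ m : ℤ, 0 ≤ m → m ≤ (k : ℤ) - 1 → L m = L ((k : ℤ) - 1 - m)) :
    ∀ i : ℤ, LN2 k L k i = LN2 k L k ((k : ℤ) - 1 - i)
      ∧ LN3 k L k i = LN3 k L k ((k : ℤ) - 1 - i) := by
  have hL := apply_eq_of_add_eq_of_support L hsupp hsym
  have hsteps : (2 * (k : ℤ) - k).toNat = k := by omega
  intro i
  simp only [LN2, LN3, hsteps]
  exact ⟨iter2_eq_of_add_eq hL k i _ (by ring), iter3_eq_of_add_eq hL k i _ (by ring)⟩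

/-- Remark (i) of the paper: if the line constants are supported in `0 ≤ m ≤ k−1` and
satisfy the Schubert symmetry `L_m = L_{k−1−m}`, then the virtual structural constants
at the Calabi–Yau level `N = k` of the downward Fano iteration are symmetric:
`L̃^{k,k,d}_i = L̃^{k,k,d}_{k−1−i}` for `d = 2, 3` and every `i ∈ ℤ`. -/
theorem virtual_constants_symmetric (k : ℕ) (hk : 2 ≤ k) (L : ℤ → ℚ)
    (hsupp : ∀ m : ℤ, L m ≠ 0 → 0 ≤ m ∧ m ≤ (k : ℤ) - 1)
    (hsym : ∀ m : ℤ, 0 ≤ m → m ≤ (k : ℤ) - 1 → L m = L ((k : ℤ) - 1 - m)) :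
    ∀ i : ℤ, LN2 k L k i = LN2 k L k ((k : ℤ) - 1 - i)
      ∧ LN3 k L k i = LN3 k L k ((k : ℤ) - 1 - i) :=
  virtual_constants_symmetric_general k L hsupp hsym
end
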